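/- arXiv:2502.03507 — 7 statements merged into one kernel-verified Lean document; each statement's English description precedes it below -/
import Mathlib

section
/- For any positive even integer n, the number of permutations in the symmetric group S_n all of whose cycles have odd length equals ((n-1)!!)^2, where (n-1)!! = (n-1)(n-3)(n-5)··· is the double factorial. -/
open Equiv Equiv.Perm Finset List

set_option linter.unusedSectionVars false

namespace OddAux

variable {α : Type*} [DecidableEq α] [Fintype α]

/-- all cycle lengths odd -/
def AllOdd (g : Perm α) : Prop := ∀ l ∈ g.cycleType, Odd l

lemma allOdd_of_disjoint {f g : Perm α} (h : Equiv.Perm.Disjoint f g) :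
    AllOdd (f * g) ↔ AllOdd f ∧ AllOdd g := by
  unfold AllOdd
  rw [h.cycleType_mul]
  simp [or_imp, forall_and]

lemma not_mem_toList {g : Perm α} {x y : α} (hgx : g x = x) : x ∉ g.toList y := by
  intro hx
  rw [Equiv.Perm.mem_toList_iff] at hx
  have := hx.1.mem_support_iff.mp hx.2
  rw [Equiv.Perm.mem_support] at this
  exact this hgx

lemma toFinset_toList_eq (g : Perm α) (y : α) :
    (g.toList y).toFinset = (g.cycleOf y).support := by
  ext a
  rw [List.mem_toFinset, Equiv.Perm.mem_toList_iff, Equiv.Perm.mem_support_cycleOf_iff,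
    Equiv.Perm.mem_support]

lemma swap_mul_cycleOf_eq_formPerm {g : Perm α} {x y : α} (hy : y ∈ g.support) :
    swap x y * g.cycleOf y = List.formPerm (x :: g.toList y) := by
  have h2 : 2 ≤ (g.toList y).length :=
    Equiv.Perm.two_le_length_toList_iff_mem_support.mpr hy
  obtain ⟨z, l, hl⟩ : ∃ z l, g.toList y = z :: l := by
    cases h : g.toList y with
    | nil => rw [h] at h2; simp at h2
    | cons z l => exact ⟨z, l, rfl⟩
  have hz : z = y := by
    have h0 := Equiv.Perm.toList_getElem_zero (p := g) (x := y) hy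
    rw [List.getElem_of_eq hl] at h0
    simpa using h0
  rw [← Equiv.Perm.formPerm_toList g y, hl, hz, List.formPerm_cons_cons]


lemma isCycle_swap_mul_cycleOf {g : Perm α} {x y : α} (hxy : x ≠ y) (hgx : g x = x) :
    (swap x y * g.cycleOf y).IsCycle ∧
      (swap x y * g.cycleOf y).support = insert x (insert y (g.cycleOf y).support) := by
  by_cases hy : y ∈ g.support
  · have hnd : (x :: g.toList y).Nodup := List.nodup_cons.mpr ⟨not_mem_toList hgx, g.nodup_toList y⟩
    have hlen : 2 ≤ (x :: g.toList y).length := by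
      have := Equiv.Perm.length_toList_pos_of_mem_support _ _ hy
      simp only [List.length_cons]
      omega
    rw [swap_mul_cycleOf_eq_formPerm hy]
    constructor
    · exact List.isCycle_formPerm hnd hlen
    · rw [List.support_formPerm_of_nodup _ hnd]
      · rw [List.toFinset_cons, toFinset_toList_eq]
        congr 1
        rw [eq_comm, Finset.insert_eq_self]
        exact Equiv.Perm.mem_support_cycleOf_iff.mpr ⟨Equiv.Perm.SameCycle.refl _ _, hy⟩
      · intro z hz
        rw [hz] at hlen
        simp at hlen
  · rw [Equiv.Perm.notMem_support] at hy
    rw [(Equiv.Perm.cycleOf_eq_one_iff g).mpr hy]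
    constructor
    · rw [mul_one]; exact Equiv.Perm.isCycle_swap hxy
    · rw [mul_one, Equiv.Perm.support_swap hxy, Equiv.Perm.support_one]
      simp

lemma cycleOf_fixes {g : Perm α} {x y : α} (hgx : g x = x) : g.cycleOf y x = x := by
  rw [← Equiv.Perm.notMem_support]
  intro hx
  have h := Equiv.Perm.support_cycleOf_le g y hx
  rw [Equiv.Perm.mem_support] at h
  exact h hgx

lemma rest_apply_self {g : Perm α} {y z : α} (hz : z ∈ (g.cycleOf y).support) :
    ((g.cycleOf y)⁻¹ * g) z = z := by
  have hsc : g.SameCycle y z := (Equiv.Perm.mem_support_cycleOf_iff.mp hz).1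
  have : g.cycleOf y z = g z := hsc.cycleOf_apply
  rw [Equiv.Perm.mul_apply, ← this, Equiv.Perm.inv_def, Equiv.symm_apply_apply]

lemma rest_fixes {g : Perm α} {x y : α} (hgx : g x = x) : ((g.cycleOf y)⁻¹ * g) x = x := by
  rw [Equiv.Perm.mul_apply, hgx, ← Equiv.Perm.notMem_support, Equiv.Perm.support_inv]
  intro hx
  have h := Equiv.Perm.support_cycleOf_le g y hx
  rw [Equiv.Perm.mem_support] at h
  exact h hgx

lemma disjoint_cycleOf_rest (g : Perm α) (y : α) :
    Equiv.Perm.Disjoint (g.cycleOf y) ((g.cycleOf y)⁻¹ * g) := by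
  intro z
  by_cases hz : z ∈ (g.cycleOf y).support
  · right; exact rest_apply_self hz
  · left; rwa [← Equiv.Perm.notMem_support]

lemma cycleOf_mul_rest (g : Perm α) (y : α) : g.cycleOf y * ((g.cycleOf y)⁻¹ * g) = g := by
  group

lemma cycleType_eq_cycleOf_add (g : Perm α) (y : α) :
    g.cycleType = (g.cycleOf y).cycleType + ((g.cycleOf y)⁻¹ * g).cycleType := by
  conv_lhs => rw [← cycleOf_mul_rest g y]
  exact (disjoint_cycleOf_rest g y).cycleType_mul

lemma disjoint_swap_mul_cycleOf_rest {g : Perm α} {x y : α} (hxy : x ≠ y) (hgx : g x = x) :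
    Equiv.Perm.Disjoint (swap x y * g.cycleOf y) ((g.cycleOf y)⁻¹ * g) := by
  intro z
  by_cases hz : z ∈ insert x (insert y (g.cycleOf y).support)
  · right
    simp only [Finset.mem_insert] at hz
    rcases hz with rfl | rfl | hz
    · exact rest_fixes hgx
    · by_cases hy : g z = z
      · have h1 : g.cycleOf z = 1 := (Equiv.Perm.cycleOf_eq_one_iff g).mpr hy
        rw [h1]; simp [hy]
      · exact rest_apply_self (Equiv.Perm.mem_support_cycleOf_iff.mpr
          ⟨Equiv.Perm.SameCycle.refl _ _, Equiv.Perm.mem_support.mpr hy⟩)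
    · exact rest_apply_self hz
  · left
    simp only [Finset.mem_insert, not_or] at hz
    obtain ⟨hzx, hzy, hzc⟩ := hz
    rw [Equiv.Perm.mul_apply, (Equiv.Perm.notMem_support).mp hzc,
      Equiv.swap_apply_of_ne_of_ne hzx hzy]

lemma cycleType_swap_mul {g : Perm α} {x y : α} (hxy : x ≠ y) (hgx : g x = x) :
    (swap x y * g).cycleType =
      (insert x (insert y (g.cycleOf y).support)).card ::ₘ ((g.cycleOf y)⁻¹ * g).cycleType := by
  obtain ⟨hcyc, hsupp⟩ := isCycle_swap_mul_cycleOf hxy hgx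
  have h1 : swap x y * g = (swap x y * g.cycleOf y) * ((g.cycleOf y)⁻¹ * g) := by
    rw [mul_assoc, cycleOf_mul_rest]
  rw [h1, (disjoint_swap_mul_cycleOf_rest hxy hgx).cycleType_mul, hcyc.cycleType, hsupp]
  rfl


lemma allOdd_double_splice {g : Perm α} {x y z : α} (hxy : x ≠ y) (hxz : x ≠ z) (hyz : y ≠ z)
    (hgx : g x = x) (hgy : g y = y) :
    AllOdd (swap x y * (swap y z * g)) ↔ AllOdd g := by
  obtain ⟨hd_cyc, hd_supp⟩ := isCycle_swap_mul_cycleOf (g := g) hyz hgy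
  set c := g.cycleOf z with hc
  set r := (g.cycleOf z)⁻¹ * g with hr
  set d := swap y z * c with hdd
  have hdisj : Equiv.Perm.Disjoint d r := disjoint_swap_mul_cycleOf_rest hyz hgy
  have hdecomp : swap y z * g = d * r := by rw [hdd, hr, hc, mul_assoc, cycleOf_mul_rest]
  have hcx : c x = x := cycleOf_fixes hgx
  have hxc : x ∉ c.support := Equiv.Perm.notMem_support.mpr hcx
  have hcy : c y = y := cycleOf_fixes hgy
  have hyc : y ∉ c.support := Equiv.Perm.notMem_support.mpr hcy
  have hrx : r x = x := rest_fixes hgx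
  have hdx : d x = x := by
    rw [hdd, Equiv.Perm.mul_apply, hcx, Equiv.swap_apply_of_ne_of_ne hxy hxz]
  have ht1x : (swap y z * g) x = x := by rw [hdecomp, Equiv.Perm.mul_apply, hrx, hdx]
  have hdy : d y = z := by rw [hdd, Equiv.Perm.mul_apply, hcy, Equiv.swap_apply_left]
  have hcyO : (swap y z * g).cycleOf y = d := by
    rw [hdecomp, hdisj.cycleOf_mul_distrib, hd_cyc.cycleOf_eq (by rw [hdy]; exact hyz.symm),
      (Equiv.Perm.cycleOf_eq_one_iff r).mpr (rest_fixes hgy), mul_one]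
  have hrest : d⁻¹ * (swap y z * g) = r := by
    rw [hdecomp, ← mul_assoc, inv_mul_cancel, one_mul]
  have hmain := cycleType_swap_mul hxy ht1x
  rw [hcyO, hrest, hd_supp] at hmain
  have hcard : (insert x (insert y (insert y (insert z c.support)))).card
      = (insert z c.support).card + 2 := by
    rw [Finset.insert_idem, Finset.card_insert_of_notMem (by simp [hxy, hxz, hxc]),
      Finset.card_insert_of_notMem (by simp [hyz, hyc])]
  rw [hcard] at hmain
  have hg_ct := cycleType_eq_cycleOf_add g z
  by_cases hz : g z = z
  · have hc1 : c = 1 := (Equiv.Perm.cycleOf_eq_one_iff g).mpr hz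
    have hrg : r = g := by rw [hr, ← hc, hc1, inv_one, one_mul]
    rw [hrg] at hmain
    have hk : (insert z c.support).card = 1 := by
      rw [hc1, Equiv.Perm.support_one]
      simp
    rw [hk] at hmain
    unfold AllOdd
    rw [hmain]
    simp only [Multiset.mem_cons, forall_eq_or_imp]
    refine ⟨fun h => h.2, fun h => ⟨by decide, h⟩⟩
  · have hzsupp : z ∈ c.support := Equiv.Perm.mem_support_cycleOf_iff.mpr
      ⟨Equiv.Perm.SameCycle.refl _ _, Equiv.Perm.mem_support.mpr hz⟩
    have hins : insert z c.support = c.support := Finset.insert_eq_self.mpr hzsupp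
    rw [hins] at hmain
    have hct_c : c.cycleType = {c.support.card} :=
      (Equiv.Perm.isCycle_cycleOf g hz).cycleType
    rw [hct_c] at hg_ct
    have hparity : Odd (c.support.card + 2) ↔ Odd c.support.card := by
      simp [Nat.odd_add]
    unfold AllOdd
    rw [hmain, hg_ct, Multiset.singleton_add]
    simp only [Multiset.mem_cons, forall_eq_or_imp]
    rw [hparity]

lemma not_allOdd_of_swap {τ : Perm α} {a b : α} (hab : a ≠ b) (h1 : τ a = b) (h2 : τ b = a) :
    ¬ AllOdd τ := by
  have hta : τ a ≠ a := by rw [h1]; exact hab.symm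
  have hcyc := Equiv.Perm.isCycle_cycleOf τ hta
  have hca : τ.cycleOf a a = b := by rw [Equiv.Perm.cycleOf_apply_self, h1]
  have hsc : τ.SameCycle a b := ⟨1, by simpa using h1⟩
  have hcb : τ.cycleOf a b = a := by rw [hsc.cycleOf_apply, h2]
  have hswap : τ.cycleOf a = swap a b := by
    have := hcyc.eq_swap_of_apply_apply_eq_self (x := a) (by rw [hca]; exact hab.symm)
      (by rw [hca, hcb])
    rwa [hca] at this
  intro hall
  have h2mem : 2 ∈ τ.cycleType := by
    rw [cycleType_eq_cycleOf_add τ a, hswap]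
    have : (swap a b).cycleType = {2} := by
      rw [(Equiv.Perm.isCycle_swap hab).cycleType, Equiv.Perm.support_swap hab]
      simp [Finset.card_insert_of_notMem, hab]
    rw [this]
    simp
  have := hall 2 h2mem
  exact (by decide : ¬ Odd 2) this

section Restrict
variable {β : Type*} [DecidableEq β] [Fintype β] {p : β → Prop} [DecidablePred p]
variable (f : α ≃ Subtype p)

lemma mem_iff_of_fixes {σ : Perm β} (hσ : ∀ b, ¬ p b → σ b = b) : ∀ b, p b ↔ p (σ b) := by
  intro b
  constructor
  · intro hb
    by_contra hc
    have h1 : σ (σ b) = σ b := hσ _ hc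
    have h2 : σ b = b := σ.injective h1
    rw [h2] at hc
    exact hc hb
  · intro hb
    by_contra hc
    rw [hσ b hc] at hb
    exact hc hb

/-- restrict a permutation fixing the complement of `p` to `α` via `f` -/
def restrictPerm (σ : Perm β) (hσ : ∀ b, ¬ p b → σ b = b) : Perm α :=
  f.permCongr.symm (σ.subtypePerm (fun b => (mem_iff_of_fixes hσ b).symm))

lemma restrictPerm_apply (σ : Perm β) (hσ : ∀ b, ¬ p b → σ b = b) (a : α) :
    (f (restrictPerm f σ hσ a) : β) = σ (f a) := by
  simp [restrictPerm, Equiv.permCongr_symm, Equiv.permCongr_apply,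
    Equiv.Perm.subtypePerm_apply]

lemma extendDomain_restrictPerm (σ : Perm β) (hσ : ∀ b, ¬ p b → σ b = b) :
    (restrictPerm f σ hσ).extendDomain f = σ := by
  ext b
  by_cases hb : p b
  · rw [Equiv.Perm.extendDomain_apply_subtype _ f hb]
    have h := restrictPerm_apply f σ hσ (f.symm ⟨b, hb⟩)
    rw [Equiv.apply_symm_apply] at h
    rw [h]
  · rw [Equiv.Perm.extendDomain_apply_not_subtype _ f hb, hσ b hb]

lemma restrictPerm_extendDomain (e : Perm α)
    (hσ : ∀ b, ¬ p b → (e.extendDomain f) b = b) :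
    restrictPerm f (e.extendDomain f) hσ = e := by
  ext a
  apply f.injective
  apply Subtype.ext
  rw [restrictPerm_apply]
  have h : ((f a : β)) = ↑(f a) := rfl
  rw [Equiv.Perm.extendDomain_apply_subtype _ f (f a).2]
  congr 1
  simp

lemma extendDomain_fixes (e : Perm α) {b : β} (hb : ¬ p b) : (e.extendDomain f) b = b :=
  Equiv.Perm.extendDomain_apply_not_subtype _ f hb

lemma allOdd_extendDomain (e : Perm α) : AllOdd (e.extendDomain f) ↔ AllOdd e := by
  unfold AllOdd
  rw [Equiv.Perm.cycleType_extendDomain]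

lemma restrictPerm_congr {σ σ' : Perm β} (h : ∀ b, ¬ p b → σ b = b)
    (h' : ∀ b, ¬ p b → σ' b = b) (heq : σ = σ') :
    restrictPerm f σ h = restrictPerm f σ' h' := by subst heq; rfl

end Restrict

/-- `Fin (m+1) ≃ {x : Fin (m+2) // x ≠ 0}` -/
def emb1 (m : ℕ) : Fin (m + 1) ≃ {x : Fin (m + 2) // x ≠ 0} where
  toFun i := ⟨i.succ, Fin.succ_ne_zero i⟩
  invFun x := x.1.pred x.2
  left_inv i := by simp
  right_inv x := by simp

/-- `Fin m ≃ {x : Fin (m+2) // x ≠ 0 ∧ x ≠ last}` -/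
def emb2 (m : ℕ) : Fin m ≃ {x : Fin (m + 2) // x ≠ 0 ∧ x ≠ Fin.last (m + 1)} where
  toFun i := ⟨⟨i.1 + 1, by omega⟩, by
    constructor
    · simp [Fin.ext_iff]
    · have := i.2
      simp only [Ne, Fin.ext_iff, Fin.val_last]
      omega⟩
  invFun x := ⟨x.1.1 - 1, by
    have h0 : x.1.1 ≠ 0 := fun h => x.2.1 (by simp [Fin.ext_iff, h])
    have hl : x.1.1 ≠ m + 1 := fun h => x.2.2 (by simp [Fin.ext_iff, h])
    have := x.1.2
    omega⟩
  left_inv i := by simp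
  right_inv x := by
    have h0 : x.1.1 ≠ 0 := fun h => x.2.1 (by simp [Fin.ext_iff, h])
    apply Subtype.ext
    simp only [Fin.ext_iff]
    have := x.1.2
    omega

lemma fixes_of_zero {m : ℕ} (σ : Perm (Fin (m + 2))) (h0 : σ 0 = 0) :
    ∀ b, ¬ b ≠ 0 → σ b = b := fun b hb => by rw [not_not.mp hb]; exact h0

def equivA (m : ℕ) :
    {e : Perm (Fin (m + 1)) // AllOdd e} ≃
      {σ : Perm (Fin (m + 2)) // AllOdd σ ∧ σ 0 = 0} where
  toFun e := ⟨e.1.extendDomain (emb1 m), (allOdd_extendDomain _ _).mpr e.2,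
    extendDomain_fixes _ _ (by simp)⟩
  invFun σ := ⟨restrictPerm (emb1 m) σ.1 (fixes_of_zero σ.1 σ.2.2),
    (allOdd_extendDomain (emb1 m) _).mp
      (by rw [extendDomain_restrictPerm]; exact σ.2.1)⟩
  left_inv e := Subtype.ext (restrictPerm_extendDomain (emb1 m) e.1
    (fun b hb => extendDomain_fixes _ _ hb))
  right_inv σ := Subtype.ext (extendDomain_restrictPerm (emb1 m) σ.1 (fixes_of_zero σ.1 σ.2.2))


lemma allOdd_swap_conj {σ : Perm α} (u v : α) : AllOdd (swap u v * σ * swap u v) ↔ AllOdd σ := by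
  unfold AllOdd
  rw [show swap u v * σ * swap u v = swap u v * σ * (swap u v)⁻¹ by rw [Equiv.swap_inv],
    Equiv.Perm.cycleType_conj]

lemma last_ne_zero (m : ℕ) : Fin.last (m + 1) ≠ (0 : Fin (m + 2)) := by
  simp [Fin.ext_iff]

def equivB (m : ℕ) :
    {σ : Perm (Fin (m + 2)) // AllOdd σ ∧ σ 0 ≠ 0} ≃
      {b : Fin (m + 2) // b ≠ 0} ×
        {τ : Perm (Fin (m + 2)) // AllOdd τ ∧ τ 0 = Fin.last (m + 1)} where
  toFun σ := (⟨σ.1 0, σ.2.2⟩,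
    ⟨swap (σ.1 0) (Fin.last (m + 1)) * σ.1 * swap (σ.1 0) (Fin.last (m + 1)),
      (allOdd_swap_conj _ _).mpr σ.2.1, by
        rw [Equiv.Perm.mul_apply, Equiv.Perm.mul_apply,
          Equiv.swap_apply_of_ne_of_ne (Ne.symm σ.2.2) (last_ne_zero m).symm,
          Equiv.swap_apply_left]⟩)
  invFun bτ := ⟨swap bτ.1.1 (Fin.last (m + 1)) * bτ.2.1 * swap bτ.1.1 (Fin.last (m + 1)),
    (allOdd_swap_conj _ _).mpr bτ.2.2.1, by
      rw [Equiv.Perm.mul_apply, Equiv.Perm.mul_apply,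
        Equiv.swap_apply_of_ne_of_ne (Ne.symm bτ.1.2) (last_ne_zero m).symm,
        bτ.2.2.2, Equiv.swap_apply_right]
      exact bτ.1.2⟩
  left_inv σ := by
    apply Subtype.ext
    have h0 : (swap (σ.1 0) (Fin.last (m + 1)) * σ.1 * swap (σ.1 0) (Fin.last (m + 1))) 0
        = Fin.last (m + 1) := by
      rw [Equiv.Perm.mul_apply, Equiv.Perm.mul_apply,
        Equiv.swap_apply_of_ne_of_ne (Ne.symm σ.2.2) (last_ne_zero m).symm,
        Equiv.swap_apply_left]
    simp [mul_assoc, Equiv.swap_mul_self_mul, Equiv.swap_mul_self]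
  right_inv bτ := by
    obtain ⟨⟨b, hb⟩, ⟨τ, hτ1, hτ2⟩⟩ := bτ
    have hb0 : (swap b (Fin.last (m + 1)) * τ * swap b (Fin.last (m + 1))) 0 = b := by
      rw [Equiv.Perm.mul_apply, Equiv.Perm.mul_apply,
        Equiv.swap_apply_of_ne_of_ne (Ne.symm hb) (last_ne_zero m).symm,
        hτ2, Equiv.swap_apply_right]
    refine Prod.ext ?_ ?_
    · apply Subtype.ext
      exact hb0
    · apply Subtype.ext
      simp only []
      rw [hb0]
      simp [mul_assoc, Equiv.swap_mul_self_mul, Equiv.swap_mul_self]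

-- now equivC machinery
variable {m : ℕ}

lemma ext2_fix0 (e : Perm (Fin m)) : (e.extendDomain (emb2 m)) 0 = 0 :=
  extendDomain_fixes _ _ (by simp)

lemma ext2_fixL (e : Perm (Fin m)) : (e.extendDomain (emb2 m)) (Fin.last (m + 1)) =
    Fin.last (m + 1) :=
  extendDomain_fixes _ _ (by simp)

/-- forward construction -/
def Cval (m : ℕ) (c : Fin m) (e : Perm (Fin m)) : Perm (Fin (m + 2)) :=
  swap 0 (Fin.last (m + 1)) *
    (swap (Fin.last (m + 1)) ((emb2 m c : {x : Fin (m+2) // x ≠ 0 ∧ x ≠ Fin.last (m+1)}) : Fin (m + 2)) *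
      e.extendDomain (emb2 m))

lemma Cval_allOdd (c : Fin m) (e : Perm (Fin m)) : AllOdd (Cval m c e) ↔ AllOdd e := by
  unfold Cval
  rw [allOdd_double_splice (last_ne_zero m).symm (Ne.symm (emb2 m c).2.1)
    (Ne.symm (emb2 m c).2.2) (ext2_fix0 e) (ext2_fixL e)]
  exact allOdd_extendDomain _ _

lemma Cval_zero (c : Fin m) (e : Perm (Fin m)) : Cval m c e 0 = Fin.last (m + 1) := by
  unfold Cval
  rw [Equiv.Perm.mul_apply, Equiv.Perm.mul_apply, ext2_fix0,
    Equiv.swap_apply_of_ne_of_ne (last_ne_zero m).symm (Ne.symm (emb2 m c).2.1),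
    Equiv.swap_apply_left]

lemma Cval_last (c : Fin m) (e : Perm (Fin m)) :
    Cval m c e (Fin.last (m + 1)) = ((emb2 m c) : Fin (m + 2)) := by
  unfold Cval
  rw [Equiv.Perm.mul_apply, Equiv.Perm.mul_apply, ext2_fixL, Equiv.swap_apply_left,
    Equiv.swap_apply_of_ne_of_ne (emb2 m c).2.1 (emb2 m c).2.2]

/-- backward construction -/
def Gval (m : ℕ) (τ : Perm (Fin (m + 2))) : Perm (Fin (m + 2)) :=
  swap (Fin.last (m + 1)) (τ (Fin.last (m + 1))) * (swap 0 (Fin.last (m + 1)) * τ)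

lemma Gval_eq_τ (τ : Perm (Fin (m + 2))) :
    swap 0 (Fin.last (m + 1)) * (swap (Fin.last (m + 1)) (τ (Fin.last (m + 1))) * Gval m τ)
      = τ := by
  unfold Gval
  rw [Equiv.swap_mul_self_mul, Equiv.swap_mul_self_mul]

lemma tau_last_ne_last {τ : Perm (Fin (m + 2))} (hτ2 : τ 0 = Fin.last (m + 1)) :
    τ (Fin.last (m + 1)) ≠ Fin.last (m + 1) := by
  intro h
  exact (last_ne_zero m).symm (τ.injective (hτ2.trans h.symm))

lemma tau_last_ne_zero {τ : Perm (Fin (m + 2))} (hτ1 : AllOdd τ)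
    (hτ2 : τ 0 = Fin.last (m + 1)) : τ (Fin.last (m + 1)) ≠ 0 := by
  intro h
  exact not_allOdd_of_swap (last_ne_zero m).symm hτ2 h hτ1

lemma Gval_fix0 {τ : Perm (Fin (m + 2))} (hτ1 : AllOdd τ) (hτ2 : τ 0 = Fin.last (m + 1)) :
    Gval m τ 0 = 0 := by
  unfold Gval
  rw [Equiv.Perm.mul_apply, Equiv.Perm.mul_apply, hτ2, Equiv.swap_apply_right,
    Equiv.swap_apply_of_ne_of_ne (last_ne_zero m).symm (Ne.symm (tau_last_ne_zero hτ1 hτ2))]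

lemma Gval_fixL {τ : Perm (Fin (m + 2))} (hτ1 : AllOdd τ) (hτ2 : τ 0 = Fin.last (m + 1)) :
    Gval m τ (Fin.last (m + 1)) = Fin.last (m + 1) := by
  unfold Gval
  rw [Equiv.Perm.mul_apply, Equiv.Perm.mul_apply,
    Equiv.swap_apply_of_ne_of_ne (tau_last_ne_zero hτ1 hτ2) (tau_last_ne_last hτ2),
    Equiv.swap_apply_right]

lemma Gval_fixes {τ : Perm (Fin (m + 2))} (hτ1 : AllOdd τ) (hτ2 : τ 0 = Fin.last (m + 1)) :
    ∀ b : Fin (m + 2), ¬ (b ≠ 0 ∧ b ≠ Fin.last (m + 1)) → Gval m τ b = b := by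
  intro b hb
  rw [not_and_or, not_not, not_not] at hb
  rcases hb with rfl | rfl
  · exact Gval_fix0 hτ1 hτ2
  · exact Gval_fixL hτ1 hτ2

lemma Gval_allOdd {τ : Perm (Fin (m + 2))} (hτ1 : AllOdd τ) (hτ2 : τ 0 = Fin.last (m + 1)) :
    AllOdd (Gval m τ) ↔ AllOdd τ := by
  have h := allOdd_double_splice (x := (0 : Fin (m + 2))) (y := Fin.last (m + 1))
    (z := τ (Fin.last (m + 1))) (last_ne_zero m).symm
    (Ne.symm (tau_last_ne_zero hτ1 hτ2)) (Ne.symm (tau_last_ne_last hτ2))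
    (Gval_fix0 hτ1 hτ2) (Gval_fixL hτ1 hτ2)
  rw [Gval_eq_τ τ] at h
  exact h.symm

set_option maxHeartbeats 1000000 in
def equivC (m : ℕ) :
    (Fin m × {e : Perm (Fin m) // AllOdd e}) ≃
      {τ : Perm (Fin (m + 2)) // AllOdd τ ∧ τ 0 = Fin.last (m + 1)} where
  toFun ce := ⟨Cval m ce.1 ce.2.1, (Cval_allOdd _ _).mpr ce.2.2, Cval_zero _ _⟩
  invFun τ := ⟨(emb2 m).symm ⟨τ.1 (Fin.last (m + 1)),
      tau_last_ne_zero τ.2.1 τ.2.2, tau_last_ne_last τ.2.2⟩,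
    restrictPerm (emb2 m) (Gval m τ.1) (Gval_fixes τ.2.1 τ.2.2),
    (allOdd_extendDomain (emb2 m) _).mp (by
      rw [extendDomain_restrictPerm]
      exact (Gval_allOdd τ.2.1 τ.2.2).mpr τ.2.1)⟩
  left_inv ce := by
    obtain ⟨c, e, he⟩ := ce
    have hτL := Cval_last c e
    have hGe : Gval m (Cval m c e) = e.extendDomain (emb2 m) := by
      unfold Gval
      rw [hτL]
      show _ * (swap 0 (Fin.last (m+1)) * (swap 0 (Fin.last (m+1)) * _)) = _
      rw [Equiv.swap_mul_self_mul, Equiv.swap_mul_self_mul]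
    refine Prod.ext ?_ ?_
    · show (emb2 m).symm _ = c
      rw [Equiv.symm_apply_eq]
      exact Subtype.ext (by simpa using hτL)
    · apply Subtype.ext
      exact (restrictPerm_congr (emb2 m)
        (Gval_fixes ((Cval_allOdd c e).mpr he) (Cval_zero c e))
        (fun b hb => extendDomain_fixes _ _ hb) hGe).trans
        (restrictPerm_extendDomain (emb2 m) e (fun b hb => extendDomain_fixes _ _ hb))
  right_inv τ := by
    obtain ⟨τ, hτ1, hτ2⟩ := τ
    apply Subtype.ext
    show Cval m _ _ = τ
    unfold Cval
    rw [extendDomain_restrictPerm, Equiv.apply_symm_apply]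
    exact Gval_eq_τ τ

/-- the count -/
noncomputable def N (n : ℕ) : ℕ := Nat.card {σ : Perm (Fin n) // AllOdd σ}

lemma card_split {γ : Type*} [Fintype γ] (q P : γ → Prop) [DecidablePred P] :
    Nat.card {x : γ // q x} =
      Nat.card {x : γ // q x ∧ P x} + Nat.card {x : γ // q x ∧ ¬ P x} := by
  rw [← Nat.card_congr (Equiv.sumCompl (fun y : {x : γ // q x} => P y.1)), Nat.card_sum,
    Nat.card_congr (Equiv.subtypeSubtypeEquivSubtypeInter q P),
    Nat.card_congr (Equiv.subtypeSubtypeEquivSubtypeInter q (fun x => ¬ P x))]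

lemma N_le_one (n : ℕ) (hn : n ≤ 1) : N n = 1 := by
  have hsub : Subsingleton (Perm (Fin n)) := by
    interval_cases n
    · infer_instance
    · infer_instance
  have hall : ∀ σ : Perm (Fin n), AllOdd σ := by
    intro σ
    have : σ = 1 := Subsingleton.elim _ _
    subst this
    intro l hl
    simp [Equiv.Perm.cycleType_one] at hl
  rw [N, Nat.card_congr (Equiv.subtypeUnivEquiv hall), Nat.card_eq_fintype_card,
    Fintype.card_perm]
  interval_cases n <;> simp

lemma N_rec (m : ℕ) : N (m + 2) = N (m + 1) + (m + 1) * (m * N m) := by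
  rw [N, card_split (fun σ : Perm (Fin (m+2)) => AllOdd σ) (fun σ => σ 0 = 0)]
  congr 1
  · rw [← Nat.card_congr (equivA m)]; rfl
  · rw [Nat.card_congr (equivB m), Nat.card_prod, ← Nat.card_congr (equivC m),
      Nat.card_prod, ← Nat.card_congr (emb1 m)]
    simp [N]

lemma doubleFactorial_odd (k : ℕ) :
    Nat.doubleFactorial (2 * k + 1) = (2 * k + 1) * Nat.doubleFactorial (2 * k - 1) := by
  cases k with
  | zero => rfl
  | succ k =>
    rw [show 2 * (k + 1) + 1 = (2 * k + 1) + 2 from by ring, Nat.doubleFactorial_add_two,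
      show 2 * (k + 1) - 1 = 2 * k + 1 from by omega]

lemma main_pair (k : ℕ) :
    N (2 * k) = Nat.doubleFactorial (2 * k - 1) ^ 2 ∧
      N (2 * k + 1) = Nat.doubleFactorial (2 * k + 1) * Nat.doubleFactorial (2 * k - 1) := by
  induction k with
  | zero =>
    constructor
    · rw [show 2 * 0 = 0 from rfl, N_le_one 0 (by norm_num)]; rfl
    · rw [show 2 * 0 + 1 = 1 from rfl, N_le_one 1 le_rfl]; rfl
  | succ k ih =>
    obtain ⟨he, ho⟩ := ih
    have h1 : N (2 * k + 2) = N (2 * k + 1) + (2 * k + 1) * (2 * k * N (2 * k)) := N_rec (2 * k)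
    have h2 : N (2 * k + 1 + 2) = N (2 * k + 2) + (2 * k + 2) * ((2 * k + 1) * N (2 * k + 1)) :=
      N_rec (2 * k + 1)
    have heven : N (2 * k + 2) = Nat.doubleFactorial (2 * k + 1) ^ 2 := by
      rw [h1, he, ho, doubleFactorial_odd k]
      ring
    constructor
    · rw [show 2 * (k + 1) = 2 * k + 2 from by ring, heven,
        show 2 * k + 2 - 1 = 2 * k + 1 from by omega]
    · rw [show 2 * (k + 1) + 1 = 2 * k + 1 + 2 from by ring, h2, heven, ho,
        show 2 * (k + 1) - 1 = 2 * k + 1 from by omega,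
        show 2 * k + 1 + 2 = (2 * k + 1) + 2 from rfl, Nat.doubleFactorial_add_two,
        doubleFactorial_odd k]
      ring


end OddAux

theorem oddCycles_card_even (n : ℕ) (hn : 0 < n) (hne : Even n) :
    Nat.card {σ : Equiv.Perm (Fin n) // ∀ l ∈ σ.cycleType, Odd l} =
      Nat.doubleFactorial (n - 1) ^ 2 := by
  obtain ⟨r, rfl⟩ := hne
  rw [show r + r = 2 * r from by ring]
  exact (OddAux.main_pair r).1
end

section
/- For any positive even integer n, the number of permutations in S_n all of whose cycles have even length equals ((n-1)!!)^2. -/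
open Equiv Equiv.Perm Finset

variable {α : Type*} [DecidableEq α] [Fintype α]

/-- "σ admits an alternating set": every point alternates in/out of S. -/
def altCond (σ : Equiv.Perm α) : Prop := ∃ S : Finset α, ∀ x, x ∈ S ↔ σ x ∉ S

theorem altCond.ne {σ : Equiv.Perm α} (h : altCond σ) (x : α) : σ x ≠ x := by
  obtain ⟨S, hS⟩ := h
  intro hx
  have := hS x
  rw [hx] at this
  by_cases hxS : x ∈ S <;> simp [hxS] at this

theorem cycle_alt {c : Equiv.Perm α} (hc : c.IsCycle) (he : Even c.support.card) :
    ∃ S : Finset α, S ⊆ c.support ∧ ∀ x ∈ c.support, (x ∈ S ↔ c x ∉ S) := by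
  classical
  obtain ⟨x₀, hx₀, -⟩ := id hc
  set N := c.support.card with hN
  have hx₀s : x₀ ∈ c.support := mem_support.2 hx₀
  have hNpos : 0 < N := Finset.card_pos.2 ⟨x₀, hx₀s⟩
  have hco : c.IsCycleOn ↑c.support := by
    rw [coe_support_eq_set_support]
    exact hc.isCycleOn
  have key : ∀ m n : ℕ, ((c ^ m) x₀ = (c ^ n) x₀) ↔ m ≡ n [MOD N] := fun m n =>
    hco.pow_apply_eq_pow_apply hx₀s
  refine ⟨((Finset.range N).filter Even).image (fun k => (c ^ k) x₀), ?_, ?_⟩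
  · intro x hx
    simp only [Finset.mem_image, Finset.mem_filter, Finset.mem_range] at hx
    obtain ⟨k, _, rfl⟩ := hx
    simpa using hx₀s
  · have mem_S : ∀ k, k < N →
        (((c ^ k) x₀ ∈ ((Finset.range N).filter Even).image (fun k => (c ^ k) x₀)) ↔ Even k) := by
      intro k hk
      simp only [Finset.mem_image, Finset.mem_filter, Finset.mem_range]
      constructor
      · rintro ⟨j, ⟨hj, hje⟩, hjx⟩
        have : j = k := by
          have := (key j k).1 hjx
          rwa [Nat.ModEq, Nat.mod_eq_of_lt hj, Nat.mod_eq_of_lt hk] at this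
        rwa [← this]
      · intro hk'
        exact ⟨k, ⟨hk, hk'⟩, rfl⟩
    intro x hx
    obtain ⟨i, rfl⟩ := hc.exists_pow_eq hx₀ (mem_support.1 hx)
    have hik : (c ^ i) x₀ = (c ^ (i % N)) x₀ := (key i (i % N)).2 (Nat.mod_modEq i N).symm
    set k := i % N with hkdef
    have hkN : k < N := Nat.mod_lt _ hNpos
    rw [hik, mem_S k hkN]
    have hc1 : c ((c ^ k) x₀) = (c ^ (k + 1)) x₀ := by
      rw [← Equiv.Perm.mul_apply, ← pow_succ']
    rw [hc1]
    rcases eq_or_lt_of_le (Nat.succ_le_of_lt hkN) with heq | hlt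
    · have : (c ^ (k + 1)) x₀ = (c ^ 0) x₀ := (key _ _).2 (by simp [Nat.ModEq, ← heq])
      rw [this, mem_S 0 hNpos]
      have hkodd : ¬ Even k := by
        intro hke
        have : Even (k+1) := by rw [show k + 1 = N from heq]; exact he
        simp [Nat.even_add_one, hke] at this
      simp [hkodd]
    · rw [mem_S _ hlt, Nat.even_add_one]
      tauto

theorem altCond_iff (σ : Equiv.Perm α) :
    ((∀ x, σ x ≠ x) ∧ ∀ l ∈ σ.cycleType, Even l) ↔ altCond σ := by
  constructor
  · rintro ⟨hfix, heven⟩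
    suffices h : ∀ τ : Equiv.Perm α, (∀ l ∈ τ.cycleType, Even l) →
        ∃ S ⊆ τ.support, ∀ x ∈ τ.support, (x ∈ S ↔ τ x ∉ S) by
      obtain ⟨S, _, hS⟩ := h σ heven
      exact ⟨S, fun x => hS x (mem_support.2 (hfix x))⟩
    intro τ
    induction τ using Equiv.Perm.cycle_induction_on with
    | base_one => exact fun _ => ⟨∅, by simp⟩
    | base_cycles c hc =>
      intro h
      obtain ⟨S, hsub, hS⟩ := cycle_alt hc (h _ (by rw [hc.cycleType]; simp))
      exact ⟨S, hsub, hS⟩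
    | induction_disjoint σ' τ' hd hc h1 h2 =>
      intro h
      rw [Equiv.Perm.Disjoint.cycleType_mul hd] at h
      obtain ⟨S1, hs1, h1'⟩ := h1 (fun l hl => h l (by simp [hl]))
      obtain ⟨S2, hs2, h2'⟩ := h2 (fun l hl => h l (by simp [hl]))
      have hdd := Equiv.Perm.Disjoint.disjoint_support hd
      refine ⟨S1 ∪ S2, ?_, ?_⟩
      · rw [Equiv.Perm.Disjoint.support_mul hd]
        exact Finset.union_subset_union hs1 hs2
      · intro x hx
        rw [Equiv.Perm.Disjoint.support_mul hd, Finset.mem_union] at hx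
        rcases hx with hx | hx
        · have hxτ : τ' x = x := by
            rw [← Equiv.Perm.notMem_support]
            exact Finset.disjoint_left.1 hdd hx
          have happ : (σ' * τ') x = σ' x := by simp [Equiv.Perm.mul_apply, hxτ]
          have hxS2 : x ∉ S2 := fun hc2 => Finset.disjoint_left.1 hdd hx (hs2 hc2)
          have hσxS2 : σ' x ∉ S2 := fun hc2 =>
            Finset.disjoint_left.1 hdd (Equiv.Perm.apply_mem_support.2 hx) (hs2 hc2)
          rw [happ]
          simp only [Finset.mem_union]
          have := h1' x hx
          tauto
        · have happ : (σ' * τ') x = τ' x := by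
            have : τ' x ∉ σ'.support :=
              Finset.disjoint_left.1 hdd.symm (Equiv.Perm.apply_mem_support.2 hx)
            simp [Equiv.Perm.mul_apply, Equiv.Perm.notMem_support.1 this]
          have hxS1 : x ∉ S1 := fun hc2 => Finset.disjoint_left.1 hdd.symm hx (hs1 hc2)
          have hσxS1 : τ' x ∉ S1 := fun hc2 =>
            Finset.disjoint_left.1 hdd.symm (Equiv.Perm.apply_mem_support.2 hx) (hs1 hc2)
          rw [happ]
          simp only [Finset.mem_union]
          have := h2' x hx
          tauto
  · intro h
    obtain ⟨S, hS⟩ := id h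
    refine ⟨h.ne, ?_⟩
    intro l hl
    rw [cycleType_def, Multiset.mem_map] at hl
    obtain ⟨c, hcmem, rfl⟩ := hl
    rw [← Finset.mem_def] at hcmem
    obtain ⟨hcyc, hcapp⟩ := (Equiv.Perm.mem_cycleFactorsFinset_iff).1 hcmem
    have hinv : ∀ b ∈ c.support, σ⁻¹ b = c⁻¹ b ∧ c⁻¹ b ∈ c.support := by
      intro b hb
      have hb' : c⁻¹ b ∈ c.support := by
        rwa [← Equiv.Perm.apply_mem_support, Equiv.Perm.inv_def, Equiv.apply_symm_apply]
      have : σ (c⁻¹ b) = b := by rw [← hcapp _ hb', Equiv.Perm.inv_def, Equiv.apply_symm_apply]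
      exact ⟨Equiv.Perm.inv_eq_iff_eq.2 this.symm, hb'⟩
    have hcard : (c.support ∩ S).card = (c.support \ S).card := by
      apply Finset.card_bij' (fun a _ => σ a) (fun b _ => σ⁻¹ b)
      · intro a ha
        rw [Finset.mem_inter] at ha
        rw [Finset.mem_sdiff]
        refine ⟨?_, (hS a).1 ha.2⟩
        rw [← hcapp _ ha.1]
        exact Equiv.Perm.apply_mem_support.2 ha.1
      · intro b hb
        rw [Finset.mem_sdiff] at hb
        obtain ⟨h1, h2⟩ := hinv b hb.1
        rw [Finset.mem_inter, h1]
        refine ⟨h2, ?_⟩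
        by_contra hcon
        have hσ : σ (c⁻¹ b) = b := by rw [← hcapp _ h2, Equiv.Perm.inv_def, Equiv.apply_symm_apply]
        exact hcon ((hS (c⁻¹ b)).2 (by rw [hσ]; exact hb.2))
      · intro a _; exact σ.symm_apply_apply a
      · intro b _; exact σ.apply_symm_apply b
    simp only [Function.comp_apply]
    rw [← Finset.card_inter_add_card_sdiff c.support S, hcard]
    exact ⟨_, rfl⟩


section Splice
variable (x₀ y : α)

theorem spl_apply_x₀ (σ : Equiv.Perm α) :
    (swap x₀ (σ y) * σ * swap x₀ y) x₀ = x₀ := by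
  simp [Equiv.Perm.mul_apply, Equiv.swap_apply_left]

theorem spl_apply_y (σ : Equiv.Perm α) (hy : y ≠ x₀) (hne : σ y ≠ y) (hσ0 : σ x₀ = y) :
    (swap x₀ (σ y) * σ * swap x₀ y) y = y := by
  simp only [Equiv.Perm.mul_apply, Equiv.swap_apply_right, hσ0]
  exact Equiv.swap_apply_of_ne_of_ne hy (Ne.symm hne)

theorem spl_apply_ne (σ : Equiv.Perm α) (z : α) (hz1 : z ≠ x₀) (hz2 : z ≠ y) :
    (swap x₀ (σ y) * σ * swap x₀ y) z = if σ z = x₀ then σ y else σ z := by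
  simp only [Equiv.Perm.mul_apply, Equiv.swap_apply_of_ne_of_ne hz1 hz2]
  split_ifs with h
  · rw [h, Equiv.swap_apply_left]
  · apply Equiv.swap_apply_of_ne_of_ne h
    intro h2
    exact hz2 (σ.injective h2)

theorem uns_apply_x₀ (τ' : Equiv.Perm α) (w' : α) (hy : y ≠ x₀) (hw : w' = x₀ ∨ (w' ≠ x₀ ∧ w' ≠ y))
    (hτy : τ' y = y) : (swap x₀ w' * τ' * swap x₀ y) x₀ = y := by
  simp only [Equiv.Perm.mul_apply, Equiv.swap_apply_left, hτy]
  rcases hw with h | ⟨h1, h2⟩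
  · subst h; exact Equiv.swap_apply_of_ne_of_ne hy hy
  · exact Equiv.swap_apply_of_ne_of_ne hy (fun e => h2 e.symm)

theorem uns_apply_y (τ' : Equiv.Perm α) (w' : α) (hτx : τ' x₀ = x₀) :
    (swap x₀ w' * τ' * swap x₀ y) y = w' := by
  simp [Equiv.Perm.mul_apply, Equiv.swap_apply_right, hτx]

theorem uns_apply_ne (τ' : Equiv.Perm α) (w' : α) (z : α) (hz1 : z ≠ x₀) (hz2 : z ≠ y)
    (hτz : τ' z ≠ x₀) :
    (swap x₀ w' * τ' * swap x₀ y) z = if τ' z = w' then x₀ else τ' z := by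
  simp only [Equiv.Perm.mul_apply, Equiv.swap_apply_of_ne_of_ne hz1 hz2]
  split_ifs with h
  · rw [h, Equiv.swap_apply_right]
  · exact Equiv.swap_apply_of_ne_of_ne hτz h

theorem spl_subtype (σ : Equiv.Perm α) (hσ : ∀ x, σ x ≠ x) (hσ0 : σ x₀ = y) :
    ∀ z, (z ≠ x₀ ∧ z ≠ y) ↔
      ((swap x₀ (σ y) * σ * swap x₀ y) z ≠ x₀ ∧ (swap x₀ (σ y) * σ * swap x₀ y) z ≠ y) := by
  have hy : y ≠ x₀ := by rw [← hσ0]; exact hσ x₀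
  intro z
  constructor
  · rintro ⟨h1, h2⟩
    rw [spl_apply_ne x₀ y σ z h1 h2]
    split_ifs with h
    · refine ⟨fun e => h2 ?_, hσ y⟩
      rw [← h] at e
      exact (σ.injective e).symm
    · refine ⟨h, fun e => h1 ?_⟩
      rw [← hσ0] at e
      exact σ.injective e
  · rintro ⟨h1, h2⟩
    by_contra hcon
    by_cases hz1 : z = x₀
    · exact h1 (by rw [hz1]; exact spl_apply_x₀ x₀ y σ)
    · by_cases hz2 : z = y
      · exact h2 (by rw [hz2]; exact spl_apply_y x₀ y σ hy (hσ y) hσ0)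
      · exact hcon ⟨hz1, hz2⟩

theorem fwd_alt (σ : Equiv.Perm α) (hσ : altCond σ) (hσ0 : σ x₀ = y)
    (h : ∀ z, (z ≠ x₀ ∧ z ≠ y) ↔
      ((swap x₀ (σ y) * σ * swap x₀ y) z ≠ x₀ ∧ (swap x₀ (σ y) * σ * swap x₀ y) z ≠ y)) :
    altCond ((swap x₀ (σ y) * σ * swap x₀ y).subtypePerm (p := fun z => z ≠ x₀ ∧ z ≠ y) (fun z => (h z).symm)) := by
  obtain ⟨S, hS⟩ := id hσ
  refine ⟨S.subtype _, ?_⟩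
  rintro ⟨z, hz1, hz2⟩
  rw [Finset.mem_subtype, Finset.mem_subtype]
  have : ((((swap x₀ (σ y) * σ * swap x₀ y).subtypePerm (p := fun z => z ≠ x₀ ∧ z ≠ y) (fun z => (h z).symm)) ⟨z, hz1, hz2⟩ : { x // x ≠ x₀ ∧ x ≠ y }) : α)
      = (swap x₀ (σ y) * σ * swap x₀ y) z := rfl
  rw [this, spl_apply_ne x₀ y σ z hz1 hz2]
  split_ifs with hc
  · have h1 := hS z
    have h2 := hS x₀
    have h3 := hS y
    rw [hc] at h1
    rw [hσ0] at h2
    tauto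
  · exact hS z

theorem bwd_alt (hy : y ≠ x₀) (w : Option {z : α // z ≠ x₀ ∧ z ≠ y})
    (τ : Equiv.Perm {z : α // z ≠ x₀ ∧ z ≠ y}) (hτ : altCond τ) :
    altCond (swap x₀ (w.elim x₀ (↑·)) * Equiv.Perm.ofSubtype τ * swap x₀ y) ∧
      (swap x₀ (w.elim x₀ (↑·)) * Equiv.Perm.ofSubtype τ * swap x₀ y) x₀ = y := by
  set w' : α := w.elim x₀ (↑·) with hw'
  have hw : w' = x₀ ∨ (w' ≠ x₀ ∧ w' ≠ y) := by
    rcases w with _ | z₀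
    · exact Or.inl rfl
    · exact Or.inr z₀.2
  have hτx : Equiv.Perm.ofSubtype τ x₀ = x₀ :=
    Equiv.Perm.ofSubtype_apply_of_not_mem τ (by simp)
  have hτy : Equiv.Perm.ofSubtype τ y = y :=
    Equiv.Perm.ofSubtype_apply_of_not_mem τ (by simp)
  have hx0 : (swap x₀ w' * Equiv.Perm.ofSubtype τ * swap x₀ y) x₀ = y :=
    uns_apply_x₀ x₀ y _ w' hy hw hτy
  refine ⟨?_, hx0⟩
  obtain ⟨S', hS'⟩ := id hτ
  set S'' : Finset α := S'.map (Function.Embedding.subtype _) with hS''def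
  have hmem'' : ∀ u : {z : α // z ≠ x₀ ∧ z ≠ y}, ((u : α) ∈ S'' ↔ u ∈ S') :=
    fun u => Finset.mem_map' _
  have hx₀'' : x₀ ∉ S'' := by
    intro hc
    rw [hS''def, Finset.mem_map] at hc
    obtain ⟨b, hb, hval⟩ := hc
    rw [Function.Embedding.coe_subtype] at hval
    exact b.2.1 hval
  have hy'' : y ∉ S'' := by
    intro hc
    rw [hS''def, Finset.mem_map] at hc
    obtain ⟨b, hb, hval⟩ := hc
    rw [Function.Embedding.coe_subtype] at hval
    exact b.2.2 hval
  have happz : ∀ (z : α) (hz : z ≠ x₀ ∧ z ≠ y),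
      (swap x₀ w' * Equiv.Perm.ofSubtype τ * swap x₀ y) z
        = if ((τ ⟨z, hz⟩ : α)) = w' then x₀ else (τ ⟨z, hz⟩ : α) := by
    intro z hz
    have h1 : Equiv.Perm.ofSubtype τ z = (τ ⟨z, hz⟩ : α) :=
      Equiv.Perm.ofSubtype_apply_of_mem τ hz
    rw [← h1]
    apply uns_apply_ne x₀ y _ w' z hz.1 hz.2
    rw [h1]
    exact (τ ⟨z, hz⟩).2.1
  have hyapp : (swap x₀ w' * Equiv.Perm.ofSubtype τ * swap x₀ y) y = w' :=
    uns_apply_y x₀ y _ w' hτx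
  rcases w with _ | z₀
  · -- w = none, w' = x₀
    have hw'x : w' = x₀ := by rw [hw']; rfl
    refine ⟨insert x₀ S'', fun x => ?_⟩
    by_cases hx1 : x = x₀
    · rw [hx1, hx0]
      simp [hy, hy'']
    · by_cases hx2 : x = y
      · rw [hx2, hyapp, hw'x]
        simp [hx1, hy, hy'', hx₀'']
      · rw [happz x ⟨hx1, hx2⟩, hw'x, if_neg (τ ⟨x, hx1, hx2⟩).2.1]
        have hxiff : x ∈ insert x₀ S'' ↔ x ∈ S'' := by simp [Finset.mem_insert, hx1]
        have htiff : ((τ ⟨x, hx1, hx2⟩ : α) ∈ insert x₀ S'') ↔ (τ ⟨x, hx1, hx2⟩ : α) ∈ S'' := by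
          simp [Finset.mem_insert, (τ ⟨x, hx1, hx2⟩).2.1]
        rw [hxiff, not_congr htiff]
        exact (hmem'' ⟨x, hx1, hx2⟩).trans
          ((hS' ⟨x, hx1, hx2⟩).trans (not_congr (hmem'' _)).symm)
  · -- w = some z₀
    have hw'z : w' = (z₀ : α) := by rw [hw']; rfl
    by_cases hz₀ : z₀ ∈ S'
    · refine ⟨insert x₀ S'', fun x => ?_⟩
      by_cases hx1 : x = x₀
      · rw [hx1, hx0]
        simp [hy, hy'']
      · by_cases hx2 : x = y
        · rw [hx2, hyapp, hw'z]
          have hz₀m : (↑z₀ : α) ∈ insert x₀ S'' := Finset.mem_insert_of_mem ((hmem'' z₀).2 hz₀)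
          simp [hx1, hy, hy'', hz₀m]
        · rw [happz x ⟨hx1, hx2⟩, hw'z]
          by_cases hc : (τ ⟨x, hx1, hx2⟩ : α) = (z₀ : α)
          · rw [if_pos hc]
            have ht : τ ⟨x, hx1, hx2⟩ = z₀ := Subtype.ext hc
            have hxnot : x ∉ insert x₀ S'' := by
              simp only [Finset.mem_insert, hx1, false_or]
              intro hxm
              exact ((hS' ⟨x, hx1, hx2⟩).1 ((hmem'' ⟨x, hx1, hx2⟩).1 hxm)) (ht ▸ hz₀)
            simp [hxnot]
          · rw [if_neg hc]
            have hxiff : x ∈ insert x₀ S'' ↔ x ∈ S'' := by simp [Finset.mem_insert, hx1]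
            have htiff : ((τ ⟨x, hx1, hx2⟩ : α) ∈ insert x₀ S'') ↔ (τ ⟨x, hx1, hx2⟩ : α) ∈ S'' := by
              simp [Finset.mem_insert, (τ ⟨x, hx1, hx2⟩).2.1]
            rw [hxiff, not_congr htiff]
            exact (hmem'' ⟨x, hx1, hx2⟩).trans
              ((hS' ⟨x, hx1, hx2⟩).trans (not_congr (hmem'' _)).symm)
    · refine ⟨insert y S'', fun x => ?_⟩
      have hx₀i : x₀ ∉ insert y S'' := by simp [Ne.symm hy, hx₀'']
      have hz₀i : (↑z₀ : α) ∉ insert y S'' := by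
        simp only [Finset.mem_insert, z₀.2.2, false_or]
        intro hm
        exact hz₀ ((hmem'' z₀).1 hm)
      by_cases hx1 : x = x₀
      · rw [hx1, hx0]
        simp [hx₀i]
      · by_cases hx2 : x = y
        · rw [hx2, hyapp, hw'z]
          simp [hz₀i]
        · rw [happz x ⟨hx1, hx2⟩, hw'z]
          by_cases hc : (τ ⟨x, hx1, hx2⟩ : α) = (z₀ : α)
          · rw [if_pos hc]
            have ht : τ ⟨x, hx1, hx2⟩ = z₀ := Subtype.ext hc
            have hxm : x ∈ insert y S'' := by
              apply Finset.mem_insert_of_mem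
              apply (hmem'' ⟨x, hx1, hx2⟩).2
              apply (hS' ⟨x, hx1, hx2⟩).2
              rw [ht]
              exact hz₀
            simp [hxm, hx₀i]
          · rw [if_neg hc]
            have hxiff : x ∈ insert y S'' ↔ x ∈ S'' := by simp [Finset.mem_insert, hx2]
            have htiff : ((τ ⟨x, hx1, hx2⟩ : α) ∈ insert y S'') ↔ (τ ⟨x, hx1, hx2⟩ : α) ∈ S'' := by
              simp [Finset.mem_insert, (τ ⟨x, hx1, hx2⟩).2.2]
            rw [hxiff, not_congr htiff]
            exact (hmem'' ⟨x, hx1, hx2⟩).trans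
              ((hS' ⟨x, hx1, hx2⟩).trans (not_congr (hmem'' _)).symm)


theorem ofSubtype_spl (σ : Equiv.Perm α) (hσ : ∀ x, σ x ≠ x) (hσ0 : σ x₀ = y)
    (hp : ∀ z, (z ≠ x₀ ∧ z ≠ y) ↔
      ((swap x₀ (σ y) * σ * swap x₀ y) z ≠ x₀ ∧ (swap x₀ (σ y) * σ * swap x₀ y) z ≠ y)) :
    Equiv.Perm.ofSubtype ((swap x₀ (σ y) * σ * swap x₀ y).subtypePerm (p := fun z => z ≠ x₀ ∧ z ≠ y) (fun z => (hp z).symm))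
      = swap x₀ (σ y) * σ * swap x₀ y := by
  have hy : y ≠ x₀ := by rw [← hσ0]; exact hσ x₀
  apply Equiv.Perm.ofSubtype_subtypePerm
  intro x hx
  by_cases hx1 : x = x₀
  · exfalso; apply hx; rw [hx1]; exact spl_apply_x₀ x₀ y σ
  · by_cases hx2 : x = y
    · exfalso; apply hx; rw [hx2]; exact spl_apply_y x₀ y σ hy (hσ y) hσ0
    · exact ⟨hx1, hx2⟩

theorem fiber_card (x₀ y : α) (hy : y ≠ x₀) :
    Nat.card {σ : Equiv.Perm α // altCond σ ∧ σ x₀ = y} =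
      Nat.card (Option {z : α // z ≠ x₀ ∧ z ≠ y} ×
        {τ : Equiv.Perm {z : α // z ≠ x₀ ∧ z ≠ y} // altCond τ}) := by
  apply Nat.card_congr
  refine
    { toFun := fun σp =>
        (if h : σp.1 y = x₀ then none else some ⟨σp.1 y, h, altCond.ne σp.2.1 y⟩,
         ⟨(swap x₀ (σp.1 y) * σp.1 * swap x₀ y).subtypePerm
            (fun z => (spl_subtype x₀ y σp.1 (altCond.ne σp.2.1) σp.2.2 z).symm),
          fwd_alt x₀ y σp.1 σp.2.1 σp.2.2 (spl_subtype x₀ y σp.1 (altCond.ne σp.2.1) σp.2.2)⟩),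
      invFun := fun wt =>
        ⟨swap x₀ (wt.1.elim x₀ (↑·)) * Equiv.Perm.ofSubtype wt.2.1 * swap x₀ y,
         (bwd_alt x₀ y hy wt.1 wt.2.1 wt.2.2).1, (bwd_alt x₀ y hy wt.1 wt.2.1 wt.2.2).2⟩,
      left_inv := ?_,
      right_inv := ?_ }
  · rintro ⟨σ, hσ, hσ0⟩
    apply Subtype.ext
    dsimp only
    have hw : ((if h : σ y = x₀ then (none : Option {z : α // z ≠ x₀ ∧ z ≠ y})
        else some ⟨σ y, h, altCond.ne hσ y⟩).elim x₀ (↑·)) = σ y := by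
      split_ifs with h
      · rw [h]; rfl
      · rfl
    rw [hw, ofSubtype_spl x₀ y σ (altCond.ne hσ) hσ0 (spl_subtype x₀ y σ (altCond.ne hσ) hσ0)]
    simp only [← mul_assoc, Equiv.swap_mul_self, one_mul]
    simp only [mul_assoc, Equiv.swap_mul_self, mul_one]
  · rintro ⟨w, τ, hτ⟩
    have hτx : Equiv.Perm.ofSubtype τ x₀ = x₀ :=
      Equiv.Perm.ofSubtype_apply_of_not_mem τ (by simp)
    have hyapp : (swap x₀ (w.elim x₀ (↑·)) * Equiv.Perm.ofSubtype τ * swap x₀ y) y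
        = w.elim x₀ (↑·) := uns_apply_y x₀ y _ _ hτx
    have hspl : swap x₀ ((swap x₀ (w.elim x₀ (↑·)) * Equiv.Perm.ofSubtype τ * swap x₀ y) y)
          * (swap x₀ (w.elim x₀ (↑·)) * Equiv.Perm.ofSubtype τ * swap x₀ y) * swap x₀ y
        = Equiv.Perm.ofSubtype τ := by
      rw [hyapp]
      simp only [← mul_assoc, Equiv.swap_mul_self, one_mul]
      simp only [mul_assoc, Equiv.swap_mul_self, mul_one]
    refine Prod.ext ?_ ?_
    · dsimp only
      rcases w with _ | z₀
      · rw [dif_pos (show _ = x₀ from hyapp)]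
      · rw [dif_neg (fun hc => z₀.2.1 ((hyapp.symm.trans hc) : (z₀ : α) = x₀))]
        · congr 1
          exact Subtype.ext hyapp
    · dsimp only
      apply Subtype.ext
      dsimp only
      apply Equiv.ext
      rintro ⟨z, hz⟩
      apply Subtype.ext
      rw [Equiv.Perm.subtypePerm_apply]
      have := congrArg (fun (e : Equiv.Perm α) => e z) hspl
      exact this.trans (Equiv.Perm.ofSubtype_apply_of_mem τ hz)


theorem card_alt_congr {β : Type*} [DecidableEq β] [Fintype β] (e : α ≃ β) :
    Nat.card {σ : Equiv.Perm α // altCond σ} = Nat.card {σ : Equiv.Perm β // altCond σ} := by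
  apply Nat.card_congr
  refine Equiv.subtypeEquiv e.permCongr fun σ => ?_
  constructor
  · rintro ⟨S, hS⟩
    refine ⟨S.map e.toEmbedding, fun x => ?_⟩
    rw [Finset.mem_map_equiv, Finset.mem_map_equiv]
    have := hS (e.symm x)
    simpa [Equiv.permCongr_apply] using this
  · rintro ⟨S, hS⟩
    refine ⟨S.map e.symm.toEmbedding, fun x => ?_⟩
    rw [Finset.mem_map_equiv, Finset.mem_map_equiv]
    have := hS (e x)
    simpa [Equiv.permCongr_apply] using this

theorem step_card (n : ℕ) (hcard : Fintype.card α = n + 2) :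
    Nat.card {σ : Equiv.Perm α // altCond σ}
      = (n+1)^2 * Nat.card {σ : Equiv.Perm (Fin n) // altCond σ} := by
  classical
  have hpos : 0 < Fintype.card α := by omega
  obtain ⟨x₀⟩ := Fintype.card_pos_iff.1 hpos
  -- partition by the image of x₀
  have hpart : {σ : Equiv.Perm α // altCond σ}
      ≃ Σ y : {y : α // y ≠ x₀}, {σ : Equiv.Perm α // altCond σ ∧ σ x₀ = y} := by
    refine
      { toFun := fun σp => ⟨⟨σp.1 x₀, σp.2.ne x₀⟩, ⟨σp.1, σp.2, rfl⟩⟩,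
        invFun := fun sp => ⟨sp.2.1, sp.2.2.1⟩,
        left_inv := fun σp => rfl,
        right_inv := ?_ }
    rintro ⟨⟨y, hy⟩, ⟨σ, hσ, h0⟩⟩
    cases h0
    rfl
  rw [Nat.card_congr hpart, Nat.card_eq_fintype_card, Fintype.card_sigma]
  have hfib : ∀ y : {y : α // y ≠ x₀},
      Fintype.card {σ : Equiv.Perm α // altCond σ ∧ σ x₀ = (y : α)}
        = (n+1) * Nat.card {σ : Equiv.Perm (Fin n) // altCond σ} := by
    rintro ⟨y, hy⟩
    have hsub : Fintype.card {z : α // z ≠ x₀ ∧ z ≠ y} = n := by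
      rw [Fintype.card_subtype]
      have h2 : ({x₀, y} : Finset α).card = 2 := by
        rw [Finset.card_insert_of_notMem (by simp [Ne.symm hy]), Finset.card_singleton]
      have heq : Finset.univ.filter (fun z => z ≠ x₀ ∧ z ≠ y) = ({x₀, y} : Finset α)ᶜ := by
        ext z
        simp [not_or]
      rw [heq, Finset.card_compl, h2, hcard]
      omega
    have e : {z : α // z ≠ x₀ ∧ z ≠ y} ≃ Fin n := Fintype.equivFinOfCardEq hsub
    rw [← Nat.card_eq_fintype_card, fiber_card x₀ y hy, Nat.card_prod,
      card_alt_congr e, Nat.card_eq_fintype_card (α := Option _), Fintype.card_option, hsub]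
  rw [Finset.sum_congr rfl (fun y _ => hfib y), Finset.sum_const, smul_eq_mul]
  have hcy : Fintype.card {y : α // y ≠ x₀} = n + 1 := by
    rw [Fintype.card_subtype]
    have heq : Finset.univ.filter (fun z => z ≠ x₀) = ({x₀} : Finset α)ᶜ := by
      ext z; simp
    rw [heq, Finset.card_compl, Finset.card_singleton, hcard]
    omega
  rw [Finset.card_univ, hcy]
  ring

end Splice


theorem base_card : Nat.card {σ : Equiv.Perm (Fin 0) // altCond σ} = 1 := by
  rw [Nat.card_eq_one_iff_unique]
  constructor
  · constructor
    intro a b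
    apply Subtype.ext
    apply Equiv.ext
    intro x
    exact x.elim0
  · exact ⟨⟨1, ⟨∅, fun x => x.elim0⟩⟩⟩

theorem aux_card : ∀ m : ℕ, Nat.card {σ : Equiv.Perm (Fin (2*m)) // altCond σ}
    = (Nat.doubleFactorial (2*m - 1))^2 := by
  intro m
  induction m with
  | zero => simpa [Nat.doubleFactorial] using base_card
  | succ m ih =>
    have h1 : Nat.card {σ : Equiv.Perm (Fin (2*(m+1))) // altCond σ}
        = (2*m+1)^2 * Nat.card {σ : Equiv.Perm (Fin (2*m)) // altCond σ} :=
      step_card (2*m) (by simp only [Fintype.card_fin]; omega)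
    rw [h1, ih]
    have h2 : Nat.doubleFactorial (2*(m+1) - 1) = (2*m+1) * Nat.doubleFactorial (2*m-1) := by
      cases m with
      | zero => simp [Nat.doubleFactorial]
      | succ k =>
        have h3 : 2*(k+1+1) - 1 = (2*(k+1)-1) + 2 := by omega
        rw [h3, Nat.doubleFactorial_add_two]
        congr 1
    rw [h2, mul_pow]

theorem evenCycles_card_even (n : ℕ) (hn : 0 < n) (hne : Even n) :
    Nat.card {σ : Equiv.Perm (Fin n) //
      (∀ x, σ x ≠ x) ∧ ∀ l ∈ σ.cycleType, Even l} =
      Nat.doubleFactorial (n - 1) ^ 2 := by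
  obtain ⟨m, rfl⟩ := hne
  have hc : Nat.card {σ : Equiv.Perm (Fin (m+m)) //
        (∀ x, σ x ≠ x) ∧ ∀ l ∈ σ.cycleType, Even l}
      = Nat.card {σ : Equiv.Perm (Fin (m+m)) // altCond σ} :=
    Nat.card_congr (Equiv.subtypeEquivRight (fun σ => altCond_iff σ))
  rw [hc, card_alt_congr (finCongr (show m + m = 2*m by omega)), aux_card m,
    show m + m - 1 = 2*m - 1 by omega]
end

section
/- For any positive even integer n, the number of permutations in S_n with all cycles of odd length equals the number of permutations in S_n with all cycles of even length. -/
open Equiv Function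

set_option linter.unusedSectionVars false
set_option linter.unnecessarySimpa false

namespace OddEven

variable {α : Type*} [DecidableEq α] [Fintype α]

def AllP (P : ℕ → Prop) (σ : Perm α) : Prop := ∀ x, P (minimalPeriod σ x)

def PtP (Pn Pc : ℕ → Prop) (σ : Perm (Option α)) : Prop :=
  Pn (minimalPeriod σ none) ∧ ∀ y, ¬ σ.SameCycle none y → Pc (minimalPeriod σ y)

end OddEven

namespace OddEven

variable {α : Type*} [DecidableEq α] [Fintype α]

-- copied deps (will merge later)
lemma pow_apply_eq_iff (σ : Perm α) (x : α) (n : ℕ) :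
    (σ ^ n) x = x ↔ minimalPeriod σ x ∣ n := by
  constructor
  · intro h
    rcases Nat.eq_zero_or_pos n with rfl | hn
    · exact dvd_zero _
    · exact Function.IsPeriodicPt.minimalPeriod_dvd
        (by simpa [Function.IsPeriodicPt, Function.IsFixedPt, Equiv.Perm.coe_pow] using h)
  · rintro ⟨k, rfl⟩
    have := (Function.isPeriodicPt_minimalPeriod σ x).mul_const k
    simpa [Function.IsPeriodicPt, Function.IsFixedPt, Equiv.Perm.coe_pow] using this

lemma minimalPeriod_pos (σ : Perm α) (x : α) : 0 < minimalPeriod σ x := by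
  apply Function.IsPeriodicPt.minimalPeriod_pos (orderOf_pos σ)
  show (σ ^ orderOf σ) x = x
  simp [pow_orderOf_eq_one]

lemma minimalPeriod_eq_of_dvd_iff {β : Type*} [DecidableEq β] [Fintype β] {σ : Perm α} {τ : Perm β}
    {x : α} {y : β} (h : ∀ n, minimalPeriod σ x ∣ n ↔ minimalPeriod τ y ∣ n) :
    minimalPeriod σ x = minimalPeriod τ y :=
  Nat.dvd_antisymm ((h _).mpr dvd_rfl) ((h _).mp dvd_rfl)

lemma sameCycle_iff_exists_nat_pow {σ : Perm α} {x y : α} :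
    σ.SameCycle x y ↔ ∃ n : ℕ, (σ ^ n) x = y := by
  constructor
  · intro h
    obtain ⟨i, _, hi⟩ := Equiv.Perm.SameCycle.exists_pow_eq' h
    exact ⟨i, hi⟩
  · rintro ⟨n, rfl⟩
    exact ⟨(n : ℤ), by simp [zpow_natCast]⟩

-- none-case lemmas
lemma none_pow_apply (τ : Perm α) (k : ℕ) (y : Option α) :
    ((Equiv.Perm.decomposeOption.symm (none, τ) : Perm (Option α)) ^ k) y = y.map (⇑(τ ^ k)) := by
  induction k with
  | zero => cases y <;> simp
  | succ k ih =>
    rw [pow_succ', Equiv.Perm.mul_apply, ih, Equiv.Perm.decomposeOption_symm_of_none_apply]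
    cases y <;> simp [pow_succ', Equiv.Perm.mul_apply]

lemma none_minimalPeriod_none (τ : Perm α) :
    minimalPeriod (Equiv.Perm.decomposeOption.symm (none, τ) : Perm (Option α)) none = 1 := by
  rw [Function.minimalPeriod_eq_one_iff_isFixedPt]
  show (Equiv.Perm.decomposeOption.symm (none, τ) : Perm (Option α)) none = none
  simp

lemma none_minimalPeriod_some (τ : Perm α) (x : α) :
    minimalPeriod (Equiv.Perm.decomposeOption.symm (none, τ) : Perm (Option α)) (some x) =
      minimalPeriod τ x := by
  apply minimalPeriod_eq_of_dvd_iff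
  intro n
  rw [← pow_apply_eq_iff, ← pow_apply_eq_iff, none_pow_apply]
  simp

lemma none_not_sameCycle (τ : Perm α) (x : α) :
    ¬ (Equiv.Perm.decomposeOption.symm (none, τ) : Perm (Option α)).SameCycle none (some x) := by
  rw [sameCycle_iff_exists_nat_pow]
  rintro ⟨n, hn⟩
  rw [none_pow_apply] at hn
  simp at hn

end OddEven

namespace OddEven

variable {α : Type*} [DecidableEq α] [Fintype α]

lemma some_apply_none (q : α) (τ : Perm α) :
    (Equiv.Perm.decomposeOption.symm (some q, τ) : Perm (Option α)) none = some q := by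
  simp

lemma some_apply_some (q : α) (τ : Perm α) (x : α) :
    (Equiv.Perm.decomposeOption.symm (some q, τ) : Perm (Option α)) (some x) =
      if τ x = q then none else some (τ x) := by
  simp only [Equiv.Perm.decomposeOption_symm_apply, Equiv.Perm.mul_apply]
  rcases eq_or_ne (τ x) q with h | h
  · simp [h, Equiv.optionCongr_apply, Equiv.swap_apply_right]
  · rw [if_neg h]
    have : (τ.optionCongr) (some x) = some (τ x) := by simp
    rw [this]
    exact Equiv.swap_apply_of_ne_of_ne (by simp) (by simpa using h)

lemma claimA (q : α) (τ : Perm α) :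
    ∀ j, j < minimalPeriod τ q →
      ((Equiv.Perm.decomposeOption.symm (some q, τ) : Perm (Option α)) ^ (j + 1)) none =
        some ((τ ^ j) q) := by
  intro j
  induction j with
  | zero => intro _; simpa using some_apply_none q τ
  | succ j ih =>
    intro hj
    rw [pow_succ', Equiv.Perm.mul_apply, ih (Nat.lt_of_succ_lt hj), some_apply_some]
    have hne : τ ((τ ^ j) q) ≠ q := by
      intro h
      have : (τ ^ (j + 1)) q = q := by
        rw [pow_succ', Equiv.Perm.mul_apply]
        exact h
      rw [pow_apply_eq_iff] at this
      have := Nat.le_of_dvd (Nat.succ_pos j) this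
      omega
    rw [if_neg hne, pow_succ', Equiv.Perm.mul_apply]

lemma claimB (q : α) (τ : Perm α) :
    ((Equiv.Perm.decomposeOption.symm (some q, τ) : Perm (Option α)) ^ (minimalPeriod τ q + 1))
      none = none := by
  have hm : 0 < minimalPeriod τ q := minimalPeriod_pos τ q
  obtain ⟨m, hmeq⟩ : ∃ m, minimalPeriod τ q = m + 1 := ⟨_, (Nat.succ_pred_eq_of_pos hm).symm⟩
  rw [hmeq]
  rw [pow_succ', Equiv.Perm.mul_apply, claimA q τ m (by omega), some_apply_some]
  have : τ ((τ ^ m) q) = q := by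
    have : (τ ^ (m + 1)) q = q := by
      rw [← hmeq, pow_apply_eq_iff]
    rw [pow_succ', Equiv.Perm.mul_apply] at this
    exact this
  rw [if_pos this]

lemma claimC (q : α) (τ : Perm α) :
    minimalPeriod (Equiv.Perm.decomposeOption.symm (some q, τ) : Perm (Option α)) none =
      minimalPeriod τ q + 1 := by
  set σ := (Equiv.Perm.decomposeOption.symm (some q, τ) : Perm (Option α))
  set m := minimalPeriod τ q
  have hdvd : minimalPeriod σ none ∣ m + 1 := (pow_apply_eq_iff σ none (m + 1)).mp (claimB q τ)
  have hpos : 0 < minimalPeriod σ none := minimalPeriod_pos σ none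
  have hle : minimalPeriod σ none ≤ m + 1 := Nat.le_of_dvd (Nat.succ_pos m) hdvd
  rcases lt_or_eq_of_le hle with hlt | heq
  · exfalso
    obtain ⟨j, hjeq⟩ : ∃ j, minimalPeriod σ none = j + 1 := ⟨_, (Nat.succ_pred_eq_of_pos hpos).symm⟩
    have hj : j < m := by omega
    have h1 : (σ ^ (j + 1)) none = none := by rw [← hjeq, pow_apply_eq_iff]
    have h2 := claimA q τ j hj
    rw [h1] at h2
    exact nomatch h2
  · exact heq

lemma claimD (q : α) (τ : Perm α) (x : α) (h : ¬ τ.SameCycle q x) (k : ℕ) :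
    ((Equiv.Perm.decomposeOption.symm (some q, τ) : Perm (Option α)) ^ k) (some x) =
      some ((τ ^ k) x) := by
  induction k with
  | zero => simp
  | succ k ih =>
    rw [pow_succ', Equiv.Perm.mul_apply, ih, some_apply_some]
    have hne : τ ((τ ^ k) x) ≠ q := by
      intro hc
      apply h
      apply Equiv.Perm.SameCycle.symm
      refine ⟨((k : ℤ) + 1), ?_⟩
      rw [← hc]
      have : (τ ^ ((k : ℤ) + 1)) = τ ^ (k + 1 : ℕ) := by
        rw [zpow_add_one, zpow_natCast, pow_succ]
      rw [this, pow_succ, Equiv.Perm.mul_apply, ← Equiv.Perm.mul_apply, ← Equiv.Perm.mul_apply,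
        ← pow_succ, ← pow_succ']
    rw [if_neg hne, pow_succ', Equiv.Perm.mul_apply]

lemma claimD' (q : α) (τ : Perm α) (x : α) (h : ¬ τ.SameCycle q x) :
    minimalPeriod (Equiv.Perm.decomposeOption.symm (some q, τ) : Perm (Option α)) (some x) =
      minimalPeriod τ x := by
  apply minimalPeriod_eq_of_dvd_iff
  intro n
  rw [← pow_apply_eq_iff, ← pow_apply_eq_iff, claimD q τ x h]
  simp

lemma claimF (q : α) (τ : Perm α) (j : ℕ) :
    ((Equiv.Perm.decomposeOption.symm (some q, τ) : Perm (Option α)) ^ (j + 1)) none = none ∨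
      ∃ jj : ℕ, ((Equiv.Perm.decomposeOption.symm (some q, τ) : Perm (Option α)) ^ (j + 1)) none =
        some ((τ ^ jj) q) := by
  induction j with
  | zero => right; exact ⟨0, by simpa using some_apply_none q τ⟩
  | succ j ih =>
    rw [pow_succ', Equiv.Perm.mul_apply]
    rcases ih with h | ⟨jj, h⟩
    · right; exact ⟨0, by rw [h]; simpa using some_apply_none q τ⟩
    · rw [h, some_apply_some]
      rcases eq_or_ne (τ ((τ ^ jj) q)) q with he | he
      · left; rw [if_pos he]
      · right
        refine ⟨jj + 1, ?_⟩
        rw [if_neg he, pow_succ', Equiv.Perm.mul_apply]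

lemma claimE (q : α) (τ : Perm α) (x : α) (h : ¬ τ.SameCycle q x) :
    ¬ (Equiv.Perm.decomposeOption.symm (some q, τ) : Perm (Option α)).SameCycle none (some x) := by
  rw [sameCycle_iff_exists_nat_pow]
  rintro ⟨n, hn⟩
  rcases n with _ | j
  · simp at hn
  · rcases claimF q τ j with hc | ⟨jj, hc⟩
    · rw [hn] at hc; exact nomatch hc
    · rw [hn] at hc
      apply h
      refine ⟨(jj : ℤ), ?_⟩
      rw [zpow_natCast]
      exact (Option.some_injective α hc).symm

lemma claimG (q : α) (τ : Perm α) (x : α) (h : τ.SameCycle q x) :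
    (Equiv.Perm.decomposeOption.symm (some q, τ) : Perm (Option α)).SameCycle none (some x) := by
  obtain ⟨i, hi⟩ := sameCycle_iff_exists_nat_pow.mp h
  set m := minimalPeriod τ q
  have hm : 0 < m := minimalPeriod_pos τ q
  have hred : (τ ^ (i % m)) q = x := by
    rw [← hi]
    conv_rhs => rw [← Nat.mod_add_div i m]
    rw [pow_add, Equiv.Perm.mul_apply]
    congr 1
    symm
    rw [pow_apply_eq_iff]
    exact dvd_mul_right _ _
  rw [sameCycle_iff_exists_nat_pow]
  exact ⟨i % m + 1, by rw [claimA q τ (i % m) (Nat.mod_lt i hm), hred]⟩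

end OddEven

namespace OddEven

variable {α : Type*} [DecidableEq α] [Fintype α]

lemma minimalPeriod_eq_one_iff {σ : Perm α} {x : α} :
    minimalPeriod σ x = 1 ↔ σ x = x :=
  Function.minimalPeriod_eq_one_iff_isFixedPt

lemma minimalPeriod_eq_card_support_cycleOf (σ : Perm α) (x : α) (hx : σ x ≠ x) :
    minimalPeriod σ x = (σ.cycleOf x).support.card := by
  have hxm : x ∈ (σ.cycleOf x).support :=
    Equiv.Perm.mem_support_cycleOf_iff.mpr ⟨Equiv.Perm.SameCycle.refl _ _, Equiv.Perm.mem_support.mpr hx⟩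
  have key := fun n => (σ.isCycleOn_support_cycleOf x).pow_apply_eq hxm (n := n)
  apply Nat.dvd_antisymm
  · exact (pow_apply_eq_iff σ x _).mp (key _ |>.mpr dvd_rfl)
  · exact (key _).mp ((pow_apply_eq_iff σ x _).mpr dvd_rfl)

lemma mem_cycleType_iff_exists {σ : Perm α} {l : ℕ} :
    l ∈ σ.cycleType ↔ ∃ x, σ x ≠ x ∧ minimalPeriod σ x = l := by
  rw [Equiv.Perm.cycleType]
  simp only [Multiset.mem_map, Finset.mem_val]
  constructor
  · rintro ⟨c, hc, rfl⟩
    have hcyc := (Equiv.Perm.mem_cycleFactorsFinset_iff.mp hc).1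
    obtain ⟨a, hamem⟩ : c.support.Nonempty :=
      Finset.card_pos.mp (Nat.lt_of_lt_of_le Nat.zero_lt_two hcyc.two_le_card_support)
    have ha := Equiv.Perm.mem_support.mp hamem
    have heq := (Equiv.Perm.mem_cycleFactorsFinset_iff.mp hc).2 a (Equiv.Perm.mem_support.mpr ha)
    have hax : σ a ≠ a := heq ▸ ha
    refine ⟨a, hax, ?_⟩
    rw [minimalPeriod_eq_card_support_cycleOf σ a hax,
      ← Equiv.Perm.cycle_is_cycleOf hamem hc]
    rfl
  · rintro ⟨x, hx, rfl⟩
    refine ⟨σ.cycleOf x, Equiv.Perm.cycleOf_mem_cycleFactorsFinset_iff.mpr (Equiv.Perm.mem_support.mpr hx), ?_⟩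
    rw [minimalPeriod_eq_card_support_cycleOf σ x hx]
    rfl

lemma allOdd_iff (σ : Perm α) :
    (∀ l ∈ σ.cycleType, Odd l) ↔ ∀ x, Odd (minimalPeriod σ x) := by
  constructor
  · intro h x
    by_cases hx : σ x = x
    · rw [minimalPeriod_eq_one_iff.mpr hx]; exact odd_one
    · exact h _ (mem_cycleType_iff_exists.mpr ⟨x, hx, rfl⟩)
  · intro h l hl
    obtain ⟨x, hx, rfl⟩ := mem_cycleType_iff_exists.mp hl
    exact h x

lemma allEven_iff (σ : Perm α) :
    ((∀ x, σ x ≠ x) ∧ ∀ l ∈ σ.cycleType, Even l) ↔ ∀ x, Even (minimalPeriod σ x) := by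
  constructor
  · rintro ⟨hfp, h⟩ x
    exact h _ (mem_cycleType_iff_exists.mpr ⟨x, hfp x, rfl⟩)
  · intro h
    refine ⟨fun x hx => ?_, fun l hl => ?_⟩
    · have := h x
      rw [minimalPeriod_eq_one_iff.mpr hx] at this
      exact absurd this (by decide)
    · obtain ⟨x, hx, rfl⟩ := mem_cycleType_iff_exists.mp hl
      exact h x

end OddEven


namespace OddEven

variable {α : Type*} [DecidableEq α] [Fintype α]

lemma SameCycle.minimalPeriod_eq {σ : Perm α} {x y : α} (h : σ.SameCycle x y) :
    minimalPeriod σ x = minimalPeriod σ y := by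
  obtain ⟨k, rfl⟩ := sameCycle_iff_exists_nat_pow.mp h
  apply minimalPeriod_eq_of_dvd_iff
  intro n
  rw [← pow_apply_eq_iff, ← pow_apply_eq_iff]
  constructor
  · intro hn
    rw [← Equiv.Perm.mul_apply, ← pow_add, add_comm, pow_add, Equiv.Perm.mul_apply, hn]
  · intro hn
    have : (σ ^ k) ((σ ^ n) x) = (σ ^ k) x := by
      rw [← Equiv.Perm.mul_apply, ← pow_add, add_comm, pow_add, Equiv.Perm.mul_apply, hn]
    exact (σ ^ k).injective this

/-- combining the distinguished cycle with the rest -/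
lemma combine_iff (τ : Perm α) (q : α) (P : ℕ → Prop) :
    (P (minimalPeriod τ q) ∧ ∀ x, ¬ τ.SameCycle q x → P (minimalPeriod τ x)) ↔
      AllP P τ := by
  constructor
  · rintro ⟨hq, hrest⟩ x
    by_cases hx : τ.SameCycle q x
    · rw [← SameCycle.minimalPeriod_eq hx]; exact hq
    · exact hrest x hx
  · intro h
    exact ⟨h q, fun x _ => h x⟩

lemma allP_none_iff (τ : Perm α) (P : ℕ → Prop) :
    AllP P (Equiv.Perm.decomposeOption.symm (none, τ) : Perm (Option α)) ↔
      P 1 ∧ AllP P τ := by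
  constructor
  · intro h
    refine ⟨?_, fun x => ?_⟩
    · have := h none; rwa [none_minimalPeriod_none] at this
    · have := h (some x); rwa [none_minimalPeriod_some] at this
  · rintro ⟨h1, h⟩ y
    cases y with
    | none => rwa [none_minimalPeriod_none]
    | some x => rw [none_minimalPeriod_some]; exact h x

lemma ptP_none_iff (τ : Perm α) (Pn Pc : ℕ → Prop) :
    PtP Pn Pc (Equiv.Perm.decomposeOption.symm (none, τ) : Perm (Option α)) ↔
      Pn 1 ∧ AllP Pc τ := by
  unfold PtP
  rw [none_minimalPeriod_none]
  refine and_congr Iff.rfl ?_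
  constructor
  · intro h x
    rw [← none_minimalPeriod_some τ x]
    exact h (some x) (none_not_sameCycle τ x)
  · intro h y hy
    cases y with
    | none => exact absurd (Equiv.Perm.SameCycle.refl _ _) hy
    | some x => rw [none_minimalPeriod_some]; exact h x

lemma allP_some_iff (τ : Perm α) (q : α) (P : ℕ → Prop) :
    AllP P (Equiv.Perm.decomposeOption.symm (some q, τ) : Perm (Option α)) ↔
      P (minimalPeriod τ q + 1) ∧ ∀ x, ¬ τ.SameCycle q x → P (minimalPeriod τ x) := by
  constructor
  · intro h
    refine ⟨?_, fun x hx => ?_⟩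
    · have := h none; rwa [claimC] at this
    · have := h (some x); rwa [claimD' q τ x hx] at this
  · rintro ⟨h1, h⟩ y
    cases y with
    | none => rwa [claimC]
    | some x =>
      by_cases hx : τ.SameCycle q x
      · rw [← SameCycle.minimalPeriod_eq (claimG q τ x hx), claimC]
        exact h1
      · rw [claimD' q τ x hx]
        exact h x hx

lemma ptP_some_iff (τ : Perm α) (q : α) (Pn Pc : ℕ → Prop) :
    PtP Pn Pc (Equiv.Perm.decomposeOption.symm (some q, τ) : Perm (Option α)) ↔
      Pn (minimalPeriod τ q + 1) ∧ ∀ x, ¬ τ.SameCycle q x → Pc (minimalPeriod τ x) := by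
  unfold PtP
  rw [claimC]
  refine and_congr Iff.rfl ?_
  constructor
  · intro h x hx
    rw [← claimD' q τ x hx]
    exact h (some x) (claimE q τ x hx)
  · intro h y hy
    cases y with
    | none => exact absurd (Equiv.Perm.SameCycle.refl _ _) hy
    | some x =>
      have hx : ¬ τ.SameCycle q x := fun hc => hy (claimG q τ x hc)
      rw [claimD' q τ x hx]
      exact h x hx

end OddEven

namespace OddEven

lemma nat_card_sigma {ι : Type*} [Fintype ι] (f : ι → Type*) [∀ i, Finite (f i)] :
    Nat.card (Σ i, f i) = ∑ i, Nat.card (f i) := by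
  classical
  letI : ∀ i, Fintype (f i) := fun i => Fintype.ofFinite _
  simp only [Nat.card_eq_fintype_card]
  exact Fintype.card_sigma

variable {α : Type*} [DecidableEq α] [Fintype α]

lemma card_decompose (P : Perm (Option α) → Prop) :
    Nat.card {σ : Perm (Option α) // P σ} =
      Nat.card {τ : Perm α // P (Equiv.Perm.decomposeOption.symm (none, τ))} +
      ∑ q : α, Nat.card {τ : Perm α // P (Equiv.Perm.decomposeOption.symm (some q, τ))} := by
  classical
  have e1 : {σ : Perm (Option α) // P σ} ≃
      {iτ : Option α × Perm α // P (Equiv.Perm.decomposeOption.symm iτ)} :=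
    Equiv.Perm.decomposeOption.subtypeEquiv (fun σ => by rw [Equiv.symm_apply_apply])
  have e2 := Equiv.subtypeProdEquivSigmaSubtype
    (fun (i : Option α) (τ : Perm α) => P (Equiv.Perm.decomposeOption.symm (i, τ)))
  rw [Nat.card_congr (e1.trans e2), nat_card_sigma, Fintype.sum_option]

section Congr

variable {β γ : Type*} [DecidableEq β] [Fintype β] [DecidableEq γ] [Fintype γ]

lemma permCongr_pow_apply (e : β ≃ γ) (σ : Perm β) (n : ℕ) (y : γ) :
    ((e.permCongr σ) ^ n) y = e ((σ ^ n) (e.symm y)) := by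
  induction n with
  | zero => simp
  | succ n ih =>
    rw [pow_succ', Equiv.Perm.mul_apply, ih, Equiv.permCongr_apply, Equiv.symm_apply_apply,
      pow_succ', Equiv.Perm.mul_apply]

lemma minimalPeriod_permCongr (e : β ≃ γ) (σ : Perm β) (y : γ) :
    minimalPeriod (e.permCongr σ) y = minimalPeriod σ (e.symm y) := by
  apply minimalPeriod_eq_of_dvd_iff
  intro n
  rw [← pow_apply_eq_iff, ← pow_apply_eq_iff, permCongr_pow_apply]
  constructor
  · intro h
    have := congrArg e.symm h
    simpa using this
  · intro h
    rw [h]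
    simp

lemma sameCycle_permCongr (e : β ≃ γ) (σ : Perm β) (y z : γ) :
    (e.permCongr σ).SameCycle y z ↔ σ.SameCycle (e.symm y) (e.symm z) := by
  rw [sameCycle_iff_exists_nat_pow, sameCycle_iff_exists_nat_pow]
  constructor
  · rintro ⟨n, hn⟩
    refine ⟨n, ?_⟩
    rw [permCongr_pow_apply] at hn
    rw [← hn]
    simp
  · rintro ⟨n, hn⟩
    refine ⟨n, ?_⟩
    rw [permCongr_pow_apply, hn]
    simp

lemma allP_permCongr (e : β ≃ γ) (σ : Perm β) (P : ℕ → Prop) :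
    AllP P (e.permCongr σ) ↔ AllP P σ := by
  constructor
  · intro h x
    have := h (e x)
    rwa [minimalPeriod_permCongr, Equiv.symm_apply_apply] at this
  · intro h y
    rw [minimalPeriod_permCongr]
    exact h _

lemma ptP_permCongr {δ : Type*} [DecidableEq δ] [Fintype δ] (e : β ≃ Option δ) (σ : Perm β)
    (Pn Pc : ℕ → Prop) :
    PtP Pn Pc (e.permCongr σ) ↔
      Pn (minimalPeriod σ (e.symm none)) ∧
        ∀ x, ¬ σ.SameCycle (e.symm none) x → Pc (minimalPeriod σ x) := by
  unfold PtP
  rw [minimalPeriod_permCongr]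
  refine and_congr Iff.rfl ?_
  constructor
  · intro h x hx
    have := h (e x) ?_
    · rwa [minimalPeriod_permCongr, Equiv.symm_apply_apply] at this
    · rw [sameCycle_permCongr, Equiv.symm_apply_apply]
      exact hx
  · intro h y hy
    rw [minimalPeriod_permCongr]
    apply h
    rwa [sameCycle_permCongr] at hy

end Congr

end OddEven

namespace OddEven

noncomputable def cO (n : ℕ) : ℕ := Nat.card {σ : Perm (Fin n) // AllP Odd σ}
noncomputable def cE (n : ℕ) : ℕ := Nat.card {σ : Perm (Fin n) // AllP Even σ}
noncomputable def cM (n : ℕ) : ℕ := Nat.card {σ : Perm (Option (Fin n)) // PtP Even Odd σ}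
noncomputable def cN (n : ℕ) : ℕ := Nat.card {σ : Perm (Option (Fin n)) // PtP Odd Even σ}

lemma even_succ_iff_odd {m : ℕ} : Even (m + 1) ↔ Odd m := by
  rw [Nat.even_add_one, Nat.not_even_iff_odd]

lemma odd_succ_iff_even {m : ℕ} : Odd (m + 1) ↔ Even m := by
  rw [Nat.odd_add_one, Nat.not_odd_iff_even]

lemma cM_eq (n : ℕ) : cM n = n * cO n := by
  rw [cM, card_decompose]
  have h0 : Nat.card {τ : Perm (Fin n) //
      PtP Even Odd (Equiv.Perm.decomposeOption.symm (none, τ))} = 0 := by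
    rw [Nat.card_eq_zero]
    left
    rw [isEmpty_subtype]
    intro τ hτ
    rw [ptP_none_iff] at hτ
    exact absurd (Nat.even_iff.mp hτ.1) (by norm_num)
  have h1 : ∀ q : Fin n, Nat.card {τ : Perm (Fin n) //
      PtP Even Odd (Equiv.Perm.decomposeOption.symm (some q, τ))} = cO n := by
    intro q
    rw [cO]
    apply Nat.card_congr
    apply Equiv.subtypeEquivRight
    intro τ
    rw [ptP_some_iff, even_succ_iff_odd, combine_iff]
  rw [h0]
  simp only [h1, Finset.sum_const, Finset.card_univ, Fintype.card_fin, smul_eq_mul, zero_add]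

lemma cN_eq (n : ℕ) : cN n = (n + 1) * cE n := by
  rw [cN, card_decompose]
  have h0 : Nat.card {τ : Perm (Fin n) //
      PtP Odd Even (Equiv.Perm.decomposeOption.symm (none, τ))} = cE n := by
    rw [cE]
    apply Nat.card_congr
    apply Equiv.subtypeEquivRight
    intro τ
    rw [ptP_none_iff]
    simp [odd_one]
  have h1 : ∀ q : Fin n, Nat.card {τ : Perm (Fin n) //
      PtP Odd Even (Equiv.Perm.decomposeOption.symm (some q, τ))} = cE n := by
    intro q
    rw [cE]
    apply Nat.card_congr
    apply Equiv.subtypeEquivRight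
    intro τ
    rw [ptP_some_iff, odd_succ_iff_even, combine_iff]
  rw [h0]
  simp only [h1, Finset.sum_const, Finset.card_univ, Fintype.card_fin, smul_eq_mul]
  ring

lemma cO_rec (n : ℕ) : cO (n + 2) = cO (n + 1) + (n + 1) * cM n := by
  have htrans : cO (n + 2) =
      Nat.card {σ : Perm (Option (Fin (n + 1))) // AllP Odd σ} := by
    rw [cO]
    apply Nat.card_congr
    exact Equiv.subtypeEquiv ((finSuccEquiv (n + 1)).permCongr)
      (fun σ => (allP_permCongr _ σ Odd).symm)
  rw [htrans, card_decompose]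
  congr 1
  · rw [cO]
    apply Nat.card_congr
    apply Equiv.subtypeEquivRight
    intro τ
    rw [allP_none_iff]
    simp [odd_one, AllP]
  · have h1 : ∀ q : Fin (n + 1), Nat.card {τ : Perm (Fin (n + 1)) //
        AllP Odd (Equiv.Perm.decomposeOption.symm (some q, τ))} = cM n := by
      intro q
      rw [cM]
      apply Nat.card_congr
      refine Equiv.subtypeEquiv ((finSuccEquiv' q).permCongr) (fun τ => ?_)
      rw [allP_some_iff, ptP_permCongr, finSuccEquiv'_symm_none, odd_succ_iff_even]
    simp only [h1, Finset.sum_const, Finset.card_univ, Fintype.card_fin, smul_eq_mul]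

lemma cE_rec (n : ℕ) : cE (n + 2) = (n + 1) * cN n := by
  have htrans : cE (n + 2) =
      Nat.card {σ : Perm (Option (Fin (n + 1))) // AllP Even σ} := by
    rw [cE]
    apply Nat.card_congr
    exact Equiv.subtypeEquiv ((finSuccEquiv (n + 1)).permCongr)
      (fun σ => (allP_permCongr _ σ Even).symm)
  rw [htrans, card_decompose]
  have h0 : Nat.card {τ : Perm (Fin (n + 1)) //
      AllP Even (Equiv.Perm.decomposeOption.symm (none, τ))} = 0 := by
    rw [Nat.card_eq_zero]
    left
    rw [isEmpty_subtype]
    intro τ hτ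
    rw [allP_none_iff] at hτ
    exact absurd (Nat.even_iff.mp hτ.1) (by norm_num)
  have h1 : ∀ q : Fin (n + 1), Nat.card {τ : Perm (Fin (n + 1)) //
      AllP Even (Equiv.Perm.decomposeOption.symm (some q, τ))} = cN n := by
    intro q
    rw [cN]
    apply Nat.card_congr
    refine Equiv.subtypeEquiv ((finSuccEquiv' q).permCongr) (fun τ => ?_)
    rw [allP_some_iff, ptP_permCongr, finSuccEquiv'_symm_none, even_succ_iff_odd]
  rw [h0]
  simp only [h1, Finset.sum_const, Finset.card_univ, Fintype.card_fin, smul_eq_mul, zero_add]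

end OddEven

namespace OddEven

lemma minimalPeriod_subsingleton {n : ℕ} (hn : n ≤ 1) (σ : Perm (Fin n)) (x : Fin n) :
    minimalPeriod σ x = 1 := by
  rw [minimalPeriod_eq_one_iff]
  have : Subsingleton (Fin n) := by
    rcases Nat.lt_or_ge n 1 with h | h
    · interval_cases n <;> infer_instance
    · interval_cases n <;> infer_instance
  exact Subsingleton.elim _ _

lemma cO_zero : cO 0 = 1 := by
  have e : {σ : Perm (Fin 0) // AllP Odd σ} ≃ Perm (Fin 0) :=
    Equiv.subtypeUnivEquiv (fun σ x => by
      rw [minimalPeriod_subsingleton (by norm_num) σ x]; exact odd_one)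
  rw [cO, Nat.card_congr e]
  simp [Nat.card_eq_fintype_card, Fintype.card_perm]

lemma cO_one : cO 1 = 1 := by
  have e : {σ : Perm (Fin 1) // AllP Odd σ} ≃ Perm (Fin 1) :=
    Equiv.subtypeUnivEquiv (fun σ x => by
      rw [minimalPeriod_subsingleton (le_refl 1) σ x]; exact odd_one)
  rw [cO, Nat.card_congr e]
  simp [Nat.card_eq_fintype_card, Fintype.card_perm]

lemma cE_zero : cE 0 = 1 := by
  have e : {σ : Perm (Fin 0) // AllP Even σ} ≃ Perm (Fin 0) :=
    Equiv.subtypeUnivEquiv (fun σ x => x.elim0)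
  rw [cE, Nat.card_congr e]
  simp [Nat.card_eq_fintype_card, Fintype.card_perm]

lemma key (m : ℕ) : cO (2 * m) = cE (2 * m) ∧ cO (2 * m + 1) = (2 * m + 1) * cO (2 * m) := by
  induction m with
  | zero => simpa [cO_zero, cE_zero] using cO_one
  | succ m ih =>
    obtain ⟨h1, h2⟩ := ih
    have e2 : 2 * (m + 1) = (2 * m) + 2 := by ring
    have e3 : 2 * (m + 1) + 1 = (2 * m + 1) + 2 := by ring
    have hO2 : cO (2 * m + 2) = (2 * m + 1) * (2 * m + 1) * cO (2 * m) := by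
      rw [cO_rec, cM_eq, h2]
      ring
    have hE2 : cE (2 * m + 2) = (2 * m + 1) * (2 * m + 1) * cE (2 * m) := by
      rw [cE_rec, cN_eq]
      ring
    constructor
    · rw [e2, hO2, hE2, h1]
    · rw [e3, e2, cO_rec, cM_eq, hO2, h2]
      ring

end OddEven

theorem oddCycles_card_eq_evenCycles_card (n : ℕ) (hn : 0 < n) (hne : Even n) :
    Nat.card {σ : Equiv.Perm (Fin n) // ∀ l ∈ σ.cycleType, Odd l} =
      Nat.card {σ : Equiv.Perm (Fin n) //
        (∀ x, σ x ≠ x) ∧ ∀ l ∈ σ.cycleType, Even l} := by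
  obtain ⟨m, rfl⟩ := hne
  have hm : m + m = 2 * m := by ring
  have h1 : Nat.card {σ : Equiv.Perm (Fin (m + m)) // ∀ l ∈ σ.cycleType, Odd l} =
      OddEven.cO (m + m) := by
    rw [OddEven.cO]
    exact Nat.card_congr (Equiv.subtypeEquivRight (fun σ => OddEven.allOdd_iff σ))
  have h2 : Nat.card {σ : Equiv.Perm (Fin (m + m)) //
      (∀ x, σ x ≠ x) ∧ ∀ l ∈ σ.cycleType, Even l} = OddEven.cE (m + m) := by
    rw [OddEven.cE]
    exact Nat.card_congr (Equiv.subtypeEquivRight (fun σ => OddEven.allEven_iff σ))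
  rw [h1, h2, hm]
  exact (OddEven.key m).1
end

section
/- For every positive integer j, the sum of μ(2e) + 2μ(e) over all divisors e of j equals 1 if j = 1, equals -1 if j = 2^p for some p ≥ 1, and equals 0 otherwise. -/
open ArithmeticFunction Finset

lemma sum_mu (n : ℕ) : ∑ d ∈ n.divisors, moebius d = if n = 1 then 1 else 0 := by
  have h : (moebius * (zeta : ArithmeticFunction ℕ) : ArithmeticFunction ℤ) n = (1 : ArithmeticFunction ℤ) n := by
    rw [moebius_mul_coe_zeta]
  rwa [coe_mul_zeta_apply, one_apply] at h

open scoped Classical in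
theorem sum_moebius_two_mul_add (j : ℕ) (hj : 0 < j) :
    ∑ e ∈ j.divisors,
        (ArithmeticFunction.moebius (2 * e) + 2 * ArithmeticFunction.moebius e) =
      if j = 1 then 1 else if ∃ p : ℕ, 1 ≤ p ∧ j = 2 ^ p then -1 else 0 := by
  have hj0 : j ≠ 0 := hj.ne'
  set k := j.factorization 2 with hk
  set m := j / 2 ^ k with hm
  have hmdvd : m ∣ j := Nat.ordCompl_dvd j 2
  have hmodd : ¬ 2 ∣ m := Nat.not_dvd_ordCompl Nat.prime_two hj0
  have hm0 : m ≠ 0 := (Nat.ordCompl_pos 2 hj0).ne'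
  have hjeq : 2 ^ k * m = j := Nat.ordProj_mul_ordCompl_eq_self j 2
  have hsplit : ∑ e ∈ j.divisors, (moebius (2 * e) + 2 * moebius e)
      = (∑ e ∈ j.divisors, moebius (2 * e)) + 2 * ∑ e ∈ j.divisors, moebius e := by
    rw [Finset.sum_add_distrib, Finset.mul_sum]
  have h1 : ∑ e ∈ j.divisors, moebius (2 * e) = ∑ e ∈ m.divisors, moebius (2 * e) := by
    refine (Finset.sum_subset (Nat.divisors_subset_of_dvd hj0 hmdvd) ?_).symm
    intro e he hne
    have hej : e ∣ j := (Nat.mem_divisors.mp he).1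
    have heven : 2 ∣ e := by
      by_contra hodd
      apply hne
      rw [Nat.mem_divisors]
      refine ⟨?_, hm0⟩
      have hcop : Nat.Coprime e (2 ^ k) :=
        Nat.Coprime.pow_right _ (Nat.coprime_two_right.mpr
          (Nat.odd_iff.mpr ((Nat.two_dvd_ne_zero).mp hodd)))
      exact Nat.Coprime.dvd_of_dvd_mul_left hcop (by rwa [hjeq])
    have hns : ¬ Squarefree (2 * e) := by
      obtain ⟨c, rfl⟩ := heven
      intro hsq
      have := hsq 2 ⟨c, by ring⟩
      simp at this
    simp [moebius_eq_zero_of_not_squarefree hns]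
  have h2 : ∀ e ∈ m.divisors, moebius (2 * e) = - moebius e := by
    intro e he
    have hem : e ∣ m := (Nat.mem_divisors.mp he).1
    have heodd : ¬ 2 ∣ e := fun h => hmodd (h.trans hem)
    have hcop : Nat.Coprime 2 e := Nat.coprime_two_left.mpr
      (Nat.odd_iff.mpr ((Nat.two_dvd_ne_zero).mp heodd))
    rw [isMultiplicative_moebius.map_mul_of_coprime hcop,
      moebius_apply_prime Nat.prime_two]
    ring
  rw [hsplit, h1, Finset.sum_congr rfl h2, Finset.sum_neg_distrib, sum_mu, sum_mu]
  by_cases hj1 : j = 1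
  · have : m = 1 := by
      subst hj1; simp [hm, hk]
    simp [hj1, this]
  · rw [if_neg hj1]
    by_cases hex : ∃ p : ℕ, 1 ≤ p ∧ j = 2 ^ p
    · obtain ⟨p, hp, rfl⟩ := hex
      have hkp : k = p := by
        rw [hk, Nat.Prime.factorization_pow Nat.prime_two, Finsupp.single_eq_same]
      have hm1 : m = 1 := by
        have := hjeq
        rw [hkp] at this
        have h2p : (2:ℕ)^p ≠ 0 := by positivity
        nlinarith [Nat.one_le_iff_ne_zero.mpr hm0]
      have hex' : ∃ q : ℕ, 1 ≤ q ∧ 2 ^ p = 2 ^ q := ⟨p, hp, rfl⟩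
      rw [if_pos hm1, if_neg hj1, if_pos hex']
      ring
    · rw [if_neg hex]
      have hm1 : m ≠ 1 := by
        intro h
        apply hex
        refine ⟨k, ?_, ?_⟩
        · rcases Nat.eq_zero_or_pos k with h0 | h0
          · exfalso; apply hj1; rw [← hjeq, h0, h]; ring
          · exact h0
        · rw [← hjeq, h]; ring
      rw [if_neg hm1, if_neg hj1]
      ring
end

section
/- The number of signed permutations in the hyperoctahedral group B_n having only positive cycles equals (2n-1)!!. -/
open Equiv Equiv.Perm

namespace CPS



variable {β : Type*}

lemma sc_step (σ : Perm β) (x : β) : σ.SameCycle x (σ x) := ⟨1, by simp⟩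

lemma sc_mono (σ τ : Perm β) (h : ∀ x, σ.SameCycle x (τ x)) :
    ∀ {x y}, τ.SameCycle x y → σ.SameCycle x y := by
  have key : ∀ (k : ℕ) (x), σ.SameCycle x ((τ ^ k) x) := by
    intro k
    induction k with
    | zero => intro x; simpa using Equiv.Perm.SameCycle.refl σ x
    | succ k ih =>
      intro x
      have h1 : (τ ^ (k + 1)) x = (τ ^ k) (τ x) := by
        rw [pow_succ, Equiv.Perm.mul_apply]
      rw [h1]
      exact (h x).trans (ih (τ x))
  rintro x y ⟨i, rfl⟩
  match i with
  | Int.ofNat k => simpa [zpow_natCast] using key k x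
  | Int.negSucc k =>
    have h1 : (τ ^ (k + 1)) ((τ ^ Int.negSucc k) x) = x := by
      rw [← Equiv.Perm.mul_apply, ← zpow_natCast, ← zpow_add,
        show ((↑(k + 1) : ℤ) + Int.negSucc k) = 0 by push_cast [Int.negSucc_eq]; ring, zpow_zero]
      rfl
    have := key (k + 1) ((τ ^ Int.negSucc k) x)
    rw [h1] at this
    exact this.symm

lemma sc_swap_mul [DecidableEq β] (σ : Perm β) (c : β) (x : β) :
    σ.SameCycle x ((Equiv.swap c (σ c) * σ) x) := by
  rw [Equiv.Perm.mul_apply]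
  rcases eq_or_ne (σ x) c with h | h
  · rw [h, Equiv.swap_apply_left]
    exact Equiv.Perm.SameCycle.trans ⟨1, by simpa using h⟩ (sc_step σ c)
  · rcases eq_or_ne (σ x) (σ c) with h2 | h2
    · rw [h2, Equiv.swap_apply_right]
      rw [σ.injective h2]
    · rw [Equiv.swap_apply_of_ne_of_ne h h2]
      exact sc_step σ x

lemma sc_mem (σ : Perm β) (s : Set β) (hs : ∀ x, σ x ∈ s ↔ x ∈ s) {x y : β}
    (h : σ.SameCycle x y) : x ∈ s ↔ y ∈ s := by
  have hs' : ∀ x, σ⁻¹ x ∈ s ↔ x ∈ s := by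
    intro x
    have := hs (σ⁻¹ x)
    rw [← Equiv.Perm.mul_apply, mul_inv_cancel, Equiv.Perm.one_apply] at this
    exact this.symm
  have key : ∀ (k : ℤ) (x : β), ((σ ^ k) x ∈ s ↔ x ∈ s) := by
    intro k
    induction k using Int.induction_on with
    | zero => simp
    | succ k ih =>
      intro x
      have h1 : (σ ^ ((k : ℤ) + 1)) x = (σ ^ (k : ℤ)) (σ x) := by
        rw [zpow_add, zpow_one, Equiv.Perm.mul_apply]
      rw [h1, ih (σ x), hs]
    | pred k ih =>
      intro x
      have h1 : (σ ^ (-(k : ℤ) - 1)) x = (σ ^ (-(k : ℤ))) (σ⁻¹ x) := by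
        rw [sub_eq_add_neg, zpow_add, Equiv.Perm.mul_apply, zpow_neg_one]
      rw [h1, ih (σ⁻¹ x), hs']
  obtain ⟨k, rfl⟩ := h
  exact (key k x).symm

lemma sc_agree (σ τ : Perm β) (s : Set β) (hs : ∀ x, σ x ∈ s ↔ x ∈ s)
    (agr : ∀ x ∈ s, σ x = τ x) {x y : β} (hx : x ∈ s) (h : σ.SameCycle x y) :
    τ.SameCycle x y := by
  have key : ∀ (k : ℕ) (x : β), x ∈ s → (σ ^ k) x = (τ ^ k) x := by
    intro k
    induction k with
    | zero => intro x _; simp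
    | succ k ih =>
      intro x hx
      have h1 : (σ ^ (k + 1)) x = (σ ^ k) (σ x) := by rw [pow_succ, Equiv.Perm.mul_apply]
      have h2 : (τ ^ (k + 1)) x = (τ ^ k) (τ x) := by rw [pow_succ, Equiv.Perm.mul_apply]
      rw [h1, h2, ← agr x hx, ih (σ x) ((hs x).mpr hx)]
  obtain ⟨i, hi⟩ := h
  match i with
  | Int.ofNat k =>
    refine ⟨(k : ℤ), ?_⟩
    rw [zpow_natCast, ← key k x hx]
    rw [← zpow_natCast]
    exact hi
  | Int.negSucc k =>
    have hy : y ∈ s := (sc_mem σ s hs ⟨Int.negSucc k, hi⟩).mp hx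
    have h1 : (σ ^ (k + 1)) y = x := by
      rw [← hi, ← Equiv.Perm.mul_apply, ← zpow_natCast, ← zpow_add,
        show ((↑(k + 1) : ℤ) + Int.negSucc k) = 0 by push_cast [Int.negSucc_eq]; ring, zpow_zero]
      rfl
    have h2 : (τ ^ (k + 1)) y = x := by rw [← key (k + 1) y hy]; exact h1
    exact Equiv.Perm.SameCycle.symm ⟨(k : ℤ) + 1, by rw [← h2]; push_cast [zpow_natCast]; rfl⟩





def nuf {m : ℕ} (p : Fin m × Bool) : Fin m × Bool := (p.1, !p.2)

@[simp] lemma nuf_nuf {m : ℕ} (p : Fin m × Bool) : nuf (nuf p) = p := by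
  simp [nuf]

lemma nuf_inj {m : ℕ} : Function.Injective (nuf (m := m)) := by
  intro p q h
  have := congrArg nuf h
  simpa using this

@[simp] lemma nuf_ne {m : ℕ} (p : Fin m × Bool) : nuf p ≠ p := by
  simp [nuf, Prod.ext_iff]

def Comm {m : ℕ} (σ : Perm (Fin m × Bool)) : Prop := ∀ p, σ (nuf p) = nuf (σ p)

def Pos {m : ℕ} (σ : Perm (Fin m × Bool)) : Prop := ∀ p, ¬ σ.SameCycle p (nuf p)

lemma comm_inv {m : ℕ} {σ : Perm (Fin m × Bool)} (h : Comm σ) (p : Fin m × Bool) :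
    σ⁻¹ (nuf p) = nuf (σ⁻¹ p) := by
  apply σ.injective
  rw [← Equiv.Perm.mul_apply, mul_inv_cancel, Equiv.Perm.one_apply, h, ← Equiv.Perm.mul_apply,
    mul_inv_cancel, Equiv.Perm.one_apply]

lemma comm_zpow {m : ℕ} {σ : Perm (Fin m × Bool)} (h : Comm σ) (k : ℤ) (p : Fin m × Bool) :
    (σ ^ k) (nuf p) = nuf ((σ ^ k) p) := by
  induction k using Int.induction_on generalizing p with
  | zero => simp
  | succ k ih =>
    have h1 : ∀ q : Fin m × Bool, (σ ^ ((k : ℤ) + 1)) q = (σ ^ (k : ℤ)) (σ q) := by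
      intro q; rw [zpow_add, zpow_one, Equiv.Perm.mul_apply]
    rw [h1, h1, h, ih]
  | pred k ih =>
    have h1 : ∀ q : Fin m × Bool, (σ ^ (-(k : ℤ) - 1)) q = (σ ^ (-(k : ℤ))) (σ⁻¹ q) := by
      intro q; rw [sub_eq_add_neg, zpow_add, Equiv.Perm.mul_apply, zpow_neg_one]
    rw [h1, h1, comm_inv h, ih]

lemma sc_nuf {m : ℕ} {σ : Perm (Fin m × Bool)} (h : Comm σ) {p q : Fin m × Bool}
    (hs : σ.SameCycle p q) : σ.SameCycle (nuf p) (nuf q) := by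
  obtain ⟨k, hk⟩ := hs
  exact ⟨k, by rw [comm_zpow h, hk]⟩

variable {n : ℕ}

/-- the distinguished point and its negative -/
def aa : Fin (n + 1) × Bool := (Fin.last n, false)
def aa' : Fin (n + 1) × Bool := (Fin.last n, true)

@[simp] lemma nuf_aa : nuf (aa (n := n)) = aa' := rfl
@[simp] lemma nuf_aa' : nuf (aa' (n := n)) = aa := rfl
@[simp] lemma aa_ne_aa' : (aa (n := n)) ≠ aa' := by simp [aa, aa', Prod.ext_iff]
@[simp] lemma aa'_ne_aa : (aa' (n := n)) ≠ aa := by simp [aa, aa', Prod.ext_iff]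

lemma not_pred_aa : ¬ (aa (n := n)).1 ≠ Fin.last n := by simp [aa]
lemma not_pred_aa' : ¬ (aa' (n := n)).1 ≠ Fin.last n := by simp [aa']

lemma pred_or (x : Fin (n + 1) × Bool) : x.1 ≠ Fin.last n ∨ x = aa ∨ x = aa' := by
  by_cases h : x.1 = Fin.last n
  · right
    rcases x with ⟨j, b⟩
    cases b
    · left; simpa [aa, Prod.ext_iff] using h
    · right; simpa [aa', Prod.ext_iff] using h
  · left; exact h

lemma pred_of_ne (x : Fin (n + 1) × Bool) (h1 : x ≠ aa) (h2 : x ≠ aa') :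
    x.1 ≠ Fin.last n := by
  rcases pred_or x with h | h | h
  · exact h
  · exact absurd h h1
  · exact absurd h h2

lemma pred_nuf {x : Fin (n + 1) × Bool} (h : x.1 ≠ Fin.last n) : (nuf x).1 ≠ Fin.last n := h

/-- identification of `Fin n × Bool` with the non-last points -/
def dEq : Fin n × Bool ≃ {x : Fin (n + 1) × Bool // x.1 ≠ Fin.last n} where
  toFun z := ⟨(z.1.castSucc, z.2), by simp [Fin.ext_iff]; omega⟩
  invFun x := (x.1.1.castPred x.2, x.1.2)
  left_inv z := by simp
  right_inv x := by
    apply Subtype.ext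
    simp [Prod.ext_iff]
  
@[simp] lemma coe_dEq (z : Fin n × Bool) :
    ((dEq z : {x : Fin (n + 1) × Bool // x.1 ≠ Fin.last n}) : Fin (n + 1) × Bool)
      = (z.1.castSucc, z.2) := rfl

lemma coe_dEq_nuf (z : Fin n × Bool) :
    ((dEq (nuf z) : {x : Fin (n + 1) × Bool // x.1 ≠ Fin.last n}) : Fin (n + 1) × Bool)
      = nuf ((dEq z : {x : Fin (n + 1) × Bool // x.1 ≠ Fin.last n}) : Fin (n + 1) × Bool) := rfl

lemma dEq_ne_aa (z : Fin n × Bool) :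
    ((dEq z : {x : Fin (n + 1) × Bool // x.1 ≠ Fin.last n}) : Fin (n + 1) × Bool) ≠ aa :=
  fun h => (dEq z).2 (by rw [h]; rfl)

lemma dEq_ne_aa' (z : Fin n × Bool) :
    ((dEq z : {x : Fin (n + 1) × Bool // x.1 ≠ Fin.last n}) : Fin (n + 1) × Bool) ≠ aa' :=
  fun h => (dEq z).2 (by rw [h]; rfl)


variable {n : ℕ}

/-- extend a permutation of `Fin n × Bool` to `Fin (n+1) × Bool` fixing the last points -/
def lift (ρ : Perm (Fin n × Bool)) : Perm (Fin (n + 1) × Bool) :=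
  ρ.extendDomain dEq

lemma lift_coe (ρ : Perm (Fin n × Bool)) (z : Fin n × Bool) :
    lift ρ ((dEq z : {x : Fin (n + 1) × Bool // x.1 ≠ Fin.last n}) : Fin (n + 1) × Bool)
      = ((dEq (ρ z) : {x : Fin (n + 1) × Bool // x.1 ≠ Fin.last n}) : Fin (n + 1) × Bool) :=
  Equiv.Perm.extendDomain_apply_image ρ dEq z

lemma lift_aa (ρ : Perm (Fin n × Bool)) : lift ρ aa = aa :=
  Equiv.Perm.extendDomain_apply_not_subtype ρ dEq not_pred_aa

lemma lift_aa' (ρ : Perm (Fin n × Bool)) : lift ρ aa' = aa' :=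
  Equiv.Perm.extendDomain_apply_not_subtype ρ dEq not_pred_aa'

lemma lift_comm {ρ : Perm (Fin n × Bool)} (k1 : Comm ρ) : Comm (lift ρ) := by
  intro x
  rcases pred_or x with hx | hx | hx
  · set z : Fin n × Bool := dEq.symm ⟨x, hx⟩ with hz
    have hxz : x = ((dEq z : {x : Fin (n + 1) × Bool // x.1 ≠ Fin.last n}) : Fin (n + 1) × Bool) := by
      rw [hz, Equiv.apply_symm_apply]
    rw [hxz, show nuf ((dEq z : {x : Fin (n + 1) × Bool // x.1 ≠ Fin.last n}) : Fin (n + 1) × Bool)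
        = ((dEq (nuf z) : {x : Fin (n + 1) × Bool // x.1 ≠ Fin.last n}) : Fin (n + 1) × Bool) from rfl,
      lift_coe, lift_coe, k1]
    rfl
  · rw [hx]
    rw [show nuf (aa (n := n)) = aa' from rfl, lift_aa, lift_aa']
    rfl
  · rw [hx]
    rw [show nuf (aa' (n := n)) = aa from rfl, lift_aa, lift_aa']
    rfl

lemma lift_pos {ρ : Perm (Fin n × Bool)} (k2 : Pos ρ) : Pos (lift ρ) := by
  intro x hx
  rcases pred_or x with h | h | h
  · set z : Fin n × Bool := dEq.symm ⟨x, h⟩ with hz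
    have hxz : x = ((dEq z : {x : Fin (n + 1) × Bool // x.1 ≠ Fin.last n}) : Fin (n + 1) × Bool) := by
      rw [hz, Equiv.apply_symm_apply]
    rw [hxz, show nuf ((dEq z : {x : Fin (n + 1) × Bool // x.1 ≠ Fin.last n}) : Fin (n + 1) × Bool)
        = ((dEq (nuf z) : {x : Fin (n + 1) × Bool // x.1 ≠ Fin.last n}) : Fin (n + 1) × Bool) from rfl]
        at hx
    exact k2 z (Equiv.Perm.sameCycle_extendDomain.mp hx)
  · rw [h] at hx
    have := hx.eq_of_left (by simpa [Function.IsFixedPt] using lift_aa ρ)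
    simp at this
  · rw [h] at hx
    have := hx.eq_of_left (by simpa [Function.IsFixedPt] using lift_aa' ρ)
    simp at this

/-- restrict a permutation preserving the non-last points -/
def res (σ : Perm (Fin (n + 1) × Bool))
    (h : ∀ x : Fin (n + 1) × Bool, x.1 ≠ Fin.last n ↔ (σ x).1 ≠ Fin.last n) :
    Perm (Fin n × Bool) :=
  dEq.permCongr.symm (σ.subtypePerm (fun x => (h x).symm))

lemma res_coe (σ : Perm (Fin (n + 1) × Bool)) (h) (z : Fin n × Bool) :
    ((dEq (res σ h z) : {x : Fin (n + 1) × Bool // x.1 ≠ Fin.last n}) : Fin (n + 1) × Bool)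
      = σ ((dEq z : {x : Fin (n + 1) × Bool // x.1 ≠ Fin.last n}) : Fin (n + 1) × Bool) := by
  simp [res, Equiv.permCongr_symm_apply]

lemma res_congr (σ τ : Perm (Fin (n + 1) × Bool)) (hστ : σ = τ) (h h') :
    res σ h = res τ h' := by
  subst hστ; rfl

lemma lift_res (σ : Perm (Fin (n + 1) × Bool)) (h) (fa : σ aa = aa) (fa' : σ aa' = aa') :
    lift (res σ h) = σ := by
  apply Equiv.ext
  intro x
  rcases pred_or x with hx | hx | hx
  · have hxz : x = ((dEq (dEq.symm ⟨x, hx⟩)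
        : {x : Fin (n + 1) × Bool // x.1 ≠ Fin.last n}) : Fin (n + 1) × Bool) := by
      rw [Equiv.apply_symm_apply]
    rw [hxz, lift_coe, res_coe]
  · rw [hx, lift_aa, fa]
  · rw [hx, lift_aa', fa']

lemma res_lift (ρ : Perm (Fin n × Bool)) (h) : res (lift ρ) h = ρ := by
  apply Equiv.ext
  intro z
  apply dEq.injective
  apply Subtype.ext
  rw [res_coe, lift_coe]


variable {n : ℕ}

/-- the "splicing" double transposition -/
def Tp (b : Fin (n + 1) × Bool) : Perm (Fin (n + 1) × Bool) :=
  Equiv.swap aa b * Equiv.swap aa' (nuf b)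

section Tp
variable {b : Fin (n + 1) × Bool} (hb : b.1 ≠ Fin.last n)
include hb

lemma b_ne_aa : b ≠ aa := fun h => hb (by rw [h]; rfl)
lemma b_ne_aa' : b ≠ aa' := fun h => hb (by rw [h]; rfl)
lemma nb_ne_aa : nuf b ≠ aa := fun h => hb (by
  have := congrArg nuf h; rw [nuf_nuf] at this; rw [this]; rfl)
lemma nb_ne_aa' : nuf b ≠ aa' := fun h => hb (by
  have := congrArg nuf h; rw [nuf_nuf] at this; rw [this]; rfl)

lemma Tp_commute : Commute (Equiv.swap (aa (n := n)) b) (Equiv.swap aa' (nuf b)) := by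
  apply Equiv.Perm.Disjoint.commute
  intro x
  by_cases h1 : x = aa
  · right; rw [h1, Equiv.swap_apply_of_ne_of_ne aa_ne_aa' (fun h => (nb_ne_aa hb) h.symm)]
  · by_cases h2 : x = b
    · right
      rw [h2, Equiv.swap_apply_of_ne_of_ne (b_ne_aa' hb) (fun h => (nuf_ne b) h.symm)]
    · left; rw [Equiv.swap_apply_of_ne_of_ne h1 h2]

lemma Tp_apply_aa : Tp b aa = b := by
  rw [Tp, Equiv.Perm.mul_apply,
    Equiv.swap_apply_of_ne_of_ne aa_ne_aa' (fun h => (nb_ne_aa hb) h.symm),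
    Equiv.swap_apply_left]

lemma Tp_apply_aa' : Tp b aa' = nuf b := by
  rw [Tp, Equiv.Perm.mul_apply, Equiv.swap_apply_left,
    Equiv.swap_apply_of_ne_of_ne (nb_ne_aa hb) (fun h => (nuf_ne b) h)]

lemma Tp_apply_b : Tp b b = aa := by
  rw [Tp, Equiv.Perm.mul_apply,
    Equiv.swap_apply_of_ne_of_ne (b_ne_aa' hb) (fun h => (nuf_ne b) h.symm),
    Equiv.swap_apply_right]

lemma Tp_apply_nb : Tp b (nuf b) = aa' := by
  rw [Tp, Equiv.Perm.mul_apply, Equiv.swap_apply_right,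
    Equiv.swap_apply_of_ne_of_ne aa'_ne_aa (fun h => (b_ne_aa' hb) h.symm)]

lemma Tp_apply_other {x : Fin (n + 1) × Bool} (h1 : x ≠ aa) (h2 : x ≠ aa')
    (h3 : x ≠ b) (h4 : x ≠ nuf b) : Tp b x = x := by
  rw [Tp, Equiv.Perm.mul_apply, Equiv.swap_apply_of_ne_of_ne h2 h4,
    Equiv.swap_apply_of_ne_of_ne h1 h3]

lemma Tp_sq : Tp (n := n) b * Tp b = 1 := by
  have hc := (Tp_commute hb).eq
  rw [Tp, show (Equiv.swap (aa (n := n)) b * Equiv.swap aa' (nuf b)) *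
      (Equiv.swap aa b * Equiv.swap aa' (nuf b))
    = Equiv.swap aa b * ((Equiv.swap aa' (nuf b) * Equiv.swap aa b) * Equiv.swap aa' (nuf b)) by
      group, ← hc]
  rw [show Equiv.swap (aa (n := n)) b * (Equiv.swap aa b * Equiv.swap aa' (nuf b) *
      Equiv.swap aa' (nuf b)) = (Equiv.swap aa b * Equiv.swap aa b) *
      (Equiv.swap aa' (nuf b) * Equiv.swap aa' (nuf b)) by group]
  rw [Equiv.swap_mul_self, Equiv.swap_mul_self, one_mul]

lemma Tp_comm_nuf (x : Fin (n + 1) × Bool) : nuf (Tp b x) = Tp b (nuf x) := by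
  have swap_nuf : ∀ (p q y : Fin (n + 1) × Bool),
      nuf (Equiv.swap p q y) = Equiv.swap (nuf p) (nuf q) (nuf y) := by
    intro p q y
    by_cases h1 : y = p
    · rw [h1, Equiv.swap_apply_left, Equiv.swap_apply_left]
    · by_cases h2 : y = q
      · rw [h2, Equiv.swap_apply_right, Equiv.swap_apply_right]
      · rw [Equiv.swap_apply_of_ne_of_ne h1 h2,
          Equiv.swap_apply_of_ne_of_ne (fun h => h1 (nuf_inj h)) (fun h => h2 (nuf_inj h))]
  rw [Tp, Equiv.Perm.mul_apply, swap_nuf, swap_nuf, nuf_aa, nuf_nuf]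
  have : nuf (aa' (n := n)) = aa := rfl
  rw [this]
  have hc := (Tp_commute hb).eq
  calc Equiv.swap (aa' (n := n)) (nuf b) (Equiv.swap aa b (nuf x))
      = (Equiv.swap (aa' (n := n)) (nuf b) * Equiv.swap aa b) (nuf x) := rfl
    _ = (Equiv.swap (aa (n := n)) b * Equiv.swap aa' (nuf b)) (nuf x) := by rw [← hc]
    _ = Tp b (nuf x) := rfl

end Tp

/-- remove `aa` (and `aa'`) from its cycle -/
def strip (σ : Perm (Fin (n + 1) × Bool)) : Perm (Fin (n + 1) × Bool) :=
  (if σ aa = aa then 1 else Tp (σ aa)) * σ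

section strip
variable {σ : Perm (Fin (n + 1) × Bool)} (h1 : Comm σ) (h2 : Pos σ)
include h1 h2

lemma sigma_aa_ne_aa' : σ aa ≠ aa' := fun h => h2 aa ⟨1, by simpa using h⟩

lemma sigma_aa' : σ aa' = nuf (σ aa) := by
  have := h1 aa
  rwa [nuf_aa] at this

lemma pred_sigma_aa (h : σ aa ≠ aa) : (σ aa).1 ≠ Fin.last n :=
  pred_of_ne _ h (sigma_aa_ne_aa' h1 h2)

lemma strip_aa : strip σ aa = aa := by
  by_cases h : σ aa = aa
  · simp [strip, h]
  · rw [strip, if_neg h, Equiv.Perm.mul_apply, Tp_apply_b (pred_sigma_aa h1 h2 h)]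

lemma strip_aa' : strip σ aa' = aa' := by
  by_cases h : σ aa = aa
  · rw [strip, if_pos h, one_mul, sigma_aa' h1 h2, h, nuf_aa]
  · rw [strip, if_neg h, Equiv.Perm.mul_apply, sigma_aa' h1 h2,
      Tp_apply_nb (pred_sigma_aa h1 h2 h)]

lemma strip_pred (x : Fin (n + 1) × Bool) :
    x.1 ≠ Fin.last n ↔ (strip σ x).1 ≠ Fin.last n := by
  constructor
  · intro hx
    apply pred_of_ne
    · intro h
      have : strip σ x = strip σ aa := by rw [h, strip_aa h1 h2]
      have := (strip σ).injective this
      rw [this] at hx; exact hx rfl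
    · intro h
      have : strip σ x = strip σ aa' := by rw [h, strip_aa' h1 h2]
      have := (strip σ).injective this
      rw [this] at hx; exact hx rfl
  · intro hx
    rcases pred_or x with h | h | h
    · exact h
    · rw [h, strip_aa h1 h2] at hx; exact absurd rfl hx
    · rw [h, strip_aa' h1 h2] at hx; exact absurd rfl hx

lemma strip_comm : Comm (strip σ) := by
  intro p
  by_cases h : σ aa = aa
  · rw [strip, if_pos h, one_mul]; exact h1 p
  · rw [strip, if_neg h, Equiv.Perm.mul_apply, Equiv.Perm.mul_apply, h1 p,
      Tp_comm_nuf (pred_sigma_aa h1 h2 h)]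

lemma strip_sc {x y : Fin (n + 1) × Bool} (h : (strip σ).SameCycle x y) :
    σ.SameCycle x y := by
  by_cases hfix : σ aa = aa
  · rw [strip, if_pos hfix, one_mul] at h; exact h
  · set τ₁ : Perm (Fin (n + 1) × Bool) := Equiv.swap aa' (σ aa') * σ with hτ₁
    have step1 : ∀ z, σ.SameCycle z (τ₁ z) := sc_swap_mul σ aa'
    have hτaa : τ₁ aa = σ aa := by
      rw [hτ₁, Equiv.Perm.mul_apply, sigma_aa' h1 h2,
        Equiv.swap_apply_of_ne_of_ne (sigma_aa_ne_aa' h1 h2) (fun hh => (nuf_ne (σ aa)) hh.symm)]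
    have hstrip : strip σ = Equiv.swap aa (τ₁ aa) * τ₁ := by
      rw [hτaa, hτ₁, strip, if_neg hfix, Tp, sigma_aa' h1 h2, mul_assoc]
    have step2 : ∀ z, τ₁.SameCycle z ((Equiv.swap aa (τ₁ aa) * τ₁) z) := sc_swap_mul τ₁ aa
    rw [hstrip] at h
    exact sc_mono σ τ₁ step1 (sc_mono τ₁ _ step2 h)

lemma strip_pos : Pos (strip σ) := fun p hp => h2 p (strip_sc h1 h2 hp)

end strip

variable {n : ℕ}

section glue
variable {σh : Perm (Fin (n + 1) × Bool)} (fa : σh aa = aa) (fa' : σh aa' = aa')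
  (hc : Comm σh) (hp : Pos σh) {b : Fin (n + 1) × Bool} (hb : b.1 ≠ Fin.last n)

include fa fa' hc hp hb

lemma glue_comm : Comm (Tp b * σh) := by
  intro p
  rw [Equiv.Perm.mul_apply, Equiv.Perm.mul_apply, hc p, Tp_comm_nuf hb]

lemma glue_pos : Pos (Tp b * σh) := by
  set σ : Perm (Fin (n + 1) × Bool) := Tp b * σh with hσ
  have hcσ : Comm σ := glue_comm fa fa' hc hp hb
  -- the cycle of `aa` in σ
  set A : Set (Fin (n + 1) × Bool) := {x | x = aa ∨ σh.SameCycle b x} with hA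
  have aa_mem : aa ∈ A := Or.inl rfl
  have b_mem : b ∈ A := Or.inr (Equiv.Perm.SameCycle.refl σh b)
  have nA_aa' : aa' ∉ A := by
    rintro (h | h)
    · exact aa'_ne_aa h
    · exact b_ne_aa' hb (h.eq_of_right (by simpa [Function.IsFixedPt] using fa'))
  have nA_nb : nuf b ∉ A := by
    rintro (h | h)
    · exact nb_ne_aa hb h
    · exact hp b h
  have hσaa : σ aa = b := by rw [hσ, Equiv.Perm.mul_apply, fa, Tp_apply_aa hb]
  have hσaa' : σ aa' = nuf b := by rw [hσ, Equiv.Perm.mul_apply, fa', Tp_apply_aa' hb]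
  -- A is invariant
  have hAinv : ∀ x, σ x ∈ A ↔ x ∈ A := by
    intro x
    rcases pred_or x with hx | hx | hx
    · by_cases hxb : σh x = b
      · have hσx : σ x = aa := by rw [hσ, Equiv.Perm.mul_apply, hxb, Tp_apply_b hb]
        have hxA : x ∈ A := Or.inr (Equiv.Perm.SameCycle.symm ⟨1, by simpa using hxb⟩)
        simp only [hσx]
        exact iff_of_true aa_mem hxA
      · by_cases hxnb : σh x = nuf b
        · have hσx : σ x = aa' := by rw [hσ, Equiv.Perm.mul_apply, hxnb, Tp_apply_nb hb]
          have hxA : x ∉ A := by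
            rintro (h | h)
            · rw [h, fa] at hxnb; exact (nb_ne_aa hb) hxnb.symm
            · exact hp b ((h.trans ⟨1, by simpa using hxnb⟩))
          rw [hσx]
          exact iff_of_false nA_aa' hxA
        · have hσhx_ne_aa : σh x ≠ aa := by
            intro h
            have := σh.injective (h.trans fa.symm)
            rw [this] at hx; exact hx rfl
          have hσhx_ne_aa' : σh x ≠ aa' := by
            intro h
            have := σh.injective (h.trans fa'.symm)
            rw [this] at hx; exact hx rfl
          have hσx : σ x = σh x := by
            rw [hσ, Equiv.Perm.mul_apply, Tp_apply_other hb hσhx_ne_aa hσhx_ne_aa' hxb hxnb]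
          rw [hσx]
          constructor
          · rintro (h | h)
            · exact absurd h hσhx_ne_aa
            · exact Or.inr (Equiv.Perm.SameCycle.of_apply_right h)
          · rintro (h | h)
            · exact absurd (congrArg Prod.fst h) hx
            · exact Or.inr (Equiv.Perm.SameCycle.apply_right h)
    · rw [hx, hσaa]
      exact iff_of_true b_mem aa_mem
    · rw [hx, hσaa']
      exact iff_of_false nA_nb nA_aa'
  -- A is disjoint from its negative
  have hdisj : ∀ x ∈ A, nuf x ∉ A := by
    rintro x (hx | hx)
    · rw [hx, nuf_aa]; exact nA_aa'
    · rintro (h | h)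
      · have : x = aa' := by
          have := congrArg nuf h; rwa [nuf_nuf, nuf_aa] at this
        rw [this] at hx
        exact b_ne_aa' hb (hx.eq_of_right (by simpa [Function.IsFixedPt] using fa'))
      · exact hp b (h.trans (sc_nuf hc hx).symm)
  -- invariance of the negated set
  have hA2inv : ∀ x, nuf (σ x) ∈ A ↔ nuf x ∈ A := by
    intro x
    rw [← hcσ x]
    exact hAinv (nuf x)
  intro p hSC
  by_cases hpA : p ∈ A
  · exact hdisj p hpA ((sc_mem σ A hAinv hSC).mp hpA)
  · by_cases hpA2 : nuf p ∈ A
    · exact hpA ((sc_mem σ A hAinv hSC).mpr hpA2)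
    · -- p is in the complement B
      set B : Set (Fin (n + 1) × Bool) := {x | x ∉ A ∧ nuf x ∉ A} with hB
      have hBinv : ∀ x, σ x ∈ B ↔ x ∈ B := by
        intro x
        simp only [hB, Set.mem_setOf_eq]
        rw [hAinv x, hA2inv x]
      have agr : ∀ x ∈ B, σ x = σh x := by
        rintro x ⟨hx1, hx2⟩
        have hx_ne_aa : x ≠ aa := fun h => hx1 (h ▸ aa_mem)
        have hx_ne_aa' : x ≠ aa' := by
          intro h
          apply hx2
          rw [h, nuf_aa']; exact aa_mem
        have hxpred : x.1 ≠ Fin.last n := pred_of_ne x hx_ne_aa hx_ne_aa'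
        have h3 : σh x ≠ b := by
          intro h
          exact hx1 (Or.inr (Equiv.Perm.SameCycle.symm ⟨1, by simpa using h⟩))
        have h4 : σh x ≠ nuf b := by
          intro h
          apply hx2
          have : σh (nuf x) = b := by
            rw [hc x, h, nuf_nuf]
          exact Or.inr (Equiv.Perm.SameCycle.symm ⟨1, by simpa using this⟩)
        have h5 : σh x ≠ aa := by
          intro h
          have := σh.injective (h.trans fa.symm)
          rw [this] at hxpred; exact hxpred rfl
        have h6 : σh x ≠ aa' := by
          intro h
          have := σh.injective (h.trans fa'.symm)
          rw [this] at hxpred; exact hxpred rfl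
        rw [hσ, Equiv.Perm.mul_apply, Tp_apply_other hb h5 h6 h3 h4]
      exact hp p (sc_agree σ σh B hBinv agr ⟨hpA, hpA2⟩ hSC)

end glue

variable {n : ℕ}

section resprops
variable {σh : Perm (Fin (n + 1) × Bool)} (fa : σh aa = aa) (fa' : σh aa' = aa')
  (hcm : Comm σh) (hps : Pos σh)
  (h : ∀ x : Fin (n + 1) × Bool, x.1 ≠ Fin.last n ↔ (σh x).1 ≠ Fin.last n)

include fa fa' hcm hps h

lemma res_comm : Comm (res σh h) := by
  intro z
  apply dEq.injective
  apply Subtype.ext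
  rw [res_coe, coe_dEq_nuf, coe_dEq_nuf, hcm, res_coe]

lemma res_pos : Pos (res σh h) := by
  intro z hz
  have hlift : lift (res σh h) = σh := lift_res σh h fa fa'
  have : (lift (res σh h)).SameCycle
      ((dEq z : {x : Fin (n + 1) × Bool // x.1 ≠ Fin.last n}) : Fin (n + 1) × Bool)
      ((dEq (nuf z) : {x : Fin (n + 1) × Bool // x.1 ≠ Fin.last n}) : Fin (n + 1) × Bool) :=
    Equiv.Perm.SameCycle.extendDomain hz
  rw [hlift, coe_dEq_nuf] at this
  exact hps _ this

end resprops

/-- the subtype of positive signed permutations -/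
def SPos (m : ℕ) : Type :=
  {σ : Perm (Fin m × Bool) // Comm σ ∧ Pos σ}

/-- the key recursion equivalence -/
def mainEquiv (n : ℕ) : SPos (n + 1) ≃ Option (Fin n × Bool) × SPos n where
  toFun s :=
    ⟨if h : s.1 aa = aa then none
      else some (dEq.symm ⟨s.1 aa, pred_sigma_aa s.2.1 s.2.2 h⟩),
     ⟨res (strip s.1) (strip_pred s.2.1 s.2.2),
       res_comm (strip_aa s.2.1 s.2.2) (strip_aa' s.2.1 s.2.2)
         (strip_comm s.2.1 s.2.2) (strip_pos s.2.1 s.2.2) _,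
       res_pos (strip_aa s.2.1 s.2.2) (strip_aa' s.2.1 s.2.2)
         (strip_comm s.2.1 s.2.2) (strip_pos s.2.1 s.2.2) _⟩⟩
  invFun t :=
    match t with
    | (none, ⟨ρ, k1, k2⟩) => ⟨lift ρ, lift_comm k1, lift_pos k2⟩
    | (some z, ⟨ρ, k1, k2⟩) =>
      ⟨Tp ((dEq z : {x : Fin (n + 1) × Bool // x.1 ≠ Fin.last n}) : Fin (n + 1) × Bool) * lift ρ,
        glue_comm (lift_aa ρ) (lift_aa' ρ) (lift_comm k1) (lift_pos k2) (dEq z).2,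
        glue_pos (lift_aa ρ) (lift_aa' ρ) (lift_comm k1) (lift_pos k2) (dEq z).2⟩
  left_inv := by
    rintro ⟨σ, h1, h2⟩
    by_cases h : σ aa = aa
    · simp only [dif_pos h]
      apply Subtype.ext
      show lift (res (strip σ) _) = σ
      have hstrip : strip σ = σ := by rw [strip, if_pos h, one_mul]
      have hpred : ∀ x : Fin (n + 1) × Bool, x.1 ≠ Fin.last n ↔ (σ x).1 ≠ Fin.last n := by
        intro x; rw [← hstrip]; exact strip_pred h1 h2 x
      rw [res_congr (strip σ) σ hstrip _ hpred]
      exact lift_res σ hpred h (by rw [sigma_aa' h1 h2, h, nuf_aa])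
    · simp only [dif_neg h]
      apply Subtype.ext
      show Tp _ * lift (res (strip σ) _) = σ
      have hcoe : ((dEq (dEq.symm ⟨σ aa, pred_sigma_aa h1 h2 h⟩)
          : {x : Fin (n + 1) × Bool // x.1 ≠ Fin.last n}) : Fin (n + 1) × Bool) = σ aa := by
        rw [Equiv.apply_symm_apply]
      rw [hcoe]
      rw [lift_res (strip σ) _ (strip_aa h1 h2) (strip_aa' h1 h2)]
      rw [strip, if_neg h, ← mul_assoc, Tp_sq (pred_sigma_aa h1 h2 h), one_mul]
  right_inv := by
    rintro ⟨y, ρ, k1, k2⟩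
    match y with
    | none =>
      have hfix : lift ρ aa = aa := lift_aa ρ
      refine Prod.ext ?_ ?_
      · show (if h : lift ρ aa = aa then _ else _) = _
        rw [dif_pos hfix]
      · apply Subtype.ext
        show res (strip (lift ρ)) (strip_pred (lift_comm k1) (lift_pos k2)) = ρ
        have hstrip : strip (lift ρ) = lift ρ := by rw [strip, if_pos hfix, one_mul]
        have hpred : ∀ x : Fin (n + 1) × Bool, x.1 ≠ Fin.last n ↔ ((lift ρ) x).1 ≠ Fin.last n := by
          intro x; rw [← hstrip]
          exact strip_pred (lift_comm k1) (lift_pos k2) x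
        rw [res_congr _ _ hstrip _ hpred]
        exact res_lift ρ hpred
    | some z =>
      set b : Fin (n + 1) × Bool :=
        ((dEq z : {x : Fin (n + 1) × Bool // x.1 ≠ Fin.last n}) : Fin (n + 1) × Bool) with hbdef
      have hb : b.1 ≠ Fin.last n := (dEq z).2
      set σ : Perm (Fin (n + 1) × Bool) := Tp b * lift ρ with hσdef
      have hσaa : σ aa = b := by
        rw [hσdef, Equiv.Perm.mul_apply, lift_aa, Tp_apply_aa hb]
      have hne : ¬ σ aa = aa := by rw [hσaa]; exact b_ne_aa hb
      refine Prod.ext ?_ ?_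
      · show (if h : σ aa = aa then _ else _) = _
        rw [dif_neg hne]
        congr 1
        have : (⟨σ aa, pred_sigma_aa
            (glue_comm (lift_aa ρ) (lift_aa' ρ) (lift_comm k1) (lift_pos k2) hb)
            (glue_pos (lift_aa ρ) (lift_aa' ρ) (lift_comm k1) (lift_pos k2) hb) hne⟩
            : {x : Fin (n + 1) × Bool // x.1 ≠ Fin.last n}) = dEq z := by
          apply Subtype.ext
          show σ aa = _
          rw [hσaa, hbdef]
        rw [this, Equiv.symm_apply_apply]
      · apply Subtype.ext
        show res (strip σ) (strip_pred
          (glue_comm (lift_aa ρ) (lift_aa' ρ) (lift_comm k1) (lift_pos k2) hb)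
          (glue_pos (lift_aa ρ) (lift_aa' ρ) (lift_comm k1) (lift_pos k2) hb)) = ρ
        have hstrip : strip σ = lift ρ := by
          rw [strip, if_neg hne, hσaa, hσdef, ← mul_assoc, Tp_sq hb, one_mul]
        have hpred : ∀ x : Fin (n + 1) × Bool, x.1 ≠ Fin.last n ↔ ((lift ρ) x).1 ≠ Fin.last n := by
          intro x; rw [← hstrip]
          exact strip_pred (glue_comm (lift_aa ρ) (lift_aa' ρ) (lift_comm k1) (lift_pos k2) hb)
            (glue_pos (lift_aa ρ) (lift_aa' ρ) (lift_comm k1) (lift_pos k2) hb) x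
        rw [res_congr _ _ hstrip _ hpred]
        exact res_lift ρ hpred

lemma card_aux : ∀ m : ℕ, Nat.card (SPos m) = Nat.doubleFactorial (2 * m - 1) := by
  intro m
  induction m with
  | zero =>
    have : Nat.card (SPos 0) = 1 := by
      rw [Nat.card_eq_one_iff_unique]
      constructor
      · exact ⟨fun a b => Subtype.ext (Equiv.ext fun x => x.1.elim0)⟩
      · exact ⟨⟨1, fun p => p.1.elim0, fun p => p.1.elim0⟩⟩
    rw [this]
    rfl
  | succ m ih =>
    have hcard : Nat.card (SPos (m + 1)) = (2 * m + 1) * Nat.card (SPos m) := by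
      rw [Nat.card_congr (mainEquiv m), Nat.card_prod]
      congr 1
      rw [Nat.card_eq_fintype_card]
      simp [Fintype.card_option]
      ring
    rw [hcard, ih]
    cases m with
    | zero => rfl
    | succ k =>
      rw [show 2 * (k + 1 + 1) - 1 = (2 * (k + 1) - 1) + 2 by omega,
        Nat.doubleFactorial_add_two,
        show 2 * (k + 1) - 1 + 2 = 2 * (k + 1) + 1 by omega]

end CPS

/-- The number of signed permutations (elements of the hyperoctahedral group `B_n`,
modeled as permutations of `Fin n × Bool` commuting with negation) all of whose
cycles are positive (no cycle contains both a point and its negative) is `(2n-1)!!`. -/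
theorem card_positive_signed_perms (n : ℕ) :
    Nat.card {σ : Equiv.Perm (Fin n × Bool) //
      (∀ p : Fin n × Bool, σ (p.1, !p.2) = ((σ p).1, !(σ p).2)) ∧
      (∀ p : Fin n × Bool, ¬ σ.SameCycle p (p.1, !p.2))} =
      Nat.doubleFactorial (2 * n - 1) :=
  CPS.card_aux n
end

section
/- For any integer n ≥ 2, the number of permutations in S_n with all cycles of odd length equals ((n-1)!!)^2 if n is even, and equals n!! · (n-2)!! if n is odd. -/
open Equiv Equiv.Perm Finset

variable {α : Type*} [Fintype α] [DecidableEq α]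

def AllOdd (σ : Perm α) : Prop := ∀ l ∈ σ.cycleType, Odd l

lemma allOdd_mul_of_disjoint {σ τ : Perm α} (h : Perm.Disjoint σ τ) :
    AllOdd (σ * τ) ↔ AllOdd σ ∧ AllOdd τ := by
  unfold AllOdd
  rw [h.cycleType_mul]
  constructor
  · exact fun H => ⟨fun l hl => H l (Multiset.mem_add.2 (Or.inl hl)),
      fun l hl => H l (Multiset.mem_add.2 (Or.inr hl))⟩
  · rintro ⟨H1, H2⟩ l hl
    rcases Multiset.mem_add.1 hl with h' | h'
    · exact H1 l h'
    · exact H2 l h'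

/-- Factor out the cycle of `x`. -/
lemma cycleType_factor_out {ρ : Perm α} {x : α} (hx : ρ x ≠ x) :
    ρ.cycleType = (ρ * (ρ.cycleOf x)⁻¹).cycleType + {(ρ.cycleOf x).support.card} := by
  have hmem : ρ.cycleOf x ∈ ρ.cycleFactorsFinset :=
    cycleOf_mem_cycleFactorsFinset_iff.2 (mem_support.2 hx)
  have hd : Perm.Disjoint (ρ * (ρ.cycleOf x)⁻¹) (ρ.cycleOf x) :=
    disjoint_mul_inv_of_mem_cycleFactorsFinset hmem
  have hρ : ρ = (ρ * (ρ.cycleOf x)⁻¹) * ρ.cycleOf x := by group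
  conv_lhs => rw [hρ]
  rw [hd.cycleType_mul, (isCycle_cycleOf ρ hx).cycleType]

lemma mem_cycleType_of_ne {ρ : Perm α} {x : α} (hx : ρ x ≠ x) :
    (ρ.cycleOf x).support.card ∈ ρ.cycleType := by
  rw [cycleType_factor_out hx]
  exact Multiset.mem_add.2 (Or.inr (Multiset.mem_singleton_self _))

/-- Insertion lemma: inserting `a` into the cycle of `p` (where `τ a = a`, `τ p ≠ p`). -/
lemma insert_point {τ : Perm α} {a p : α} (ha : τ a = a) (hap : p ≠ a) (hp : τ p ≠ p) :
    (swap a p * τ).cycleOf p = swap a p * τ.cycleOf p ∧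
    (swap a p * τ) * ((swap a p * τ).cycleOf p)⁻¹ = τ * (τ.cycleOf p)⁻¹ ∧
    ((swap a p * τ).cycleOf p).support.card = (τ.cycleOf p).support.card + 1 ∧
    (swap a p * τ).cycleType = (τ * (τ.cycleOf p)⁻¹).cycleType + {(τ.cycleOf p).support.card + 1} := by
  set e := τ.cycleOf p with he_def
  set d := τ * e⁻¹ with hd_def
  have hpe : p ∈ e.support := by
    rw [he_def, mem_support_cycleOf_iff]
    exact ⟨SameCycle.refl _ _, mem_support.2 hp⟩
  have he_c : IsCycle e := isCycle_cycleOf τ hp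
  have haτ : a ∉ τ.support := notMem_support.2 ha
  have hae : a ∉ e.support := fun h => haτ (support_cycleOf_le τ p h)
  have hea : e a = a := notMem_support.1 hae
  have hmem : e ∈ τ.cycleFactorsFinset :=
    cycleOf_mem_cycleFactorsFinset_iff.2 (mem_support.2 hp)
  have hd : Perm.Disjoint d e := disjoint_mul_inv_of_mem_cycleFactorsFinset hmem
  have hτde : τ = d * e := by rw [hd_def]; group
  have hinv : e⁻¹ a = a := e.injective (by rw [← mul_apply, mul_inv_cancel, one_apply, hea])
  have hda : d a = a := by
    rw [hd_def, mul_apply, hinv, ha]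
  have hep : e p = τ p := cycleOf_apply_self τ p
  have hdp : d p = p := (hd p).resolve_right (by rw [hep]; exact hp)
  have hswapd : Perm.Disjoint (swap a p) d := by
    intro x
    by_cases hxa : x = a
    · right; rw [hxa, hda]
    by_cases hxp : x = p
    · right; rw [hxp, hdp]
    · left; exact swap_apply_of_ne_of_ne hxa hxp
  set e' := swap a p * e with he'_def
  have hσ : swap a p * τ = d * e' := by
    rw [hτde, he'_def, ← mul_assoc, hswapd.commute.eq, mul_assoc]
  have he'a : e' a = p := by rw [he'_def, mul_apply, hea, swap_apply_left]
  have hepa : e p ≠ a := fun h => hae (h ▸ apply_mem_support.2 hpe)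
  have he'p : e' p = e p := by
    rw [he'_def, mul_apply]
    exact swap_apply_of_ne_of_ne hepa (by rw [hep]; exact hp)
  have hkey : swap a (e' a) * e' = e := by
    rw [he'a, he'_def, ← mul_assoc, swap_mul_self, one_mul]
  have he'ane : e' a ≠ a := by rw [he'a]; exact hap
  have hae' : a ∈ e'.support := mem_support.2 he'ane
  have hsupp : e'.support = insert a e.support := by
    have h2 : e' (e' a) ≠ a := by rw [he'a, he'p]; exact hepa
    have h3 := support_swap_mul_eq e' a h2
    rw [hkey] at h3
    rw [h3, sdiff_singleton_eq_erase, insert_erase hae']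
  have hcycle : IsCycle e' := by
    refine ⟨a, he'ane, ?_⟩
    intro y hy
    have hy' : y ∈ e'.support := mem_support.2 hy
    rw [hsupp, mem_insert] at hy'
    rcases hy' with rfl | hy'
    · exact SameCycle.refl _ _
    have key : ∀ i : ℕ, SameCycle e' p ((e ^ i) p) := by
      intro i; induction i with
      | zero => exact SameCycle.refl _ _
      | succ i ih =>
        have hz : (e ^ i) p ∈ e.support := (pow_apply_mem_support).2 hpe
        have hstep : (e ^ (i + 1)) p = e ((e ^ i) p) := by
          rw [pow_succ', mul_apply]
        by_cases hzp : e ((e ^ i) p) = p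
        · rw [hstep, hzp]
        · have hza : e ((e ^ i) p) ≠ a := fun h => hae (h ▸ apply_mem_support.2 hz)
          have hfix : e' ((e ^ i) p) = e ((e ^ i) p) := by
            rw [he'_def, mul_apply]
            exact swap_apply_of_ne_of_ne hza hzp
          rw [hstep]
          exact SameCycle.trans ih ⟨1, by rw [zpow_one, hfix]⟩
    have h1 : SameCycle e p y := he_c.sameCycle (mem_support.1 hpe) (mem_support.1 hy')
    obtain ⟨i, _, hi⟩ := h1.exists_pow_eq'
    exact SameCycle.trans (show SameCycle e' a p from ⟨1, by rw [zpow_one, he'a]⟩) (hi ▸ key i)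
  have hde' : Perm.Disjoint d e' := by
    intro x
    by_cases hx : x ∈ e'.support
    · left
      rw [hsupp, mem_insert] at hx
      rcases hx with rfl | hx
      · exact hda
      · exact (hd x).resolve_right (mem_support.1 hx)
    · right; exact notMem_support.1 hx
  have hmem' : e' ∈ (swap a p * τ).cycleFactorsFinset := by
    rw [mem_cycleFactorsFinset_iff]
    refine ⟨hcycle, fun x hx => ?_⟩
    have hx' : e' x ∈ e'.support := apply_mem_support.2 hx
    have : d (e' x) = e' x := by
      rcases hde' (e' x) with h | h
      · exact h
      · exact absurd (notMem_support.2 h) (fun hh => hh hx')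
    conv_rhs => rw [hσ, mul_apply]
    exact this.symm
  have hpe' : p ∈ e'.support := by rw [hsupp]; exact mem_insert_of_mem hpe
  have hcyc_eq : (swap a p * τ).cycleOf p = e' := (cycle_is_cycleOf hpe' hmem').symm
  have hcard : e'.support.card = e.support.card + 1 := by
    rw [hsupp, card_insert_of_notMem hae]
  refine ⟨hcyc_eq, ?_, ?_, ?_⟩
  · rw [hcyc_eq, hσ, he'_def]; group
  · rw [hcyc_eq, hcard]
  · rw [hσ, hde'.cycleType_mul, hcycle.cycleType, hcard, hd_def]

/-- Inserting `a` next to a fixed point `p` creates a 2-cycle. -/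
lemma insert_fixed {τ : Perm α} {a p : α} (ha : τ a = a) (hap : p ≠ a) (hp : τ p = p) :
    (swap a p * τ).cycleOf p = swap a p ∧
    (swap a p * τ) * ((swap a p * τ).cycleOf p)⁻¹ = τ ∧
    ((swap a p * τ).cycleOf p).support.card = 2 ∧
    (swap a p * τ).cycleType = τ.cycleType + {2} := by
  have hpa : a ≠ p := Ne.symm hap
  have hsw : IsCycle (swap a p) := isCycle_swap hpa
  have hsupp : (swap a p).support = {a, p} := support_swap hpa
  have hdisj : Perm.Disjoint (swap a p) τ := by
    intro x
    by_cases hxa : x = a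
    · right; rw [hxa, ha]
    by_cases hxp : x = p
    · right; rw [hxp, hp]
    · left; exact swap_apply_of_ne_of_ne hxa hxp
  have hmem : swap a p ∈ (swap a p * τ).cycleFactorsFinset := by
    rw [mem_cycleFactorsFinset_iff]
    refine ⟨hsw, fun x hx => ?_⟩
    rw [hsupp] at hx
    rcases mem_insert.1 hx with rfl | hx
    · rw [mul_apply, ha]
    · rw [mem_singleton.1 hx, mul_apply, hp]
  have hpmem : p ∈ (swap a p).support := by rw [hsupp]; exact mem_insert_of_mem (mem_singleton_self p)
  have hcyc : (swap a p * τ).cycleOf p = swap a p := (cycle_is_cycleOf hpmem hmem).symm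
  refine ⟨hcyc, ?_, ?_, ?_⟩
  · rw [hcyc, hdisj.commute.eq, mul_assoc]; group
  · rw [hcyc, card_support_swap hpa]
  · rw [hdisj.commute.eq, hdisj.symm.cycleType_mul, hsw.cycleType, card_support_swap hpa]

lemma card_stage1 (a : α) :
    Nat.card {σ : Perm α // AllOdd σ ∧ σ a ≠ a} =
    Nat.card {x : Perm α × α // x.1 a = a ∧ x.2 ≠ a ∧ x.1 x.2 ≠ x.2 ∧
      Even ((x.1.cycleOf x.2).support.card) ∧ AllOdd (x.1 * (x.1.cycleOf x.2)⁻¹)} := by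
  have prop : ∀ x : {x : Perm α × α // x.1 a = a ∧ x.2 ≠ a ∧ x.1 x.2 ≠ x.2 ∧
      Even ((x.1.cycleOf x.2).support.card) ∧ AllOdd (x.1 * (x.1.cycleOf x.2)⁻¹)},
      AllOdd (swap a x.1.2 * x.1.1) ∧ (swap a x.1.2 * x.1.1) a ≠ a := by
    rintro ⟨⟨τ, p⟩, h1, h2, h3, h4, h5⟩
    have I := insert_point h1 h2 h3
    constructor
    · intro l hl
      rw [I.2.2.2] at hl
      rcases Multiset.mem_add.1 hl with hl | hl
      · exact h5 l hl
      · rw [Multiset.mem_singleton.1 hl]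
        exact Even.add_one h4
    · show swap a p (τ a) ≠ a
      rw [h1, swap_apply_left]
      exact h2
  refine (Nat.card_eq_of_bijective (fun x => ⟨swap a x.1.2 * x.1.1, prop x⟩) ⟨?_, ?_⟩).symm
  · -- injective
    rintro ⟨⟨τ, p⟩, h1, h2, h3, h4, h5⟩ ⟨⟨τ', p'⟩, h1', h2', h3', h4', h5'⟩ heq
    simp only [Subtype.mk.injEq] at heq
    have hpp : p = p' := by
      have h := congrArg (fun f : Perm α => f a) heq
      simpa [mul_apply, h1, h1', swap_apply_left] using h
    subst hpp
    have : τ = τ' := mul_left_cancel heq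
    simp [this]
  · -- surjective
    rintro ⟨σ, hodd, hne⟩
    set p := σ a with hp_def
    set τ := swap a p * σ with hτ_def
    have hστ : swap a p * τ = σ := by rw [hτ_def, ← mul_assoc, swap_mul_self, one_mul]
    have hτa : τ a = a := by rw [hτ_def, mul_apply, ← hp_def, swap_apply_right]
    have hpa : p ≠ a := hne
    have hσp : σ p ≠ p := mem_support.1 (apply_mem_support.2 (mem_support.2 hne))
    have hτp : τ p ≠ p := by
      intro hfix
      have J := insert_fixed hτa hpa hfix
      rw [hστ] at J
      have h2 := hodd 2 (J.2.2.2 ▸ Multiset.mem_add.2 (Or.inr (Multiset.mem_singleton_self 2)))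
      rw [Nat.odd_iff] at h2; omega
    have I := insert_point hτa hpa hτp
    rw [hστ] at I
    have hoddrest : AllOdd (τ * (τ.cycleOf p)⁻¹) := by
      rw [← I.2.1]
      intro l hl
      apply hodd
      rw [cycleType_factor_out hσp]
      exact Multiset.mem_add.2 (Or.inl hl)
    have hevk : Even ((τ.cycleOf p).support.card) := by
      have hodd1 : Odd ((σ.cycleOf p).support.card) := hodd _ (mem_cycleType_of_ne hσp)
      rw [I.2.2.1] at hodd1
      obtain ⟨m, hm⟩ := hodd1
      exact ⟨m, by omega⟩
    exact ⟨⟨(τ, p), hτa, hpa, hτp, hevk, hoddrest⟩, Subtype.ext hστ⟩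

lemma card_stage2 (a : α) :
    Nat.card {x : Perm α × α // x.1 a = a ∧ x.2 ≠ a ∧ x.1 x.2 ≠ x.2 ∧
      Even ((x.1.cycleOf x.2).support.card) ∧ AllOdd (x.1 * (x.1.cycleOf x.2)⁻¹)} =
    Nat.card {x : α × α × Perm α // x.1 ≠ a ∧ (x.2.1 ≠ a ∧ x.2.1 ≠ x.1) ∧
      (AllOdd x.2.2 ∧ x.2.2 a = a ∧ x.2.2 x.1 = x.1)} := by
  have prop : ∀ x : {x : α × α × Perm α // x.1 ≠ a ∧ (x.2.1 ≠ a ∧ x.2.1 ≠ x.1) ∧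
      (AllOdd x.2.2 ∧ x.2.2 a = a ∧ x.2.2 x.1 = x.1)},
      (swap x.1.1 x.1.2.1 * x.1.2.2) a = a ∧ x.1.2.1 ≠ a ∧
      (swap x.1.1 x.1.2.1 * x.1.2.2) x.1.2.1 ≠ x.1.2.1 ∧
      Even (((swap x.1.1 x.1.2.1 * x.1.2.2).cycleOf x.1.2.1).support.card) ∧
      AllOdd ((swap x.1.1 x.1.2.1 * x.1.2.2) *
        ((swap x.1.1 x.1.2.1 * x.1.2.2).cycleOf x.1.2.1)⁻¹) := by
    rintro ⟨⟨z, p, ρ⟩, hz, ⟨hpa, hpz⟩, hodd, hρa, hρz⟩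
    have hτa : (swap z p * ρ) a = a := by
      rw [mul_apply, hρa]
      exact swap_apply_of_ne_of_ne (Ne.symm hz) (Ne.symm hpa)
    by_cases hρp : ρ p = p
    · have J := insert_fixed hρz hpz hρp
      refine ⟨hτa, hpa, ?_, ?_, ?_⟩
      · show swap z p (ρ p) ≠ p
        rw [hρp, swap_apply_right]
        exact Ne.symm hpz
      · rw [J.2.2.1]; exact ⟨1, rfl⟩
      · rw [J.2.1]; exact hodd
    · have I := insert_point hρz hpz hρp
      refine ⟨hτa, hpa, ?_, ?_, ?_⟩
      · show swap z p (ρ p) ≠ p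
        have hρpz : ρ p ≠ z := fun h => hpz (ρ.injective (h.trans hρz.symm))
        rw [swap_apply_of_ne_of_ne hρpz hρp]
        exact hρp
      · rw [I.2.2.1]
        exact Odd.add_one (hodd _ (mem_cycleType_of_ne hρp))
      · rw [I.2.1]
        intro l hl
        apply hodd
        rw [cycleType_factor_out hρp]
        exact Multiset.mem_add.2 (Or.inl hl)
  refine (Nat.card_eq_of_bijective
    (fun x => ⟨(swap x.1.1 x.1.2.1 * x.1.2.2, x.1.2.1), prop x⟩) ⟨?_, ?_⟩).symm
  · -- injective
    rintro ⟨⟨z, p, ρ⟩, hz, ⟨hpa, hpz⟩, hodd, hρa, hρz⟩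
      ⟨⟨z', p', ρ'⟩, hz', ⟨hpa', hpz'⟩, hodd', hρa', hρz'⟩ heq
    simp only [Subtype.mk.injEq, Prod.mk.injEq] at heq
    obtain ⟨heq1, heq2⟩ := heq
    subst heq2
    have hv : (swap z p * ρ) z = p := by rw [mul_apply, hρz, swap_apply_left]
    have hv' : (swap z' p * ρ') z' = p := by rw [mul_apply, hρz', swap_apply_left]
    have hzz : z = z' := by
      apply (swap z p * ρ).injective
      rw [hv, heq1, hv']
    subst hzz
    have : ρ = ρ' := mul_left_cancel heq1
    simp [this]
  · -- surjective
    rintro ⟨⟨τ, p⟩, h1, h2, h3, h4, h5⟩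
    set z := τ⁻¹ p with hz_def
    set ρ := swap z p * τ with hρ_def
    have hτz : τ z = p := by rw [hz_def, ← mul_apply, mul_inv_cancel, one_apply]
    have hτeq : swap z p * ρ = τ := by rw [hρ_def, ← mul_assoc, swap_mul_self, one_mul]
    have hza : z ≠ a := fun h => h2 (by rw [← hτz, h, h1])
    have hpz : p ≠ z := fun h => h3 (by nth_rewrite 2 [h]; rw [hτz, h])
    have hρa : ρ a = a := by
      rw [hρ_def, mul_apply, h1]
      exact swap_apply_of_ne_of_ne (Ne.symm hza) (Ne.symm h2)
    have hρz : ρ z = z := by rw [hρ_def, mul_apply, hτz, swap_apply_right]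
    have hoddρ : AllOdd ρ := by
      by_cases hρp : ρ p = p
      · have J := insert_fixed hρz hpz hρp
        rw [hτeq] at J
        rw [← J.2.1]
        exact h5
      · have I := insert_point hρz hpz hρp
        rw [hτeq] at I
        have hrest : AllOdd (ρ * (ρ.cycleOf p)⁻¹) := by rw [← I.2.1]; exact h5
        have hk : Odd ((ρ.cycleOf p).support.card) := by
          rw [I.2.2.1] at h4
          obtain ⟨m, hm⟩ := h4
          exact ⟨m - 1, by omega⟩
        intro l hl
        rw [cycleType_factor_out hρp] at hl
        rcases Multiset.mem_add.1 hl with hl | hl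
        · exact hrest l hl
        · rwa [Multiset.mem_singleton.1 hl]
    exact ⟨⟨(z, p, ρ), hza, ⟨h2, hpz⟩, hoddρ, hρa, hρz⟩, Subtype.ext (Prod.ext hτeq rfl)⟩

lemma odd_of_dvd {m n : ℕ} (h : m ∣ n) (hn : Odd n) : Odd m := by
  by_contra h'
  rw [Nat.not_odd_iff_even] at h'
  rw [← Nat.not_even_iff_odd] at hn
  exact hn ((even_iff_two_dvd.mpr ((even_iff_two_dvd.mp h').trans h)))

lemma multiset_lcm_odd (s : Multiset ℕ) (h : ∀ l ∈ s, Odd l) : Odd s.lcm := by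
  induction s using Multiset.induction with
  | empty => simpa using odd_one
  | cons a s ih =>
    rw [Multiset.lcm_cons]
    have ha := h a (Multiset.mem_cons_self a s)
    have hs := ih (fun l hl => h l (Multiset.mem_cons_of_mem hl))
    exact odd_of_dvd (lcm_dvd (dvd_mul_right _ _) (dvd_mul_left _ _)) (ha.mul hs)

lemma allOdd_iff_odd_orderOf (σ : Perm α) : AllOdd σ ↔ Odd (orderOf σ) := by
  constructor
  · intro h
    rw [← lcm_cycleType]
    exact multiset_lcm_odd _ h
  · intro h l hl
    exact odd_of_dvd (dvd_of_mem_cycleType hl) h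

lemma allOdd_permCongr {β γ : Type*} [Fintype β] [DecidableEq β] [Fintype γ] [DecidableEq γ]
    (φ : β ≃ γ) (σ : Perm β) : AllOdd (φ.permCongr σ) ↔ AllOdd σ := by
  rw [allOdd_iff_odd_orderOf, allOdd_iff_odd_orderOf]
  have : orderOf (φ.permCongr σ) = orderOf σ := by
    let F : Perm β →* Perm γ :=
      { toFun := fun τ => φ.permCongr τ
        map_one' := by ext x; simp
        map_mul' := by intro f g; ext x; simp }
    exact orderOf_injective F (fun x y h => (Equiv.permCongr φ).injective h) σ
  rw [this]

/-- Number of all-odd permutations of `Fin m`. -/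
noncomputable def A (m : ℕ) : ℕ := Nat.card {σ : Perm (Fin m) // AllOdd σ}

lemma card_allOdd_eq_A {β : Type*} [Fintype β] [DecidableEq β] :
    Nat.card {σ : Perm β // AllOdd σ} = A (Fintype.card β) := by
  apply Nat.card_congr
  exact Equiv.subtypeEquiv (Equiv.permCongr (Fintype.equivFin β))
    (fun σ => (allOdd_permCongr (Fintype.equivFin β) σ).symm)

lemma card_allOdd_fix {q : α → Prop} [DecidablePred q] :
    Nat.card {σ : Perm α // AllOdd σ ∧ ∀ x, ¬ q x → σ x = x} =
    A (Fintype.card {x // q x}) := by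
  rw [← card_allOdd_eq_A]
  apply Nat.card_congr
  symm
  refine (((Equiv.Perm.subtypeEquivSubtypePerm q).subtypeEquiv (fun g => ?_)).trans
    ((Equiv.subtypeSubtypeEquivSubtypeInter _ _).trans
      (Equiv.subtypeEquivRight (fun σ => and_comm))))
  show AllOdd g ↔ AllOdd ((Equiv.Perm.subtypeEquivSubtypePerm q) g).1
  have h1 : (((Equiv.Perm.subtypeEquivSubtypePerm q) g : {f : Perm α // ∀ a, ¬ q a → f a = a}) : Perm α).cycleType = g.cycleType :=
    cycleType_ofSubtype
  unfold AllOdd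
  rw [h1]

lemma card_dep_prod {β γ : Type*} [Fintype β] [Fintype γ] (P : β → Prop) (Q : β → γ → Prop)
    (k : ℕ) (h : ∀ b, P b → Nat.card {c : γ // Q b c} = k) :
    Nat.card {x : β × γ // P x.1 ∧ Q x.1 x.2} = Nat.card {b // P b} * k := by
  classical
  rw [Nat.card_congr (Equiv.subtypeProdEquivSigmaSubtype (fun b c => P b ∧ Q b c))]
  rw [Nat.card_eq_fintype_card, Fintype.card_sigma]
  have hb : ∀ b : β, Fintype.card {c : γ // P b ∧ Q b c} = if P b then k else 0 := by
    intro b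
    by_cases hPb : P b
    · rw [if_pos hPb, ← h b hPb, Nat.card_eq_fintype_card]
      exact Fintype.card_congr (Equiv.subtypeEquivRight (fun c => by simp [hPb]))
    · rw [if_neg hPb, Fintype.card_eq_zero_iff]
      exact ⟨fun c => hPb c.2.1⟩
  rw [Finset.sum_congr rfl (fun b _ => hb b), Finset.sum_ite, Finset.sum_const,
    Finset.sum_const_zero, add_zero, smul_eq_mul, Nat.card_eq_fintype_card,
    Fintype.card_subtype]

lemma card_split {β : Type*} [Fintype β] (p q : β → Prop) [DecidablePred p] [DecidablePred q] :
    Nat.card {x // p x} = Nat.card {x // p x ∧ q x} + Nat.card {x // p x ∧ ¬ q x} := by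
  classical
  rw [Nat.card_eq_fintype_card, Nat.card_eq_fintype_card, Nat.card_eq_fintype_card,
    Fintype.card_subtype, Fintype.card_subtype, Fintype.card_subtype]
  have h1 := Finset.filter_union_filter_not_eq q (univ.filter p)
  have hdisj := Finset.disjoint_filter_filter_not (univ.filter p) (univ.filter p) q
  rw [← h1, Finset.card_union_of_disjoint hdisj, Finset.filter_filter, Finset.filter_filter]

lemma card_ne_one (a : α) : Fintype.card {x : α // x ≠ a} = Fintype.card α - 1 := by
  classical
  calc Fintype.card {x : α // x ≠ a}
      = Fintype.card {x : α // ¬ (x = a)} :=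
        Fintype.card_congr (Equiv.subtypeEquivRight (fun x => Iff.rfl))
    _ = Fintype.card α - Fintype.card {x : α // x = a} := Fintype.card_subtype_compl _
    _ = Fintype.card α - 1 := by rw [Fintype.card_subtype_eq]

lemma card_ne_two {a z : α} (hza : z ≠ a) :
    Fintype.card {x : α // x ≠ a ∧ x ≠ z} = Fintype.card α - 2 := by
  classical
  rw [Fintype.card_congr (Equiv.subtypeEquivRight (fun x : α =>
    show x ≠ a ∧ x ≠ z ↔ ¬ (x = a ∨ x = z) from (not_or).symm))]
  rw [Fintype.card_subtype_compl]
  have h2 : Fintype.card {x : α // x = a ∨ x = z} = 2 := by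
    rw [Fintype.card_subtype]
    have : univ.filter (fun x : α => x = a ∨ x = z) = {a, z} := by
      ext x; simp [Finset.mem_insert]
    rw [this, Finset.card_insert_of_notMem (by simp [Ne.symm hza]), Finset.card_singleton]
  rw [h2]

lemma A_rec (n : ℕ) : A (n + 2) = A (n + 1) + (n + 1) * (n * A n) := by
  classical
  set a : Fin (n+2) := 0 with ha_def
  have hcard : Fintype.card (Fin (n+2)) = n + 2 := Fintype.card_fin _
  have hsplit := card_split (fun σ : Perm (Fin (n+2)) => AllOdd σ) (fun σ => σ a = a)
  have hfix : Nat.card {σ : Perm (Fin (n+2)) // AllOdd σ ∧ σ a = a} = A (n + 1) := by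
    rw [Nat.card_congr (Equiv.subtypeEquivRight (fun σ =>
      show AllOdd σ ∧ σ a = a ↔ AllOdd σ ∧ ∀ x, ¬ (x ≠ a) → σ x = x by
        constructor
        · rintro ⟨h1, h2⟩
          exact ⟨h1, fun x hx => by rw [not_not.1 hx, h2]⟩
        · rintro ⟨h1, h2⟩
          exact ⟨h1, h2 a (by simp)⟩))]
    rw [card_allOdd_fix]
    congr 1
    rw [card_ne_one, hcard]
    omega
  have hmove : Nat.card {σ : Perm (Fin (n+2)) // AllOdd σ ∧ ¬ σ a = a} = (n + 1) * (n * A n) := by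
    rw [show (fun σ : Perm (Fin (n+2)) => AllOdd σ ∧ ¬ σ a = a) =
      (fun σ : Perm (Fin (n+2)) => AllOdd σ ∧ σ a ≠ a) from rfl]
    rw [card_stage1 a, card_stage2 a]
    have inner2 : ∀ z : Fin (n+2), z ≠ a →
        Nat.card {y : Fin (n+2) × Perm (Fin (n+2)) // (y.1 ≠ a ∧ y.1 ≠ z) ∧
          (AllOdd y.2 ∧ y.2 a = a ∧ y.2 z = z)} = n * A n := by
      intro z hz
      have inner1 : ∀ p : Fin (n+2), (p ≠ a ∧ p ≠ z) →
          Nat.card {ρ : Perm (Fin (n+2)) // AllOdd ρ ∧ ρ a = a ∧ ρ z = z} = A n := by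
        intro p hp
        rw [Nat.card_congr (Equiv.subtypeEquivRight (fun ρ =>
          show AllOdd ρ ∧ ρ a = a ∧ ρ z = z ↔ AllOdd ρ ∧ ∀ x, ¬ (x ≠ a ∧ x ≠ z) → ρ x = x by
            constructor
            · rintro ⟨h1, h2, h3⟩
              refine ⟨h1, fun x hx => ?_⟩
              rcases not_and_or.1 hx with hx | hx
              · rw [not_not.1 hx, h2]
              · rw [not_not.1 hx, h3]
            · rintro ⟨h1, h2⟩
              exact ⟨h1, h2 a (by simp), h2 z (by simp)⟩))]
        rw [card_allOdd_fix]
        congr 1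
        rw [card_ne_two hz, hcard]
        omega
      have := card_dep_prod (fun p : Fin (n+2) => p ≠ a ∧ p ≠ z)
        (fun _ ρ => AllOdd ρ ∧ ρ a = a ∧ ρ z = z) (A n) inner1
      rw [this, Nat.card_eq_fintype_card, card_ne_two hz, hcard]
      congr 1
    have := card_dep_prod (fun z : Fin (n+2) => z ≠ a)
      (fun (z : Fin (n+2)) (y : Fin (n+2) × Perm (Fin (n+2))) =>
        (y.1 ≠ a ∧ y.1 ≠ z) ∧ (AllOdd y.2 ∧ y.2 a = a ∧ y.2 z = z))
      (n * A n) inner2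
    rw [this, Nat.card_eq_fintype_card, card_ne_one, hcard]
    congr 1
  rw [show A (n+2) = Nat.card {σ : Perm (Fin (n+2)) // AllOdd σ} from rfl, hsplit, hfix, hmove]

lemma allOdd_of_subsingleton {β : Type*} [Fintype β] [DecidableEq β] [Subsingleton (Perm β)]
    (σ : Perm β) : AllOdd σ := by
  have : σ = 1 := Subsingleton.elim σ 1
  intro l hl
  rw [this, cycleType_one] at hl
  simp at hl

lemma A_zero : A 0 = 1 := by
  unfold A
  rw [Nat.card_congr (Equiv.subtypeUnivEquiv allOdd_of_subsingleton)]
  simp [Nat.card_eq_fintype_card]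

lemma A_one : A 1 = 1 := by
  unfold A
  rw [Nat.card_congr (Equiv.subtypeUnivEquiv allOdd_of_subsingleton)]
  simp [Nat.card_eq_fintype_card]

lemma A_closed : ∀ k, A (2*k) = (Nat.doubleFactorial (2*k-1))^2 ∧
    A (2*k+1) = Nat.doubleFactorial (2*k+1) * Nat.doubleFactorial (2*k-1) := by
  intro k
  induction k with
  | zero => exact ⟨by simp [A_zero, Nat.doubleFactorial], by simp [A_one, Nat.doubleFactorial]⟩
  | succ k ih =>
    obtain ⟨ih1, ih2⟩ := ih
    have hd : Nat.doubleFactorial (2*k+1) = (2*k+1) * Nat.doubleFactorial (2*k-1) := by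
      cases k with
      | zero => simp [Nat.doubleFactorial]
      | succ k =>
        have e1 : 2*(k+1)+1 = 2*k+1+2 := by ring
        have e2 : 2*(k+1)-1 = 2*k+1 := by omega
        rw [e1, e2, Nat.doubleFactorial_add_two]
    have hd3 : Nat.doubleFactorial (2*k+1+2) = (2*k+1+2) * Nat.doubleFactorial (2*k+1) :=
      Nat.doubleFactorial_add_two _
    have h1 : A (2*k+2) = (Nat.doubleFactorial (2*k+1))^2 := by
      rw [A_rec, ih1, ih2, hd]
      ring
    have h2 : A (2*k+3) = Nat.doubleFactorial (2*k+3) * Nat.doubleFactorial (2*k+1) := by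
      have e3 : (2*k+3) = (2*k+1)+2 := by ring
      rw [e3, A_rec, h1, ih2, hd3, hd]
      ring
    constructor
    · have e : 2*(k+1) = 2*k+2 := by ring
      have e' : 2*k+2-1 = 2*k+1 := by omega
      rw [e, e', h1]
    · have e : 2*(k+1)+1 = 2*k+3 := by ring
      rw [e]
      have e' : 2*(k+1)-1 = 2*k+1 := by omega
      rw [e', h2]

theorem card_oddCycles (n : ℕ) (hn : 2 ≤ n) :
    Nat.card {σ : Equiv.Perm (Fin n) // ∀ l ∈ σ.cycleType, Odd l} =
      if Even n then Nat.doubleFactorial (n - 1) ^ 2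
      else Nat.doubleFactorial n * Nat.doubleFactorial (n - 2) := by
  have hA : Nat.card {σ : Equiv.Perm (Fin n) // ∀ l ∈ σ.cycleType, Odd l} = A n := rfl
  rw [hA]
  rcases Nat.even_or_odd n with he | ho
  · rw [if_pos he]
    obtain ⟨k, hk⟩ := he
    have h2k : n = 2 * k := by omega
    subst h2k
    rw [(A_closed k).1]
  · rw [if_neg (by rwa [Nat.not_even_iff_odd])]
    obtain ⟨k, hk⟩ := ho
    subst hk
    rw [(A_closed k).2]
    have e : 2*k+1-2 = 2*k-1 := by omega
    rw [e]
end

section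
/- For any integer n ≥ 2, let E(n) be the set of permutations in S_n with all cycles of even length when n is even, and with all cycles of even length except for a single fixed point when n is odd. Then |E(n)| = ((n-1)!!)^2 if n is even, and |E(n)| = n!! · (n-2)!! if n is odd. -/
set_option linter.unusedSectionVars false

open Equiv Equiv.Perm Finset

namespace EvenCycles

variable {α : Type*} [DecidableEq α] [Fintype α]

/-- length of the cycle of `x` under `σ`, counting fixed points as 1. -/
def elen (σ : Perm α) (x : α) : ℕ := (Finset.univ.filter (σ.SameCycle x)).card

lemma sameCycle_fixed {σ : Perm α} {a x : α} (h : σ a = a) : σ.SameCycle a x ↔ x = a := by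
  constructor
  · rintro ⟨k, rfl⟩
    exact zpow_apply_eq_self_of_apply_eq_self h k
  · rintro rfl; exact SameCycle.refl _ _

lemma elen_fixed {σ : Perm α} {a : α} (h : σ a = a) : elen σ a = 1 := by
  rw [elen]
  have : Finset.univ.filter (σ.SameCycle a) = {a} := by
    ext x; simp [sameCycle_fixed h]
  rw [this, Finset.card_singleton]

lemma elen_sameCycle {σ : Perm α} {x y : α} (h : σ.SameCycle x y) : elen σ x = elen σ y := by
  unfold elen
  congr 1
  ext z
  simp only [Finset.mem_filter, Finset.mem_univ, true_and]
  exact ⟨fun hz => h.symm.trans hz, fun hz => h.trans hz⟩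

lemma elen_eq_card_support_cycleOf {σ : Perm α} {x : α} (hx : x ∈ σ.support) :
    elen σ x = (σ.cycleOf x).support.card := by
  rw [elen]
  congr 1
  ext y
  rw [Finset.mem_filter, Equiv.Perm.mem_support_cycleOf_iff]
  simp [hx]

lemma elen_mem_cycleType {σ : Perm α} {x : α} (hx : x ∈ σ.support) :
    elen σ x ∈ σ.cycleType := by
  rw [elen_eq_card_support_cycleOf hx, cycleType_def]
  apply Multiset.mem_map_of_mem
  exact cycleOf_mem_cycleFactorsFinset_iff.mpr hx

lemma exists_elen_of_mem_cycleType {σ : Perm α} {l : ℕ} (hl : l ∈ σ.cycleType) :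
    ∃ x ∈ σ.support, elen σ x = l := by
  rw [cycleType_def] at hl
  obtain ⟨c, hc, rfl⟩ := Multiset.mem_map.mp hl
  have hc' : c ∈ σ.cycleFactorsFinset := hc
  obtain ⟨x, hx⟩ := (mem_cycleFactorsFinset_iff.mp hc').1
  have hxc : x ∈ c.support := mem_support.mpr hx.1
  have hxs : x ∈ σ.support := mem_cycleFactorsFinset_support_le hc' hxc
  refine ⟨x, hxs, ?_⟩
  rw [elen_eq_card_support_cycleOf hxs, ← cycle_is_cycleOf hxc hc']
  rfl

lemma elen_ne_one_iff {σ : Perm α} {x : α} : x ∈ σ.support ↔ ¬ elen σ x = 1 := by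
  constructor
  · intro hx h1
    have := elen_mem_cycleType hx
    rw [h1] at this
    exact absurd (two_le_of_mem_cycleType this) (by norm_num)
  · intro h
    by_contra hx
    exact h (elen_fixed (by simpa [mem_support, not_not] using hx))

/-- Bridge lemma 1 -/
lemma bridge1 {σ : Perm α} :
    (σ.support = Finset.univ ∧ ∀ l ∈ σ.cycleType, Even l) ↔ ∀ x, Even (elen σ x) := by
  constructor
  · rintro ⟨hs, he⟩ x
    exact he _ (elen_mem_cycleType (hs ▸ Finset.mem_univ x))
  · intro h
    constructor
    · ext x
      simp only [Finset.mem_univ, iff_true]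
      rw [elen_ne_one_iff]
      intro h1
      have := h x; rw [h1] at this; exact (Nat.not_even_one) this
    · intro l hl
      obtain ⟨x, _, rfl⟩ := exists_elen_of_mem_cycleType hl
      exact h x

/-- Bridge lemma 2 -/
lemma bridge2 {σ : Perm α} (hcard : 1 ≤ Fintype.card α) :
    (σ.support.card = Fintype.card α - 1 ∧ ∀ l ∈ σ.cycleType, Even l) ↔
      ∃ a, σ a = a ∧ ∀ x ≠ a, Even (elen σ x) := by
  constructor
  · rintro ⟨hs, he⟩
    have hcompl : (σ.supportᶜ).card = 1 := by
      rw [Finset.card_compl, hs]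
      omega
    obtain ⟨a, ha⟩ := Finset.card_eq_one.mp hcompl
    have haa : a ∉ σ.support := by
      have : a ∈ σ.supportᶜ := ha ▸ Finset.mem_singleton_self a
      simpa using this
    refine ⟨a, by simpa [mem_support, not_not] using haa, fun x hx => ?_⟩
    have hxs : x ∈ σ.support := by
      by_contra hc
      have : x ∈ σ.supportᶜ := by simpa using hc
      rw [ha] at this
      exact hx (Finset.mem_singleton.mp this)
    exact he _ (elen_mem_cycleType hxs)
  · rintro ⟨a, ha, he⟩
    have hsupport : σ.support = Finset.univ.erase a := by
      ext x
      simp only [Finset.mem_erase, Finset.mem_univ, and_true]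
      constructor
      · intro hx
        rintro rfl
        rw [mem_support] at hx; exact hx ha
      · intro hx
        rw [elen_ne_one_iff]
        intro h1
        have := he x hx
        rw [h1] at this; exact Nat.not_even_one this
    constructor
    · rw [hsupport, Finset.card_erase_of_mem (Finset.mem_univ a), Finset.card_univ]
    · intro l hl
      obtain ⟨x, hx, rfl⟩ := exists_elen_of_mem_cycleType hl
      apply he
      rw [hsupport] at hx
      exact (Finset.mem_erase.mp hx).1



section Ins
variable {g : Perm α} {a b : α} (ha : g a = a) (hab : a ≠ b)

local notation "τ" => Equiv.swap a b * g

include ha hab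

lemma tau_apply_a : (Equiv.swap a b * g) a = b := by
  simp [ha]

lemma agree_off {x : α} (hx : ¬ (Equiv.swap a b * g).SameCycle a x) :
    (Equiv.swap a b * g) x = g x := by
  have hxa : x ≠ a := fun h => hx (h ▸ SameCycle.refl _ _)
  have hgxa : g x ≠ a := fun h => hxa (by rw [← ha] at h; exact g.injective h)
  have hgxb : g x ≠ b := by
    intro h
    have : (Equiv.swap a b * g) x = a := by simp [h]
    exact hx (Equiv.Perm.SameCycle.symm ⟨1, by simpa using this⟩)
  simp [Equiv.swap_apply_of_ne_of_ne hgxa hgxb]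

lemma not_sameCycle_apply {x : α} (hx : ¬ (Equiv.swap a b * g).SameCycle a x) :
    ¬ (Equiv.swap a b * g).SameCycle a ((Equiv.swap a b * g) x) := by
  rwa [Equiv.Perm.sameCycle_apply_right]

lemma zpow_agree_off {x : α} (hx : ¬ (Equiv.swap a b * g).SameCycle a x) :
    ∀ k : ℤ, ((Equiv.swap a b * g) ^ k) x = (g ^ k) x := by
  have hfwd : ∀ m : ℕ, ∀ y, ¬ (Equiv.swap a b * g).SameCycle a y →
      ((Equiv.swap a b * g) ^ m) y = (g ^ m) y ∧
        ¬ (Equiv.swap a b * g).SameCycle a ((g ^ m) y) := by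
    intro m
    induction m with
    | zero => intro y hy; simpa using hy
    | succ m ih =>
      intro y hy
      obtain ⟨h1, h2⟩ := ih y hy
      constructor
      · have e1 : ((Equiv.swap a b * g) ^ (m + 1)) y
            = (Equiv.swap a b * g) (((Equiv.swap a b * g) ^ m) y) := by
          rw [pow_succ', Equiv.Perm.mul_apply]
        rw [e1, h1, agree_off ha hab h2, ← Equiv.Perm.mul_apply, ← pow_succ']
      · have := not_sameCycle_apply ha hab h2
        rw [agree_off ha hab h2] at this
        rw [pow_succ', Equiv.Perm.mul_apply]
        exact this
  have hinv : ∀ y, ¬ (Equiv.swap a b * g).SameCycle a y →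
      ((Equiv.swap a b * g)⁻¹) y = g⁻¹ y ∧
        ¬ (Equiv.swap a b * g).SameCycle a (g⁻¹ y) := by
    intro y hy
    have hy' : ¬ (Equiv.swap a b * g).SameCycle a ((Equiv.swap a b * g)⁻¹ y) := by
      rwa [Equiv.Perm.coe_inv, Equiv.Perm.sameCycle_symm_apply_right]
    have := agree_off ha hab hy'
    have heq : (Equiv.swap a b * g)⁻¹ y = g⁻¹ y := by
      apply g.injective
      rw [← this]
      simp
    exact ⟨heq, heq ▸ hy'⟩
  have hbwd : ∀ m : ℕ, ∀ y, ¬ (Equiv.swap a b * g).SameCycle a y →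
      (((Equiv.swap a b * g)⁻¹) ^ m) y = (g⁻¹ ^ m) y ∧
        ¬ (Equiv.swap a b * g).SameCycle a ((g⁻¹ ^ m) y) := by
    intro m
    induction m with
    | zero => intro y hy; simpa using hy
    | succ m ih =>
      intro y hy
      obtain ⟨h1, h2⟩ := ih y hy
      obtain ⟨h3, h4⟩ := hinv _ h2
      constructor
      · have e1 : ((Equiv.swap a b * g)⁻¹ ^ (m + 1)) y
            = (Equiv.swap a b * g)⁻¹ (((Equiv.swap a b * g)⁻¹ ^ m) y) := by
          rw [pow_succ', Equiv.Perm.mul_apply]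
        rw [e1, h1, h3, ← Equiv.Perm.mul_apply, ← pow_succ']
      · rw [pow_succ', Equiv.Perm.mul_apply]
        exact h4
  intro k
  match k with
  | Int.ofNat m => simpa using (hfwd m x hx).1
  | Int.negSucc m =>
    rw [zpow_negSucc, zpow_negSucc, ← inv_pow, ← inv_pow]
    exact (hbwd (m + 1) x hx).1

lemma sameCycle_iff_off {x y : α} (hx : ¬ (Equiv.swap a b * g).SameCycle a x) :
    (Equiv.swap a b * g).SameCycle x y ↔ g.SameCycle x y := by
  constructor
  · rintro ⟨k, rfl⟩
    exact ⟨k, (zpow_agree_off ha hab hx k).symm⟩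
  · rintro ⟨k, rfl⟩
    exact ⟨k, zpow_agree_off ha hab hx k⟩

lemma classT {x : α} (hxa : x ≠ a) (hxb : ¬ g.SameCycle b x) :
    ¬ (Equiv.swap a b * g).SameCycle a x := by
  have hxT : x ≠ a ∧ ¬ g.SameCycle b x := ⟨hxa, hxb⟩
  have hbT : ¬ (b ≠ a ∧ ¬ g.SameCycle b b) := fun h => h.2 (SameCycle.refl _ _)
  have hfwd : ∀ y, (y ≠ a ∧ ¬ g.SameCycle b y) → ((Equiv.swap a b * g) y ≠ a ∧ ¬ g.SameCycle b ((Equiv.swap a b * g) y)) := by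
    rintro y ⟨hy1, hy2⟩
    have hgyb : g y ≠ b := fun h => hy2 ⟨-1, by simp [← h]⟩
    have hgya : g y ≠ a := fun h => hy1 (g.injective (by rw [h, ha]))
    have : (Equiv.swap a b * g) y = g y := by
      simp [Equiv.swap_apply_of_ne_of_ne hgya hgyb]
    rw [this]
    exact ⟨hgya, fun h => hy2 (h.of_apply_right)⟩
  have hbwd : ∀ y, (y ≠ a ∧ ¬ g.SameCycle b y) → ((Equiv.swap a b * g)⁻¹ y ≠ a ∧ ¬ g.SameCycle b ((Equiv.swap a b * g)⁻¹ y)) := by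
    rintro y ⟨hy1, hy2⟩
    have hzy : (Equiv.swap a b * g) ((Equiv.swap a b * g)⁻¹ y) = y := by simp
    generalize hz : (Equiv.swap a b * g)⁻¹ y = z at hzy ⊢
    have hza : z ≠ a := by
      rintro rfl
      rw [tau_apply_a ha hab] at hzy
      subst hzy
      exact hbT ⟨hy1, hy2⟩
    refine ⟨hza, fun hsc => ?_⟩
    have hgza : g z ≠ a := fun h => hza (g.injective (by rw [h, ha]))
    by_cases hgzb : g z = b
    · have : (Equiv.swap a b * g) z = a := by simp [hgzb]
      exact hy1 (by rw [← hzy, this])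
    · have : (Equiv.swap a b * g) z = g z := by
        simp [Equiv.swap_apply_of_ne_of_ne hgza hgzb]
      rw [this] at hzy
      exact hy2 (hzy ▸ hsc.apply_right)
  have hiter : ∀ k : ℤ, ∀ y, (y ≠ a ∧ ¬ g.SameCycle b y) → (((Equiv.swap a b * g) ^ k) y ≠ a ∧ ¬ g.SameCycle b (((Equiv.swap a b * g) ^ k) y)) := by
    have hf : ∀ m : ℕ, ∀ y, (y ≠ a ∧ ¬ g.SameCycle b y) → (((Equiv.swap a b * g) ^ m) y ≠ a ∧ ¬ g.SameCycle b (((Equiv.swap a b * g) ^ m) y)) := by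
      intro m
      induction m with
      | zero => simpa using fun y hy => hy
      | succ m ih => intro y hy; rw [pow_succ', Equiv.Perm.mul_apply]; exact hfwd _ (ih y hy)
    have hb : ∀ m : ℕ, ∀ y, (y ≠ a ∧ ¬ g.SameCycle b y) → ((((Equiv.swap a b * g)⁻¹) ^ m) y ≠ a ∧ ¬ g.SameCycle b ((((Equiv.swap a b * g)⁻¹) ^ m) y)) := by
      intro m
      induction m with
      | zero => simpa using fun y hy => hy
      | succ m ih => intro y hy; rw [pow_succ', Equiv.Perm.mul_apply]; exact hbwd _ (ih y hy)
    intro k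
    match k with
    | Int.ofNat m => simpa using hf m
    | Int.negSucc m =>
      intro y hy
      rw [zpow_negSucc, ← inv_pow]
      exact hb (m + 1) y hy
  rintro ⟨k, hk⟩
  have := hiter (-k) _ hxT
  rw [show x = ((Equiv.swap a b * g) ^ k) a from hk.symm] at this
  simp only [← Equiv.Perm.mul_apply, ← zpow_add, neg_add_cancel, zpow_zero,
    Equiv.Perm.one_apply] at this
  exact this.1 rfl

lemma class_a {x : α} :
    (Equiv.swap a b * g).SameCycle a x ↔ x = a ∨ g.SameCycle b x := by
  constructor
  · intro h
    by_contra hc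
    push_neg at hc
    exact classT ha hab hc.1 hc.2 h
  · rintro (rfl | h)
    · exact SameCycle.refl _ _
    · by_contra hc
      have hcx : ¬ (Equiv.swap a b * g).SameCycle a x := hc
      have h1 : (Equiv.swap a b * g).SameCycle x b ↔ g.SameCycle x b :=
        sameCycle_iff_off ha hab hcx
      have h2 : (Equiv.swap a b * g).SameCycle a b := ⟨1, by simpa using tau_apply_a ha hab⟩
      exact hcx (h2.trans (h1.mpr h.symm).symm)

lemma elen_ins_off {x : α} (hx : ¬ (Equiv.swap a b * g).SameCycle a x) :
    elen (Equiv.swap a b * g) x = elen g x := by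
  unfold elen
  congr 1
  ext y
  simp only [Finset.mem_filter, Finset.mem_univ, true_and]
  exact sameCycle_iff_off ha hab hx

lemma not_sameCycle_b_a : ¬ g.SameCycle b a := by
  rintro ⟨k, hk⟩
  apply hab
  have h2 := zpow_apply_eq_self_of_apply_eq_self ha (-k)
  have : b = ((g ^ (-k)) ((g ^ k) b)) := by
    simp [← Equiv.Perm.mul_apply, ← zpow_add]
  rw [hk, h2] at this
  exact this.symm

lemma elen_ins_on : elen (Equiv.swap a b * g) a = elen g b + 1 := by
  unfold elen
  have h : Finset.univ.filter ((Equiv.swap a b * g).SameCycle a)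
      = insert a (Finset.univ.filter (g.SameCycle b)) := by
    ext y
    simp only [Finset.mem_insert, Finset.mem_filter, Finset.mem_univ, true_and]
    exact class_a ha hab
  rw [h, Finset.card_insert_of_notMem]
  simp only [Finset.mem_filter, Finset.mem_univ, true_and]
  exact not_sameCycle_b_a ha hab

end Ins

section Comm

lemma zpow_apply_comm {β γ : Type*} (π : Perm β) (ρ : Perm γ) (f : γ → β)
    (hinj : Function.Injective f) (h : ∀ x, π (f x) = f (ρ x)) :
    ∀ (k : ℤ) (x : γ), (π ^ k) (f x) = f ((ρ ^ k) x) := by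
  have hnat : ∀ (m : ℕ) (x : γ), (π ^ m) (f x) = f ((ρ ^ m) x) := by
    intro m
    induction m with
    | zero => simp
    | succ m ih =>
      intro x
      have e1 : (π ^ (m + 1)) (f x) = π ((π ^ m) (f x)) := by
        rw [pow_succ', Equiv.Perm.mul_apply]
      rw [e1, ih, h, ← Equiv.Perm.mul_apply, ← pow_succ']
  have hinv : ∀ x, π⁻¹ (f x) = f (ρ⁻¹ x) := by
    intro x
    apply π.injective
    rw [Equiv.Perm.coe_inv, Equiv.apply_symm_apply, h, Equiv.Perm.coe_inv, Equiv.apply_symm_apply]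
  have hnat' : ∀ (m : ℕ) (x : γ), (π⁻¹ ^ m) (f x) = f ((ρ⁻¹ ^ m) x) := by
    intro m
    induction m with
    | zero => simp
    | succ m ih =>
      intro x
      have e1 : (π⁻¹ ^ (m + 1)) (f x) = π⁻¹ ((π⁻¹ ^ m) (f x)) := by
        rw [pow_succ', Equiv.Perm.mul_apply]
      rw [e1, ih, hinv, ← Equiv.Perm.mul_apply, ← pow_succ']
  intro k
  match k with
  | Int.ofNat m => simpa using hnat m
  | Int.negSucc m =>
    intro x
    rw [zpow_negSucc, zpow_negSucc, ← inv_pow, ← inv_pow]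
    exact hnat' (m + 1) x

lemma sameCycle_comm_iff {β γ : Type*} (π : Perm β) (ρ : Perm γ) (f : γ → β)
    (hinj : Function.Injective f) (h : ∀ x, π (f x) = f (ρ x)) {x y : γ} :
    π.SameCycle (f x) (f y) ↔ ρ.SameCycle x y := by
  constructor
  · rintro ⟨k, hk⟩
    rw [zpow_apply_comm π ρ f hinj h] at hk
    exact ⟨k, hinj hk⟩
  · rintro ⟨k, rfl⟩
    exact ⟨k, zpow_apply_comm π ρ f hinj h k x⟩

end Comm

section Decomp

variable {n : ℕ} (e : Perm (Fin n))

lemma ext_zero : (Equiv.Perm.decomposeFin.symm (0, e)) 0 = 0 :=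
  Equiv.Perm.decomposeFin_symm_apply_zero 0 e

lemma ext_succ (x : Fin n) :
    (Equiv.Perm.decomposeFin.symm (0, e)) x.succ = (e x).succ := by
  rw [Equiv.Perm.decomposeFin_symm_apply_succ]
  simp

lemma decomp_eq (p : Fin (n + 1)) :
    Equiv.Perm.decomposeFin.symm (p, e)
      = Equiv.swap 0 p * Equiv.Perm.decomposeFin.symm (0, e) := by
  ext x
  refine Fin.cases ?_ ?_ x
  · rw [Equiv.Perm.decomposeFin_symm_apply_zero, Equiv.Perm.mul_apply, ext_zero]
    simp
  · intro i
    rw [Equiv.Perm.decomposeFin_symm_apply_succ, Equiv.Perm.mul_apply, ext_succ]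

lemma ext_sameCycle_succ {x y : Fin n} :
    (Equiv.Perm.decomposeFin.symm (0, e)).SameCycle x.succ y.succ ↔ e.SameCycle x y :=
  sameCycle_comm_iff _ e Fin.succ (Fin.succ_injective n) (ext_succ e)

lemma ext_sameCycle_zero {y : Fin (n + 1)} :
    (Equiv.Perm.decomposeFin.symm (0, e)).SameCycle 0 y ↔ y = 0 :=
  sameCycle_fixed (ext_zero e)

lemma ext_elen_zero : elen (Equiv.Perm.decomposeFin.symm (0, e)) 0 = 1 :=
  elen_fixed (ext_zero e)

lemma ext_elen_succ (x : Fin n) :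
    elen (Equiv.Perm.decomposeFin.symm (0, e)) x.succ = elen e x := by
  unfold elen
  have h : Finset.univ.filter ((Equiv.Perm.decomposeFin.symm (0, e)).SameCycle x.succ)
      = (Finset.univ.filter (e.SameCycle x)).map ⟨Fin.succ, Fin.succ_injective n⟩ := by
    ext y
    refine Fin.cases ?_ ?_ y
    · simp only [Finset.mem_filter, Finset.mem_univ, true_and, Finset.mem_map]
      constructor
      · intro hsc
        exact absurd ((ext_sameCycle_zero e).mp hsc.symm) (Fin.succ_ne_zero x)
      · rintro ⟨z, _, hz⟩
        exact absurd hz (by simp [Fin.succ_ne_zero])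
    · intro i
      simp only [Finset.mem_filter, Finset.mem_univ, true_and, Finset.mem_map,
        Function.Embedding.coeFn_mk]
      rw [ext_sameCycle_succ]
      constructor
      · intro hsc
        exact ⟨i, hsc, rfl⟩
      · rintro ⟨z, hz, hzi⟩
        have : z = i := Fin.succ_injective n hzi
        subst this
        exact hz
  rw [h, Finset.card_map]

end Decomp



section Preds

variable {α : Type*} [DecidableEq α] [Fintype α]

/-- all cycles even (in particular no fixed points) -/
def P1 (σ : Perm α) : Prop := ∀ x, Even (elen σ x)

/-- cycle of `c` odd, all other cycles even -/
def P2 (σ : Perm α) (c : α) : Prop :=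
  Odd (elen σ c) ∧ ∀ x, ¬ σ.SameCycle c x → Even (elen σ x)

/-- `a` is fixed and all other cycles even -/
def P3 (σ : Perm α) (a : α) : Prop := σ a = a ∧ ∀ x ≠ a, Even (elen σ x)

lemma elen_conj (π σ : Perm α) (x : α) : elen (π * σ * π⁻¹) (π x) = elen σ x := by
  unfold elen
  have h : Finset.univ.filter ((π * σ * π⁻¹).SameCycle (π x))
      = (Finset.univ.filter (σ.SameCycle x)).map π.toEmbedding := by
    ext y
    simp only [Finset.mem_filter, Finset.mem_univ, true_and, Finset.mem_map,
      Equiv.coe_toEmbedding]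
    rw [Equiv.Perm.sameCycle_conj]
    simp only [Equiv.Perm.coe_inv, Equiv.symm_apply_apply]
    constructor
    · intro h
      exact ⟨π⁻¹ y, h, by simp⟩
    · rintro ⟨z, hz, rfl⟩
      simpa using hz
  rw [h, Finset.card_map]

lemma sameCycle_conj' (π σ : Perm α) (x y : α) :
    (π * σ * π⁻¹).SameCycle (π x) (π y) ↔ σ.SameCycle x y := by
  rw [Equiv.Perm.sameCycle_conj]
  simp

lemma P2_conj (π σ : Perm α) (c : α) : P2 (π * σ * π⁻¹) (π c) ↔ P2 σ c := by
  unfold P2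
  rw [elen_conj]
  refine and_congr Iff.rfl ?_
  constructor
  · intro h y hy
    have := h (π y) (by rwa [sameCycle_conj' π σ c y])
    rwa [elen_conj] at this
  · intro h x hx
    have hx' : ¬ σ.SameCycle c (π⁻¹ x) := by
      intro hc
      apply hx
      have := (sameCycle_conj' π σ c (π⁻¹ x)).mpr hc
      simpa using this
    have := h (π⁻¹ x) hx'
    have h2 := elen_conj π σ (π⁻¹ x)
    simp only [Equiv.Perm.coe_inv, Equiv.apply_symm_apply] at h2
    rw [h2]; exact this

lemma P3_conj (π σ : Perm α) (a : α) : P3 (π * σ * π⁻¹) (π a) ↔ P3 σ a := by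
  unfold P3
  constructor
  · rintro ⟨h1, h2⟩
    refine ⟨?_, ?_⟩
    · have : (π * σ * π⁻¹) (π a) = π (σ a) := by simp
      rw [this] at h1
      exact π.injective h1
    · intro x hx
      have := h2 (π x) (fun h => hx (π.injective h))
      rwa [elen_conj] at this
  · rintro ⟨h1, h2⟩
    refine ⟨by simp [h1], ?_⟩
    · intro x hx
      have hx' : π⁻¹ x ≠ a := fun h => hx (by rw [← h]; simp)
      have := h2 (π⁻¹ x) hx'
      have h2' := elen_conj π σ (π⁻¹ x)
      simp only [Equiv.Perm.coe_inv, Equiv.apply_symm_apply] at h2'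
      rw [h2']; exact this

/-- conjugation equivalence on subtypes -/
def conjEquiv (π : Perm α) (P Q : Perm α → Prop) (h : ∀ σ, P σ ↔ Q (π * σ * π⁻¹)) :
    {σ : Perm α // P σ} ≃ {σ : Perm α // Q σ} where
  toFun σ := ⟨π * σ.1 * π⁻¹, (h σ.1).mp σ.2⟩
  invFun σ := ⟨π⁻¹ * σ.1 * π, by
    have := (h (π⁻¹ * σ.1 * π)).mpr
    apply this
    have : π * (π⁻¹ * σ.1 * π) * π⁻¹ = σ.1 := by group
    rw [this]
    exact σ.2⟩
  left_inv σ := by ext1; simp only; group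
  right_inv σ := by ext1; simp only; group

end Preds

section Translate

variable {n : ℕ} (e : Perm (Fin n))

lemma zero_ne_succ (p : Fin n) : (0 : Fin (n + 1)) ≠ p.succ := (Fin.succ_ne_zero p).symm

lemma TL_even_zero : ¬ P1 (Equiv.Perm.decomposeFin.symm (0, e)) := by
  intro h
  have := h 0
  rw [ext_elen_zero] at this
  exact Nat.not_even_one this

lemma TL_even_succ (p : Fin n) :
    P1 (Equiv.Perm.decomposeFin.symm (p.succ, e)) ↔ P2 e p := by
  have ha := ext_zero e
  have hab := zero_ne_succ p
  rw [decomp_eq e p.succ]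
  set g := Equiv.Perm.decomposeFin.symm ((0 : Fin (n + 1)), e) with hg
  constructor
  · intro h
    constructor
    · have h0 := h 0
      rw [elen_ins_on ha hab, ext_elen_succ] at h0
      rwa [Nat.even_add_one, Nat.not_even_iff_odd] at h0
    · intro x hx
      have hnsc : ¬ (Equiv.swap 0 p.succ * g).SameCycle 0 x.succ := by
        rw [class_a ha hab]
        push_neg
        exact ⟨Fin.succ_ne_zero x, fun hc => hx ((ext_sameCycle_succ e).mp hc)⟩
      have := h x.succ
      rwa [elen_ins_off ha hab hnsc, ext_elen_succ] at this
  · rintro ⟨hodd, hrest⟩ x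
    by_cases hsc : (Equiv.swap 0 p.succ * g).SameCycle 0 x
    · rw [← elen_sameCycle hsc, elen_ins_on ha hab, ext_elen_succ]
      rw [Nat.even_add_one, Nat.not_even_iff_odd]
      exact hodd
    · rcases Fin.eq_zero_or_eq_succ x with rfl | ⟨z, rfl⟩
      · exact absurd (Equiv.Perm.SameCycle.refl _ _) hsc
      · rw [elen_ins_off ha hab hsc, ext_elen_succ]
        apply hrest
        intro hc
        apply hsc
        rw [class_a ha hab]
        exact Or.inr ((ext_sameCycle_succ e).mpr hc)

lemma TL_fix_zero :
    (∀ x ≠ (0 : Fin (n + 1)), Even (elen (Equiv.Perm.decomposeFin.symm (0, e)) x)) ↔ P1 e := by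
  constructor
  · intro h z
    have := h z.succ (Fin.succ_ne_zero z)
    rwa [ext_elen_succ] at this
  · intro h x hx
    rcases Fin.eq_zero_or_eq_succ x with rfl | ⟨z, rfl⟩
    · exact absurd rfl hx
    · rw [ext_elen_succ]
      exact h z

lemma TL_odd_zero : P2 (Equiv.Perm.decomposeFin.symm (0, e)) 0 ↔ P1 e := by
  unfold P2
  constructor
  · rintro ⟨_, h⟩
    rw [← TL_fix_zero]
    intro x hx
    apply h
    rw [ext_sameCycle_zero]
    exact hx
  · intro h
    refine ⟨by rw [ext_elen_zero]; exact odd_one, ?_⟩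
    intro x hx
    rw [ext_sameCycle_zero] at hx
    exact (TL_fix_zero e).mpr h x hx

lemma TL_odd_succ (p : Fin n) :
    P2 (Equiv.Perm.decomposeFin.symm (p.succ, e)) 0 ↔ P1 e := by
  have ha := ext_zero e
  have hab := zero_ne_succ p
  rw [decomp_eq e p.succ]
  set g := Equiv.Perm.decomposeFin.symm ((0 : Fin (n + 1)), e) with hg
  unfold P2
  constructor
  · rintro ⟨hodd, hrest⟩ z
    by_cases hsc : e.SameCycle p z
    · rw [← elen_sameCycle hsc]
      rw [elen_ins_on ha hab, ext_elen_succ] at hodd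
      rwa [Nat.odd_add_one, Nat.not_odd_iff_even] at hodd
    · have hnsc : ¬ (Equiv.swap 0 p.succ * g).SameCycle 0 z.succ := by
        rw [class_a ha hab]
        push_neg
        exact ⟨Fin.succ_ne_zero z, fun hc => hsc ((ext_sameCycle_succ e).mp hc)⟩
      have := hrest z.succ hnsc
      rwa [elen_ins_off ha hab hnsc, ext_elen_succ] at this
  · intro h
    constructor
    · rw [elen_ins_on ha hab, ext_elen_succ, Nat.odd_add_one, Nat.not_odd_iff_even]
      exact h p
    · intro x hx
      rcases Fin.eq_zero_or_eq_succ x with rfl | ⟨z, rfl⟩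
      · exact absurd (Equiv.Perm.SameCycle.refl _ _) hx
      · rw [elen_ins_off ha hab hx, ext_elen_succ]
        exact h z

end Translate


section Counting

lemma count_split {n : ℕ} (Q : Perm (Fin (n + 1)) → Prop) :
    Nat.card {σ : Perm (Fin (n + 1)) // Q σ}
      = ∑ p : Fin (n + 1),
          Nat.card {e : Perm (Fin n) // Q (Equiv.Perm.decomposeFin.symm (p, e))} := by
  classical
  have e1 : {σ : Perm (Fin (n + 1)) // Q σ}
      ≃ {x : Fin (n + 1) × Perm (Fin n) // Q (Equiv.Perm.decomposeFin.symm (x.1, x.2))} :=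
    Equiv.Perm.decomposeFin.subtypeEquiv
      (fun σ => by rw [Prod.mk.eta, Equiv.symm_apply_apply])
  have e2 := Equiv.subtypeProdEquivSigmaSubtype
    (fun (p : Fin (n + 1)) (e : Perm (Fin n)) => Q (Equiv.Perm.decomposeFin.symm (p, e)))
  rw [Nat.card_congr (e1.trans e2), Nat.card_eq_fintype_card, Fintype.card_sigma]
  exact Finset.sum_congr rfl fun p _ => (Nat.card_eq_fintype_card).symm

noncomputable def AA (n : ℕ) : ℕ := Nat.card {σ : Perm (Fin n) // P1 σ}

noncomputable def BB (n : ℕ) : ℕ := Nat.card {σ : Perm (Fin (n + 1)) // P2 σ 0}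

lemma card_P2_indep (n : ℕ) (c : Fin (n + 1)) :
    Nat.card {σ : Perm (Fin (n + 1)) // P2 σ c} = BB n := by
  unfold BB
  have hπ : (Equiv.swap c 0) c = 0 := Equiv.swap_apply_left c 0
  refine Nat.card_congr (conjEquiv (Equiv.swap c 0) _ _ (fun σ => ?_))
  have h := P2_conj (Equiv.swap c 0) σ c
  rw [hπ] at h
  exact h.symm

lemma B_step (n : ℕ) : BB n = (n + 1) * AA n := by
  unfold BB
  rw [count_split]
  have h : ∀ p : Fin (n + 1),
      Nat.card {e : Perm (Fin n) // P2 (Equiv.Perm.decomposeFin.symm (p, e)) 0} = AA n := by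
    intro p
    rcases Fin.eq_zero_or_eq_succ p with rfl | ⟨q, rfl⟩
    · exact Nat.card_congr (Equiv.subtypeEquivRight fun e => TL_odd_zero e)
    · exact Nat.card_congr (Equiv.subtypeEquivRight fun e => TL_odd_succ e q)
  simp only [h, Finset.sum_const, Finset.card_univ, Fintype.card_fin, smul_eq_mul]

lemma A_step (n : ℕ) : AA (n + 2) = (n + 1) * BB n := by
  unfold AA
  rw [count_split, Fin.sum_univ_succ]
  have h0 : Nat.card
      {e : Perm (Fin (n + 1)) // P1 (Equiv.Perm.decomposeFin.symm (0, e))} = 0 := by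
    have : IsEmpty {e : Perm (Fin (n + 1)) // P1 (Equiv.Perm.decomposeFin.symm (0, e))} :=
      ⟨fun e => TL_even_zero e.1 e.2⟩
    exact Nat.card_of_isEmpty
  have h1 : ∀ q : Fin (n + 1),
      Nat.card {e : Perm (Fin (n + 1)) // P1 (Equiv.Perm.decomposeFin.symm (q.succ, e))}
        = BB n := by
    intro q
    rw [← card_P2_indep n q]
    exact Nat.card_congr (Equiv.subtypeEquivRight fun e => TL_even_succ e q)
  simp only [h0, h1, Finset.sum_const, Finset.card_univ, Fintype.card_fin, smul_eq_mul,
    zero_add]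

lemma AA_zero : AA 0 = 1 := by
  unfold AA
  have h : ∀ σ : Perm (Fin 0), P1 σ := fun σ x => x.elim0
  rw [Nat.card_congr (Equiv.subtypeUnivEquiv h), Nat.card_eq_fintype_card]
  simp

lemma AA_even (m : ℕ) : AA (2 * m) = (Nat.doubleFactorial (2 * m - 1)) ^ 2 := by
  induction m with
  | zero => simpa using AA_zero
  | succ m ih =>
    have h1 : 2 * (m + 1) = 2 * m + 2 := by ring
    rw [h1, A_step, B_step, ih]
    have h4 : 2 * m + 2 - 1 = 2 * m + 1 := by omega
    rw [h4]
    have hd : Nat.doubleFactorial (2 * m + 1)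
        = (2 * m + 1) * Nat.doubleFactorial (2 * m - 1) := by
      cases m with
      | zero => rfl
      | succ k =>
        have h2 : 2 * (k + 1) + 1 = (2 * k + 1) + 2 := by omega
        have h3 : 2 * (k + 1) - 1 = 2 * k + 1 := by omega
        rw [h2, h3, Nat.doubleFactorial_add_two]
    rw [hd]
    ring

lemma TL_P3_zero {n : ℕ} (e : Perm (Fin n)) :
    P3 (Equiv.Perm.decomposeFin.symm (0, e)) 0 ↔ P1 e := by
  unfold P3
  constructor
  · rintro ⟨_, h⟩
    exact (TL_fix_zero e).mp h
  · intro h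
    exact ⟨ext_zero e, (TL_fix_zero e).mpr h⟩

lemma card_P3 (n : ℕ) (a : Fin (n + 1)) :
    Nat.card {σ : Perm (Fin (n + 1)) // P3 σ a} = AA n := by
  have hπ : (Equiv.swap a 0) a = 0 := Equiv.swap_apply_left a 0
  have step1 : Nat.card {σ : Perm (Fin (n + 1)) // P3 σ a}
      = Nat.card {σ : Perm (Fin (n + 1)) // P3 σ 0} :=
    Nat.card_congr (conjEquiv (Equiv.swap a 0) _ _ (fun σ => by
      have h := P3_conj (Equiv.swap a 0) σ a
      rw [hπ] at h
      exact h.symm))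
  rw [step1, count_split (fun σ => P3 σ 0), Fin.sum_univ_succ]
  have h0 : Nat.card
      {e : Perm (Fin n) // P3 (Equiv.Perm.decomposeFin.symm (0, e)) 0} = AA n :=
    Nat.card_congr (Equiv.subtypeEquivRight fun e => TL_P3_zero e)
  have h1 : ∀ q : Fin n,
      Nat.card {e : Perm (Fin n) // P3 (Equiv.Perm.decomposeFin.symm (q.succ, e)) 0} = 0 := by
    intro q
    have : IsEmpty {e : Perm (Fin n) // P3 (Equiv.Perm.decomposeFin.symm (q.succ, e)) 0} := by
      refine ⟨fun e => ?_⟩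
      have h := e.2.1
      rw [Equiv.Perm.decomposeFin_symm_apply_zero] at h
      exact Fin.succ_ne_zero q h
    exact Nat.card_of_isEmpty
  simp only [h0, h1, Finset.sum_const, smul_eq_mul, mul_zero, add_zero]

lemma card_exists (n : ℕ) :
    Nat.card {σ : Perm (Fin (n + 1)) // ∃ a, P3 σ a} = (n + 1) * AA n := by
  classical
  rw [Nat.card_eq_fintype_card, Fintype.card_subtype]
  have hsplit : Finset.univ.filter (fun σ : Perm (Fin (n + 1)) => ∃ a, P3 σ a)
      = Finset.univ.biUnion
          (fun a : Fin (n + 1) => Finset.univ.filter (fun σ => P3 σ a)) := by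
    ext σ
    simp [Finset.mem_biUnion]
  rw [hsplit, Finset.card_biUnion]
  · have h : ∀ a : Fin (n + 1),
        (Finset.univ.filter (fun σ : Perm (Fin (n + 1)) => P3 σ a)).card = AA n := by
      intro a
      rw [← card_P3 n a, Nat.card_eq_fintype_card, Fintype.card_subtype]
    simp only [h, Finset.sum_const, Finset.card_univ, Fintype.card_fin, smul_eq_mul]
  · intro a _ b _ hab
    rw [Function.onFun, Finset.disjoint_left]
    intro σ hσa hσb
    simp only [Finset.mem_filter] at hσa hσb
    have hb1 : elen σ b = 1 := elen_fixed hσb.2.1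
    have heven := hσa.2.2 b (Ne.symm hab)
    rw [hb1] at heven
    exact Nat.not_even_one heven

end Counting

end EvenCycles

/-- `E(n)`: permutations with all cycles of even length when `n` is even, and with
all cycles of even length except for a single fixed point when `n` is odd. Its
cardinality is `((n-1)!!)^2` for even `n` and `n!! (n-2)!!` for odd `n`. -/
theorem card_evenCycles (n : ℕ) (hn : 2 ≤ n) :
    Nat.card {σ : Equiv.Perm (Fin n) //
      (if Even n then σ.support = Finset.univ else σ.support.card = n - 1) ∧
      ∀ l ∈ σ.cycleType, Even l} =
      if Even n then Nat.doubleFactorial (n - 1) ^ 2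
      else Nat.doubleFactorial n * Nat.doubleFactorial (n - 2) := by
  by_cases hev : Even n
  · rw [if_pos hev]
    have key : Nat.card {σ : Equiv.Perm (Fin n) //
        (if Even n then σ.support = Finset.univ else σ.support.card = n - 1) ∧
        ∀ l ∈ σ.cycleType, Even l} = EvenCycles.AA n := by
      apply Nat.card_congr
      apply Equiv.subtypeEquivRight
      intro σ
      rw [if_pos hev]
      exact EvenCycles.bridge1
    rw [key]
    obtain ⟨m, hm⟩ := hev
    have h2 : n = 2 * m := by omega
    subst h2
    exact EvenCycles.AA_even m
  · rw [if_neg hev]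
    have hodd : Odd n := Nat.not_even_iff_odd.mp hev
    obtain ⟨m, hm⟩ := hodd
    have hm1 : 1 ≤ m := by omega
    subst hm
    have key : Nat.card {σ : Equiv.Perm (Fin (2 * m + 1)) //
        (if Even (2 * m + 1) then σ.support = Finset.univ
          else σ.support.card = 2 * m + 1 - 1) ∧
        ∀ l ∈ σ.cycleType, Even l}
        = Nat.card {σ : Equiv.Perm (Fin (2 * m + 1)) // ∃ a, EvenCycles.P3 σ a} := by
      apply Nat.card_congr
      apply Equiv.subtypeEquivRight
      intro σ
      rw [if_neg hev]
      have hb := EvenCycles.bridge2 (σ := σ) (by simp)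
      rw [Fintype.card_fin] at hb
      exact hb
    rw [key, EvenCycles.card_exists (2 * m), EvenCycles.AA_even m]
    have h1 : 2 * m + 1 - 2 = 2 * m - 1 := by omega
    rw [h1]
    have hd : Nat.doubleFactorial (2 * m + 1)
        = (2 * m + 1) * Nat.doubleFactorial (2 * m - 1) := by
      have h2 : 2 * m + 1 = (2 * m - 1) + 2 := by omega
      rw [h2, Nat.doubleFactorial_add_two]
    rw [hd]
    ring
end
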